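/- arXiv:1203.5307 — 9 statements merged into one kernel-verified Lean document; each statement's English description precedes it below -/
import Mathlib

section
/- Let f : ℝ → ℝ be smooth and let u : ℝ → ℝ be a twice differentiable function satisfying u''(t) + f(u(t)) = 0 for all t ∈ ℝ. If u'(t₀) = 0 for some t₀ ∈ ℝ, then u is symmetric about t₀, i.e. u(t₀ + t) = u(t₀ − t) for all t ∈ ℝ. -/
open Set Filter Topology

/-- If `u` is a twice differentiable solution of `u'' + f(u) = 0` on ℝ
(with `f` smooth) and `u'(t₀) = 0`, then `u` is symmetric about `t₀`. -/
theorem obata_ode_symmetric_about_critical_point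
    (f u : ℝ → ℝ) (hf : ContDiff ℝ (⊤ : ℕ∞) f)
    (hu : Differentiable ℝ u) (hu' : Differentiable ℝ (deriv u))
    (hode : ∀ t : ℝ, deriv (deriv u) t + f (u t) = 0)
    (t₀ : ℝ) (hcrit : deriv u t₀ = 0) :
    ∀ t : ℝ, u (t₀ + t) = u (t₀ - t) := by
  -- vector field
  set v : ℝ × ℝ → ℝ × ℝ := fun p => (p.2, -f p.1) with hv
  have hvC : ContDiff ℝ 1 v :=
    contDiff_snd.prodMk ((hf.of_le (by simp)).comp contDiff_fst).neg
  -- trajectories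
  set F : ℝ → ℝ × ℝ := fun t => (u t, deriv u t) with hF
  set G : ℝ → ℝ × ℝ := fun t => (u (2 * t₀ - t), -(deriv u (2 * t₀ - t))) with hG
  have hu'' : ∀ t, deriv (deriv u) t = -f (u t) := by
    intro t; have := hode t; linarith
  have hFd : ∀ t : ℝ, HasDerivAt F (v (F t)) t := by
    intro t
    have h1 : HasDerivAt u (deriv u t) t := (hu t).hasDerivAt
    have h2 : HasDerivAt (deriv u) (-f (u t)) t := by
      have := (hu' t).hasDerivAt
      rwa [hu'' t] at this
    exact h1.prodMk h2
  have hlin : ∀ t : ℝ, HasDerivAt (fun s : ℝ => 2 * t₀ - s) (-1) t := by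
    intro t
    simpa using (hasDerivAt_id t).const_sub (2 * t₀)
  have hGd : ∀ t : ℝ, HasDerivAt G (v (G t)) t := by
    intro t
    have h1 : HasDerivAt (fun s => u (2 * t₀ - s)) (-(deriv u (2 * t₀ - t))) t := by
      have := ((hu (2 * t₀ - t)).hasDerivAt).comp t (hlin t)
      simpa [Function.comp_def] using this
    have h2 : HasDerivAt (fun s => -(deriv u (2 * t₀ - s))) (-f (u (2 * t₀ - t))) t := by
      have h3 := ((hu' (2 * t₀ - t)).hasDerivAt).comp t (hlin t)
      have h4 := h3.neg
      rw [hu'' (2 * t₀ - t)] at h4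
      exact h4.congr_deriv (by ring)
    exact h1.prodMk h2
  have hFcont : Continuous F := (hu.continuous).prodMk hu'.continuous
  have hGcont : Continuous G := by
    have : Continuous fun s : ℝ => 2 * t₀ - s := by continuity
    exact ((hu.continuous.comp this)).prodMk (hu'.continuous.comp this).neg
  -- the agreement set is clopen
  set A : Set ℝ := {t | F t = G t} with hA
  have hclosed : IsClosed A := isClosed_eq hFcont hGcont
  have hopen : IsOpen A := by
    rw [isOpen_iff_mem_nhds]
    intro a ha
    obtain ⟨K, s, hs, hlip⟩ := (hvC.contDiffAt).exists_lipschitzOnWith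
    have hmemF : F ⁻¹' s ∈ 𝓝 a := (hFcont.continuousAt).preimage_mem_nhds hs
    have hFs : ∀ᶠ t in 𝓝 a, HasDerivAt F (v (F t)) t ∧ F t ∈ s :=
      Filter.eventually_of_mem hmemF fun t ht => ⟨hFd t, ht⟩
    have hs' : s ∈ 𝓝 (G a) := by rwa [← show F a = G a from ha]
    have hmemG : G ⁻¹' s ∈ 𝓝 a := (hGcont.continuousAt).preimage_mem_nhds hs'
    have hGs : ∀ᶠ t in 𝓝 a, HasDerivAt G (v (G t)) t ∧ G t ∈ s :=
      Filter.eventually_of_mem hmemG fun t ht => ⟨hGd t, ht⟩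
    have := ODE_solution_unique_of_eventually (v := fun _ : ℝ => v) (s := fun _ => s)
      (Filter.Eventually.of_forall fun _ => hlip) hFs hGs ha
    exact this.mono fun t ht => ht
  have hne : t₀ ∈ A := by
    simp only [hA, hF, hG, mem_setOf_eq]
    have : 2 * t₀ - t₀ = t₀ := by ring
    rw [this, hcrit]
    simp
  have hAuniv : A = univ := by
    rcases isClopen_iff.mp ⟨hclosed, hopen⟩ with h | h
    · exact absurd (h ▸ hne) (notMem_empty t₀)
    · exact h
  intro t
  have ht : (t₀ + t) ∈ A := hAuniv ▸ mem_univ _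
  have := congrArg Prod.fst ht
  simp only [hF, hG] at this
  convert this using 2
  ring
end

section
/- Let f : ℝ → ℝ be smooth, μ ∈ ℝ with f(μ) < 0, and let u be a solution of u'' + f(u) = 0 on [0, T) with u(0) = μ, u'(0) = 0, and u'(t) > 0 for all t ∈ (0, T). Set h(s) = ∫_μ^s f(τ) dτ. Then for every t ∈ (0, T) one has t = ∫_μ^{u(t)} (−2h(τ))^{−1/2} dτ; that is, the inverse function of u on (0, T) is given by s ↦ ∫_μ^s (−2h(τ))^{−1/2} dτ. -/
open MeasureTheory intervalIntegral Set Filter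

/-- For a solution of `u'' + f(u) = 0` on `[0, T)` with `u(0) = μ`,
`u'(0) = 0`, `f(μ) < 0` and `u' > 0` on `(0, T)`, the inverse function of `u` is
`s ↦ ∫_μ^s (−2h(τ))^{−1/2} dτ`, where `h(s) = ∫_μ^s f(τ) dτ`; that is,
`t = ∫_μ^{u(t)} (−2h(τ))^{−1/2} dτ` for all `t ∈ (0, T)`. -/
theorem obata_ode_inverse_function_formula
    (f : ℝ → ℝ) (hf : ContDiff ℝ (⊤ : ℕ∞) f) (μ T : ℝ) (hT : 0 < T) (hfμ : f μ < 0)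
    (u u' u'' : ℝ → ℝ)
    (hu : ∀ t ∈ Set.Ico 0 T, HasDerivWithinAt u (u' t) (Set.Ico 0 T) t)
    (hu' : ∀ t ∈ Set.Ico 0 T, HasDerivWithinAt u' (u'' t) (Set.Ico 0 T) t)
    (hode : ∀ t ∈ Set.Ico 0 T, u'' t + f (u t) = 0)
    (hinit : u 0 = μ) (hinit' : u' 0 = 0)
    (hpos : ∀ t ∈ Set.Ioo 0 T, 0 < u' t)
    (h : ℝ → ℝ) (hh : ∀ s : ℝ, h s = ∫ τ in μ..s, f τ) :
    ∀ t ∈ Set.Ioo 0 T, t = ∫ τ in μ..(u t), 1 / Real.sqrt (-2 * h τ) := by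
  have hfc : Continuous f := hf.continuous
  -- derivative of h
  have hhderiv : ∀ s : ℝ, HasDerivAt h (f s) s := by
    intro s
    have : HasDerivAt (fun s => ∫ τ in μ..s, f τ) (f s) s :=
      intervalIntegral.integral_hasDerivAt_right (hfc.intervalIntegrable μ s)
        (hfc.stronglyMeasurable.stronglyMeasurableAtFilter) hfc.continuousAt
    exact (funext hh : h = _) ▸ this
  have hhcont : Continuous h := by
    rw [continuous_iff_continuousAt]; exact fun s => (hhderiv s).continuousAt
  have hhμ : h μ = 0 := by rw [hh]; simp
  set S := Set.Ico (0:ℝ) T with hS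
  have hucont : ContinuousOn u S := fun t ht => (hu t ht).continuousWithinAt
  have hu'cont : ContinuousOn u' S := fun t ht => (hu' t ht).continuousWithinAt
  -- energy identity
  set E : ℝ → ℝ := fun t => u' t ^ 2 + 2 * h (u t) with hE
  have hEderiv : ∀ t ∈ S, HasDerivWithinAt E 0 S t := by
    intro t ht
    have h1 : HasDerivWithinAt (fun t => u' t ^ 2) (2 * u' t * u'' t) S t := by
      simpa [mul_comm, mul_assoc] using (hu' t ht).fun_pow 2
    have h2 : HasDerivWithinAt (fun t => 2 * h (u t)) (2 * (f (u t) * u' t)) S t :=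
      (((hhderiv (u t)).comp_hasDerivWithinAt t (hu t ht))).const_mul 2
    have h3 := h1.fun_add h2
    refine HasDerivWithinAt.congr_deriv h3 ?_
    linear_combination (2 * u' t) * (hode t ht)
  have hEcont : ContinuousOn E S := by
    intro t ht; exact ((hEderiv t ht).differentiableWithinAt).continuousWithinAt
  have energy : ∀ t ∈ S, u' t ^ 2 = -2 * h (u t) := by
    intro t ht
    have hsub : Set.Icc (0:ℝ) t ⊆ S := fun x hx => ⟨hx.1, lt_of_le_of_lt hx.2 ht.2⟩
    have key : ∀ x ∈ Set.Icc (0:ℝ) t, E x = E 0 := by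
      apply constant_of_has_deriv_right_zero (hEcont.mono hsub)
      intro x hx
      have hxS : x ∈ S := hsub ⟨hx.1, hx.2.le⟩
      refine (hEderiv x hxS).mono_of_mem_nhdsWithin ?_
      have hmem : Set.Ici x ∩ Set.Iio T ∈ nhdsWithin x (Set.Ici x) :=
        Filter.inter_mem self_mem_nhdsWithin
          (mem_nhdsWithin_of_mem_nhds (Iio_mem_nhds (lt_trans hx.2 ht.2)))
      exact Filter.mem_of_superset hmem (fun y hy => ⟨le_trans hx.1 hy.1, hy.2⟩)
    have hE0 : E 0 = 0 := by simp [hE, hinit, hinit', hhμ]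
    have := key t ⟨ht.1, le_refl t⟩
    rw [hE0] at this
    simp only [hE] at this
    linarith
  -- monotonicity
  have humono : StrictMonoOn u S := by
    apply strictMonoOn_of_deriv_pos (convex_Ico 0 T) hucont
    intro x hx
    rw [interior_Ico] at hx
    have hx' : x ∈ S := ⟨hx.1.le, hx.2⟩
    have hico : S ∈ nhds x := Filter.mem_of_superset (Ioo_mem_nhds hx.1 hx.2)
      Set.Ioo_subset_Ico_self
    have := ((hu x hx').hasDerivAt hico).deriv
    rw [this]; exact hpos x hx
  have humem : ∀ t ∈ Set.Ioo 0 T, μ < u t := by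
    intro t ht
    have := humono (Set.left_mem_Ico.2 hT) ⟨ht.1.le, ht.2⟩ ht.1
    rwa [hinit] at this
  -- positivity of -2h on reachable points
  have hreach : ∀ t ∈ Set.Ioo 0 T, ∀ s ∈ Set.Ioc μ (u t), 0 < -2 * h s := by
    intro t ht s hs
    have hsub : Set.Icc (0:ℝ) t ⊆ S := fun x hx => ⟨hx.1, lt_of_le_of_lt hx.2 ht.2⟩
    have hmem : s ∈ Set.Icc (u 0) (u t) := by rw [hinit]; exact ⟨hs.1.le, hs.2⟩
    obtain ⟨t', ht', hts⟩ := intermediate_value_Icc ht.1.le (hucont.mono hsub) hmem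
    have ht'pos : 0 < t' := by
      rcases ht'.1.eq_or_lt with rfl | hlt
      · rw [hinit] at hts; exact absurd hts.symm (ne_of_gt hs.1)
      · exact hlt
    have ht'S : t' ∈ S := hsub ht'
    have h1 := energy t' ht'S
    have h2 := hpos t' ⟨ht'pos, lt_of_le_of_lt ht'.2 ht.2⟩
    rw [hts] at h1
    nlinarith
  -- the integrand
  set g : ℝ → ℝ := fun τ => 1 / Real.sqrt (-2 * h τ) with hg
  have hgmeas : Measurable g :=
    measurable_const.div (Real.continuous_sqrt.comp (by fun_prop)).measurable
  have hgnonneg : ∀ τ, 0 ≤ g τ := fun τ => by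
    simp only [hg, one_div]; positivity
  -- comparison near μ
  obtain ⟨δ, hδ, hδf⟩ : ∃ δ > 0, ∀ τ ∈ Set.Icc μ (μ + δ), f τ ≤ f μ / 2 := by
    have : ContinuousAt f μ := hfc.continuousAt
    rw [Metric.continuousAt_iff] at this
    obtain ⟨ε, hε, hεf⟩ := this (-(f μ) / 2) (by linarith)
    refine ⟨ε/2, by linarith, fun τ hτ => ?_⟩
    have : dist τ μ < ε := by
      rw [Real.dist_eq, abs_of_nonneg (by linarith [hτ.1])]
      linarith [hτ.2]
    have := hεf this
    rw [Real.dist_eq, abs_lt] at this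
    linarith [this.2]
  have hhub : ∀ s ∈ Set.Ioc μ (μ + δ), -(f μ) * (s - μ) ≤ -2 * h s := by
    intro s hs
    have hint1 : IntervalIntegrable f MeasureTheory.volume μ s := hfc.intervalIntegrable μ s
    have hint2 : IntervalIntegrable (fun _ => f μ / 2) MeasureTheory.volume μ s :=
      intervalIntegrable_const
    have hb : (∫ τ in μ..s, f τ) ≤ ∫ τ in μ..s, f μ / 2 := by
      apply intervalIntegral.integral_mono_on hs.1.le hint1 hint2
      intro x hx
      exact hδf x ⟨hx.1, le_trans hx.2 hs.2⟩
    rw [intervalIntegral.integral_const, smul_eq_mul] at hb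
    rw [← hh s] at hb
    nlinarith [hs.1]
  -- interval integrability of g on [μ, u t]
  have hgint : ∀ t ∈ Set.Ioo 0 T, IntegrableOn g (Set.Ioc μ (u t)) := by
    intro t ht
    set b := u t with hb
    have hμb : μ < b := humem t ht
    set m := min b (μ + δ) with hm
    have hμm : μ < m := lt_min hμb (by linarith)
    have hmb : m ≤ b := min_le_left _ _
    have hsplit : Set.Ioc μ m ∪ Set.Ioc m b = Set.Ioc μ b :=
      Set.Ioc_union_Ioc_eq_Ioc hμm.le hmb
    rw [← hsplit]
    apply MeasureTheory.IntegrableOn.union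
    · -- near μ: compare with C⁻¹ (τ-μ)^(-1/2)
      set c : ℝ := -(f μ) with hc
      have hcpos : 0 < c := by simp [hc]; linarith
      set ψ : ℝ → ℝ := fun τ => (Real.sqrt c)⁻¹ * (τ - μ) ^ (-(1/2) : ℝ) with hψ
      have hψint : IntegrableOn ψ (Set.Ioc μ m) := by
        have h1 : IntervalIntegrable (fun x : ℝ => x ^ (-(1/2) : ℝ))
            MeasureTheory.volume 0 (m - μ) := intervalIntegrable_rpow' (by norm_num)
        have h2 := (h1.comp_sub_right μ).const_mul (Real.sqrt c)⁻¹
        simp only [zero_add] at h2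
        have h3 : IntervalIntegrable ψ MeasureTheory.volume μ (m - μ + μ) := h2
        rw [sub_add_cancel] at h3
        exact (intervalIntegrable_iff_integrableOn_Ioc_of_le hμm.le).mp h3
      apply MeasureTheory.Integrable.mono' hψint
        (hgmeas.aestronglyMeasurable.restrict)
      rw [MeasureTheory.ae_restrict_iff' measurableSet_Ioc]
      refine MeasureTheory.ae_of_all _ (fun τ hτ => ?_)
      have hτb : τ ∈ Set.Ioc μ b := ⟨hτ.1, le_trans hτ.2 hmb⟩
      have hpos2 : 0 < -2 * h τ := hreach t ht τ hτb
      have hcomp : c * (τ - μ) ≤ -2 * h τ :=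
        hhub τ ⟨hτ.1, le_trans hτ.2 (min_le_right _ _)⟩
      have hτμ : 0 < τ - μ := by linarith [hτ.1]
      rw [Real.norm_eq_abs, abs_of_nonneg (hgnonneg τ)]
      have hsq : Real.sqrt (c * (τ - μ)) ≤ Real.sqrt (-2 * h τ) :=
        Real.sqrt_le_sqrt hcomp
      have hsqpos : 0 < Real.sqrt (c * (τ - μ)) :=
        Real.sqrt_pos.mpr (by positivity)
      have : g τ ≤ 1 / Real.sqrt (c * (τ - μ)) := by
        simp only [hg]
        apply one_div_le_one_div_of_le hsqpos hsq
      refine le_trans this (le_of_eq ?_)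
      simp only [hψ]
      rw [Real.sqrt_mul hcpos.le, Real.rpow_neg hτμ.le, ← Real.sqrt_eq_rpow]
      field_simp
    · -- away from μ: continuity
      rcases le_or_gt b m with hbm | hmb'
      · have : Set.Ioc m b = ∅ := Set.Ioc_eq_empty (not_lt.mpr hbm)
        rw [this]; exact MeasureTheory.integrableOn_empty
      · have hcont : ContinuousOn g (Set.Icc m b) := by
          apply ContinuousOn.div continuousOn_const
          · exact (Real.continuous_sqrt.comp (by fun_prop)).continuousOn
          · intro x hx
            have : 0 < -2 * h x := hreach t ht x ⟨lt_of_lt_of_le hμm hx.1, hx.2⟩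
            exact ne_of_gt (Real.sqrt_pos.mpr this)
        exact (hcont.integrableOn_Icc).mono_set Set.Ioc_subset_Icc_self
  have hgii : ∀ t ∈ Set.Ioo 0 T, IntervalIntegrable g MeasureTheory.volume μ (u t) := by
    intro t ht
    exact (intervalIntegrable_iff_integrableOn_Ioc_of_le (humem t ht).le).mpr (hgint t ht)
  -- the primitive
  set G : ℝ → ℝ := fun s => ∫ τ in μ..s, g τ with hG
  set F : ℝ → ℝ := fun t => G (u t) - t with hF
  have hFderiv : ∀ t ∈ Set.Ioo 0 T, HasDerivAt F 0 t := by
    intro t ht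
    have htS : t ∈ S := ⟨ht.1.le, ht.2⟩
    have hposht := hpos t ht
    have henergy := energy t htS
    have hval : -2 * h (u t) = u' t ^ 2 := henergy.symm
    have hvalpos : 0 < -2 * h (u t) := by rw [hval]; positivity
    have hgcont : ContinuousAt g (u t) := by
      apply ContinuousAt.div continuousAt_const
      · exact (Real.continuous_sqrt.comp (by fun_prop)).continuousAt
      · exact ne_of_gt (Real.sqrt_pos.mpr hvalpos)
    have hGder : HasDerivAt G (g (u t)) (u t) :=
      intervalIntegral.integral_hasDerivAt_right (hgii t ht)
        (hgmeas.stronglyMeasurable.stronglyMeasurableAtFilter) hgcont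
    have hico : S ∈ nhds t := Filter.mem_of_superset (Ioo_mem_nhds ht.1 ht.2)
      Set.Ioo_subset_Ico_self
    have huat : HasDerivAt u (u' t) t := (hu t htS).hasDerivAt hico
    have hcomp : HasDerivAt (fun t => G (u t)) (g (u t) * u' t) t := hGder.comp t huat
    have hgu : g (u t) * u' t = 1 := by
      have hsq : Real.sqrt (-2 * h (u t)) = u' t := by
        rw [hval]; exact Real.sqrt_sq hposht.le
      simp only [hg, hsq]
      field_simp
    rw [hgu] at hcomp
    simpa using hcomp.fun_sub (hasDerivAt_id t)
  -- F is constant on (0, T)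
  have hFconst : ∀ t₁ ∈ Set.Ioo 0 T, ∀ t₂ ∈ Set.Ioo 0 T, t₁ ≤ t₂ → F t₂ = F t₁ := by
    intro t₁ ht₁ t₂ ht₂ h12
    have hsub : Set.Icc t₁ t₂ ⊆ Set.Ioo 0 T :=
      fun x hx => ⟨lt_of_lt_of_le ht₁.1 hx.1, lt_of_le_of_lt hx.2 ht₂.2⟩
    have := constant_of_has_deriv_right_zero
      (f := F) (a := t₁) (b := t₂)
      (fun x hx => (hFderiv x (hsub hx)).continuousAt.continuousWithinAt)
      (fun x hx => (hFderiv x (hsub (Set.Ico_subset_Icc_self hx))).hasDerivWithinAt)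
    exact this t₂ ⟨h12, le_refl _⟩
  -- the limit as t → 0⁺
  intro t ht
  have htS : t ∈ S := ⟨ht.1.le, ht.2⟩
  have hμut : μ < u t := humem t ht
  -- continuity of G on [μ, u t]
  have hGcont : ContinuousOn G (Set.Icc μ (u t)) := by
    have hint : IntegrableOn g (Set.uIcc μ (u t)) := by
      rw [Set.uIcc_of_le hμut.le, integrableOn_Icc_iff_integrableOn_Ioc]
      exact hgint t ht
    have := intervalIntegral.continuousOn_primitive_interval (f := g) (a := μ) (b := u t)
      (μ := MeasureTheory.volume) hint
    rwa [Set.uIcc_of_le hμut.le] at this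
  have hG0 : G μ = 0 := by simp [hG]
  -- u ε → μ as ε → 0 within Ioo 0 t, staying in Icc μ (u t)
  have humaps : ∀ ε ∈ Set.Ioo 0 t, u ε ∈ Set.Icc μ (u t) := by
    intro ε hε
    have hεS : ε ∈ S := ⟨hε.1.le, lt_trans hε.2 ht.2⟩
    constructor
    · exact le_of_lt (humem ε ⟨hε.1, lt_trans hε.2 ht.2⟩)
    · exact le_of_lt (humono hεS htS hε.2)
  have hutend : Tendsto u (nhdsWithin 0 (Set.Ioo 0 t)) (nhdsWithin μ (Set.Icc μ (u t))) := by
    rw [tendsto_nhdsWithin_iff]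
    constructor
    · have h1 : Tendsto u (nhdsWithin 0 S) (nhds (u 0)) :=
        (hucont 0 ⟨le_refl 0, hT⟩).tendsto
      rw [hinit] at h1
      exact h1.mono_left (nhdsWithin_mono 0 (fun x hx => ⟨hx.1.le, lt_trans hx.2 ht.2⟩))
    · exact Filter.eventually_of_mem self_mem_nhdsWithin humaps
  have hGtend : Tendsto (fun ε => G (u ε)) (nhdsWithin 0 (Set.Ioo 0 t)) (nhds 0) := by
    have := (hGcont μ (Set.left_mem_Icc.mpr hμut.le)).tendsto
    rw [hG0] at this
    exact this.comp hutend
  -- F ε = F t for ε ∈ (0, t), so G (u ε) = F t + ε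
  have hne : (nhdsWithin (0:ℝ) (Set.Ioo 0 t)).NeBot := by
    apply mem_closure_iff_nhdsWithin_neBot.mp
    rw [closure_Ioo (ne_of_lt ht.1)]
    exact ⟨le_refl 0, ht.1.le⟩
  have heq : ∀ ε ∈ Set.Ioo 0 t, G (u ε) = F t + ε := by
    intro ε hε
    have hεIoo : ε ∈ Set.Ioo 0 T := ⟨hε.1, lt_trans hε.2 ht.2⟩
    have := hFconst ε hεIoo t ht hε.2.le
    simp only [hF] at this ⊢
    linarith
  have htend2 : Tendsto (fun ε => G (u ε)) (nhdsWithin 0 (Set.Ioo 0 t)) (nhds (F t)) := by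
    have h1 : Tendsto (fun ε : ℝ => F t + ε) (nhdsWithin 0 (Set.Ioo 0 t)) (nhds (F t + 0)) :=
      (tendsto_const_nhds.add (tendsto_id.mono_left nhdsWithin_le_nhds))
    rw [add_zero] at h1
    exact h1.congr' (Filter.eventually_of_mem self_mem_nhdsWithin
      (fun ε hε => (heq ε hε).symm))
  have hFt : F t = 0 := tendsto_nhds_unique htend2 hGtend
  simp only [hF, hG] at hFt
  linarith
end

section
/- Let f : ℝ → ℝ be smooth, μ ∈ ℝ with f(μ) < 0, and set h(s) = ∫_μ^s f(τ) dτ. Assume h(s) < 0 for all s > μ and ∫_μ^∞ (−h(s))^{−1/2} ds = ∞. Then the maximal solution u of u'' + f(u) = 0 with u(0) = μ, u'(0) = 0 is defined on all of ℝ, and u'(t) > 0 for every t > 0 (so u has no critical point other than 0). -/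
open MeasureTheory Set Filter Topology
open scoped ENNReal

lemma obata_aux
    (f : ℝ → ℝ) (hf : Continuous f) (μ : ℝ) (hfμ : f μ < 0)
    (h : ℝ → ℝ) (hh : ∀ s : ℝ, h s = ∫ τ in μ..s, f τ)
    (hneg : ∀ s : ℝ, μ < s → h s < 0)
    (D : Set ℝ) (hD : IsOpen D) (hDconn : D.OrdConnected) (h0D : (0 : ℝ) ∈ D)
    (u u' u'' : ℝ → ℝ)
    (hu : ∀ t ∈ D, HasDerivAt u (u' t) t)
    (hu' : ∀ t ∈ D, HasDerivAt u' (u'' t) t)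
    (hode : ∀ t ∈ D, u'' t + f (u t) = 0)
    (hinit : u 0 = μ) (hinit' : u' 0 = 0) :
    (∀ t ∈ D, (u' t)^2 = -(2 * h (u t))) ∧ (∀ t ∈ D, μ ≤ u t) ∧
      (∀ t ∈ D, 0 < t → 0 < u' t) := by
  -- derivative of h
  have hder : ∀ s : ℝ, HasDerivAt h (f s) s := by
    intro s
    have h1 : HasDerivAt (fun x => ∫ τ in μ..x, f τ) (f s) s :=
      intervalIntegral.integral_hasDerivAt_right (hf.intervalIntegrable _ _)
        (hf.stronglyMeasurableAtFilter _ _) hf.continuousAt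
    exact h1.congr_of_eventuallyEq (Eventually.of_forall fun x => hh x)
  have hμ0 : h μ = 0 := by simp [hh]
  -- energy identity
  have energy : ∀ t ∈ D, (u' t)^2 = -(2 * h (u t)) := by
    set g : ℝ → ℝ := fun t => (u' t)^2 + 2 * h (u t) with hg
    have hgd : ∀ t ∈ D, HasDerivAt g 0 t := by
      intro t ht
      have h1 : HasDerivAt (fun t => (u' t)^2) (2 * u' t * u'' t) t := by
        have := (hu' t ht).pow 2
        simpa [mul_comm, mul_assoc, mul_left_comm, Pi.pow_def] using this
      have h2 : HasDerivAt (fun t => h (u t)) (f (u t) * u' t) t :=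
        (hder (u t)).comp t (hu t ht)
      have h3 := h1.add (h2.const_mul 2)
      have h4 : 2 * u' t * u'' t + 2 * (f (u t) * u' t) = 0 := by
        linear_combination (2 * u' t) * hode t ht
      rw [h4] at h3
      exact h3
    have hconst : ∀ t ∈ D, g t = g 0 := by
      intro t ht
      rcases le_total 0 t with h0t | ht0
      · have hsub : Icc 0 t ⊆ D := hDconn.out h0D ht
        exact constant_of_has_deriv_right_zero
          (fun x hx => (hgd x (hsub hx)).continuousAt.continuousWithinAt)
          (fun x hx => (hgd x (hsub (Ico_subset_Icc_self hx))).hasDerivWithinAt)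
          t (right_mem_Icc.2 h0t)
      · have hsub : Icc t 0 ⊆ D := hDconn.out ht h0D
        exact (constant_of_has_deriv_right_zero
          (fun x hx => (hgd x (hsub hx)).continuousAt.continuousWithinAt)
          (fun x hx => (hgd x (hsub (Ico_subset_Icc_self hx))).hasDerivWithinAt)
          0 (right_mem_Icc.2 ht0)).symm
    intro t ht
    have h1 := hconst t ht
    have h2 : g 0 = 0 := by simp [hg, hinit, hinit', hμ0]
    rw [h2] at h1
    simp only [hg] at h1
    linarith
  -- find ε with h > 0 on Ico (μ-ε) μ
  obtain ⟨ε, hε, hfneg⟩ : ∃ ε > 0, ∀ s ∈ Icc (μ - ε) μ, f s < 0 := by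
    have h1 : ∀ᶠ s in 𝓝 μ, f s < 0 := hf.continuousAt (Iio_mem_nhds hfμ)
    rw [Metric.eventually_nhds_iff] at h1
    obtain ⟨δ, hδ, hδ'⟩ := h1
    refine ⟨δ/2, by linarith, fun s hs => hδ' ?_⟩
    rw [Real.dist_eq, abs_lt]
    constructor <;> [linarith [hs.1]; linarith [hs.2]]
  have hposh : ∀ s ∈ Ico (μ - ε) μ, 0 < h s := by
    intro s hs
    have hint : 0 < ∫ x in s..μ, -f x := by
      apply intervalIntegral.intervalIntegral_pos_of_pos_on (hf.neg.intervalIntegrable _ _)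
      · intro x hx
        have : f x < 0 := hfneg x ⟨by linarith [hs.1, hx.1.le], hx.2.le⟩
        simp only [Pi.neg_apply]
        linarith
      · exact hs.2
    have : (∫ x in s..μ, -f x) = h s := by
      rw [intervalIntegral.integral_neg, hh s, intervalIntegral.integral_symm]
      ring
    linarith [this ▸ hint]
  -- u ≥ μ on D
  have huμ : ∀ t ∈ D, μ ≤ u t := by
    intro t ht
    by_contra hlt
    push_neg at hlt
    have key : ∀ r ∈ D, u r ∉ Ioo (μ - ε) μ := by
      intro r hr hmem
      have h1 := hposh (u r) ⟨hmem.1.le, hmem.2⟩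
      have h2 := energy r hr
      nlinarith [sq_nonneg (u' r)]
    have huIcc : uIcc t 0 ⊆ D := by
      rw [uIcc_eq_union]
      exact union_subset (hDconn.out ht h0D) (hDconn.out h0D ht)
    have hcont : ContinuousOn u (uIcc t 0) :=
      fun x hx => (hu x (huIcc hx)).continuousAt.continuousWithinAt
    rcases lt_or_ge (μ - ε) (u t) with hcase | hcase
    · exact key t ht ⟨hcase, hlt⟩
    · have hy : μ - ε/2 ∈ uIcc (u t) (u 0) := by
        rw [hinit]
        rcases le_total (u t) μ with h1 | h1
        · rw [uIcc_of_le h1]; exact ⟨by linarith, by linarith⟩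
        · rw [uIcc_of_ge h1]; exact ⟨by linarith, by linarith⟩
      obtain ⟨r, hr, hur⟩ := intermediate_value_uIcc hcont hy
      exact key r (huIcc hr) (by rw [hur]; exact ⟨by linarith, by linarith⟩)
  refine ⟨energy, huμ, ?_⟩
  -- positivity of u'
  intro t₀ ht₀D ht₀
  have hIcc : Icc 0 t₀ ⊆ D := hDconn.out h0D ht₀D
  have hu''0 : 0 < u'' 0 := by
    have := hode 0 h0D; rw [hinit] at this; linarith
  -- small δ' with u' > 0 on (0, δ']
  obtain ⟨δ', hδ'pos, hδ'le, hδ'⟩ : ∃ δ' > 0, δ' ≤ t₀ ∧ ∀ s ∈ Ioc 0 δ', 0 < u' s := by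
    have hslope := hasDerivAt_iff_tendsto_slope.mp (hu' 0 h0D)
    have h1 : ∀ᶠ s in 𝓝[≠] (0:ℝ), 0 < slope u' 0 s := hslope (Ioi_mem_nhds hu''0)
    rw [eventually_nhdsWithin_iff, Metric.eventually_nhds_iff] at h1
    obtain ⟨δ, hδ, hδ'⟩ := h1
    refine ⟨min (δ/2) t₀, lt_min (by linarith) ht₀, min_le_right _ _, ?_⟩
    intro s hs
    have hsδ : dist s 0 < δ := by
      rw [Real.dist_eq, sub_zero, abs_of_pos hs.1]
      calc s ≤ min (δ/2) t₀ := hs.2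
        _ ≤ δ/2 := min_le_left _ _
        _ < δ := by linarith
    have h3 : 0 < slope u' 0 s := hδ' hsδ (by simp [ne_of_gt hs.1])
    rw [slope_def_field, hinit', sub_zero, sub_zero] at h3
    have := mul_pos h3 hs.1
    rwa [div_mul_cancel₀ _ (ne_of_gt hs.1)] at this
  have hcu' : ContinuousOn u' (Icc 0 t₀) :=
    fun x hx => (hu' x (hIcc hx)).continuousAt.continuousWithinAt
  -- no zeros of u' in (0, t₀]
  have hne : ∀ s ∈ Ioc 0 t₀, u' s ≠ 0 := by
    by_contra hcon
    push_neg at hcon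
    obtain ⟨τ, hτmem, hτ⟩ := hcon
    have hτδ : δ' < τ := by
      by_contra hle
      push_neg at hle
      exact absurd hτ (ne_of_gt (hδ' τ ⟨hτmem.1, hle⟩))
    set K : Set ℝ := {s ∈ Icc δ' t₀ | u' s = 0} with hK
    have hKne : K.Nonempty := ⟨τ, ⟨hτδ.le, hτmem.2⟩, hτ⟩
    have hKclosed : IsClosed K := by
      have : K = Icc δ' t₀ ∩ u' ⁻¹' {0} := by ext x; simp [hK, and_comm]
      rw [this]
      exact (hcu'.mono (Icc_subset_Icc_left hδ'pos.le)).preimage_isClosed_of_isClosed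
        isClosed_Icc isClosed_singleton
    have hKcompact : IsCompact K :=
      Metric.isCompact_of_isClosed_isBounded hKclosed
        (Metric.isBounded_Icc δ' t₀ |>.subset (fun x hx => hx.1))
    set τ₀ := sInf K with hτ₀
    have hτ₀K : τ₀ ∈ K := hKcompact.sInf_mem hKne
    have hτ₀δ : δ' < τ₀ := by
      rcases eq_or_lt_of_le hτ₀K.1.1 with heq | hlt
      · exact absurd hτ₀K.2 (ne_of_gt (hδ' δ' ⟨hδ'pos, le_refl _⟩) ∘ (heq ▸ id))
      · exact hlt
    -- u' > 0 on [δ', τ₀)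
    have hnz : ∀ s ∈ Ico δ' τ₀, u' s ≠ 0 := by
      intro s hs hs0
      have : s ∈ K := ⟨⟨hs.1, hs.2.le.trans hτ₀K.1.2⟩, hs0⟩
      exact absurd (csInf_le hKcompact.bddBelow this) (not_le.2 hs.2)
    have hpos' : ∀ s ∈ Ico δ' τ₀, 0 < u' s := by
      intro s hs
      rcases eq_or_lt_of_le hs.1 with heq | hlt
      · exact heq ▸ hδ' δ' ⟨hδ'pos, le_refl _⟩
      rcases lt_or_ge 0 (u' s) with hp | hp
      · exact hp
      have hsneg : u' s < 0 := lt_of_le_of_ne hp (hnz s hs)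
      have hcc : ContinuousOn u' (Icc δ' s) :=
        hcu'.mono (Icc_subset_Icc hδ'pos.le (hs.2.le.trans hτ₀K.1.2))
      have h0mem : (0:ℝ) ∈ Ioo (u' s) (u' δ') := ⟨hsneg, hδ' δ' ⟨hδ'pos, le_refl _⟩⟩
      obtain ⟨z, hz, hz0⟩ := intermediate_value_Ioo' hlt.le hcc h0mem
      exact absurd hz0 (hnz z ⟨hz.1.le, hz.2.trans hs.2⟩)
    -- u strictly increasing on [0, τ₀]
    have hτ₀t₀ : τ₀ ≤ t₀ := hτ₀K.1.2
    have hmono : StrictMonoOn u (Icc 0 τ₀) := by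
      apply strictMonoOn_of_deriv_pos (convex_Icc 0 τ₀)
      · exact fun x hx => (hu x (hIcc ⟨hx.1, hx.2.trans hτ₀t₀⟩)).continuousAt.continuousWithinAt
      · intro x hx
        rw [interior_Icc] at hx
        rw [(hu x (hIcc ⟨hx.1.le, hx.2.le.trans hτ₀t₀⟩)).deriv]
        rcases le_or_gt x δ' with hle | hlt
        · exact hδ' x ⟨hx.1, hle⟩
        · exact hpos' x ⟨hlt.le, hx.2⟩
    have hτ₀D : τ₀ ∈ D := hIcc ⟨(hδ'pos.trans hτ₀δ).le, hτ₀t₀⟩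
    have huτ₀ : μ < u τ₀ := by
      have h1 := hmono (left_mem_Icc.2 (hδ'pos.trans hτ₀δ).le)
        (right_mem_Icc.2 (hδ'pos.trans hτ₀δ).le) (hδ'pos.trans hτ₀δ)
      rwa [hinit] at h1
    have h1 := energy τ₀ hτ₀D
    rw [hτ₀K.2] at h1
    have h2 := hneg (u τ₀) huτ₀
    nlinarith
  -- conclude
  have ht₀ne := hne t₀ ⟨ht₀, le_refl _⟩
  rcases lt_or_ge 0 (u' t₀) with hp | hp
  · exact hp
  have ht₀neg : u' t₀ < 0 := lt_of_le_of_ne hp ht₀ne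
  rcases le_or_gt t₀ δ' with hle | hlt
  · exact absurd ht₀neg (not_lt.2 (hδ' t₀ ⟨ht₀, hle⟩).le)
  · have hcc : ContinuousOn u' (Icc δ' t₀) := hcu'.mono (Icc_subset_Icc_left hδ'pos.le)
    have h0mem : (0:ℝ) ∈ Ioo (u' t₀) (u' δ') := ⟨ht₀neg, hδ' δ' ⟨hδ'pos, le_refl _⟩⟩
    obtain ⟨z, hz, hz0⟩ := intermediate_value_Ioo' hlt.le hcc h0mem
    exact absurd hz0 (hne z ⟨hδ'pos.trans hz.1, hz.2.le⟩)

lemma obata_unbounded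
    (f : ℝ → ℝ) (hf : Continuous f) (μ : ℝ) (hfμ : f μ < 0)
    (h : ℝ → ℝ) (hh : ∀ s : ℝ, h s = ∫ τ in μ..s, f τ)
    (hneg : ∀ s : ℝ, μ < s → h s < 0)
    (hdiv : ∫⁻ s in Set.Ioi μ, ENNReal.ofReal (1 / Real.sqrt (-h s)) = ⊤)
    (D : Set ℝ) (hD : IsOpen D) (hDconn : D.OrdConnected) (h0D : (0 : ℝ) ∈ D)
    (u u' u'' : ℝ → ℝ)
    (hu : ∀ t ∈ D, HasDerivAt u (u' t) t)
    (hu' : ∀ t ∈ D, HasDerivAt u' (u'' t) t)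
    (hode : ∀ t ∈ D, u'' t + f (u t) = 0)
    (hinit : u 0 = μ) (hinit' : u' 0 = 0)
    (hmax : ∀ (v v' v'' : ℝ → ℝ) (E : Set ℝ), E.OrdConnected → (0 : ℝ) ∈ E →
      (∀ t ∈ E, HasDerivWithinAt v (v' t) E t) →
      (∀ t ∈ E, HasDerivWithinAt v' (v'' t) E t) →
      (∀ t ∈ E, v'' t + f (v t) = 0) → v 0 = μ → v' 0 = 0 → E ⊆ D) :
    ¬ BddAbove D := by
  obtain ⟨energy, huμ, hupos⟩ := obata_aux f hf μ hfμ h hh hneg D hD hDconn h0D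
    u u' u'' hu hu' hode hinit hinit'
  intro hbdd
  set b := sSup D with hb
  have hbD : b ∉ D := by
    intro hbD
    rw [Metric.isOpen_iff] at hD
    obtain ⟨ε, hε, hball⟩ := hD b hbD
    have : b + ε/2 ∈ D := hball (by
      simp only [Metric.mem_ball, Real.dist_eq]
      rw [abs_of_pos (by linarith)]
      linarith)
    have := le_csSup hbdd this
    linarith
  have hlt : ∀ t ∈ D, t < b := by
    intro t ht
    refine (le_csSup hbdd ht).lt_of_ne ?_
    intro he
    rw [← hb] at he
    subst he
    exact hbD ht
  have hb0 : 0 < b := hlt 0 h0D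
  have hIco : Ico 0 b ⊆ D := by
    intro t ht
    obtain ⟨d, hd, htd⟩ := exists_lt_of_lt_csSup ⟨0, h0D⟩ ht.2
    exact hDconn.out h0D hd ⟨ht.1, htd.le⟩
  have hcontu : ContinuousOn u (Ico 0 b) :=
    fun x hx => (hu x (hIco hx)).continuousAt.continuousWithinAt
  have hmono : StrictMonoOn u (Ico 0 b) := by
    apply strictMonoOn_of_deriv_pos (convex_Ico 0 b) hcontu
    intro x hx
    rw [interior_Ico] at hx
    rw [(hu x (hIco ⟨hx.1.le, hx.2⟩)).deriv]
    exact hupos x (hIco ⟨hx.1.le, hx.2⟩) hx.1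
  have huμ' : ∀ t ∈ Ioo 0 b, μ < u t := by
    intro t ht
    have := hmono (left_mem_Ico.2 hb0) ⟨ht.1.le, ht.2⟩ ht.1
    rwa [hinit] at this
  have hu'sqrt : ∀ t ∈ Ioo 0 b, u' t = Real.sqrt 2 * Real.sqrt (-(h (u t))) := by
    intro t ht
    have h1 := energy t (hIco ⟨ht.1.le, ht.2⟩)
    have h2 : (0:ℝ) < u' t := hupos t (hIco ⟨ht.1.le, ht.2⟩) ht.1
    have h3 : u' t = Real.sqrt ((u' t)^2) := (Real.sqrt_sq h2.le).symm
    rw [h3, h1]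
    rw [show -(2 * h (u t)) = 2 * (-(h (u t))) by ring,
      Real.sqrt_mul (by norm_num : (0:ℝ) ≤ 2)]
  have hconth : Continuous h := by
    have : ∀ s, HasDerivAt h (f s) s := by
      intro s
      have h1 : HasDerivAt (fun x => ∫ τ in μ..x, f τ) (f s) s :=
        intervalIntegral.integral_hasDerivAt_right (hf.intervalIntegrable _ _)
          (hf.stronglyMeasurableAtFilter _ _) hf.continuousAt
      exact h1.congr_of_eventuallyEq (Filter.Eventually.of_forall fun x => hh x)
    exact continuous_iff_continuousAt.2 fun s => (this s).continuousAt
  set g : ℝ → ℝ := fun y => 1 / Real.sqrt (-h y) with hgdef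
  have hgnn : ∀ y, 0 ≤ g y := fun y => one_div_nonneg.2 (Real.sqrt_nonneg _)
  have hgcont : ∀ y, μ < y → ContinuousAt g y := by
    intro y hy
    have hsq : (0:ℝ) < Real.sqrt (-h y) := Real.sqrt_pos.2 (by linarith [hneg y hy])
    exact (continuousAt_const.div
      ((Real.continuous_sqrt.comp hconth.neg).continuousAt) (ne_of_gt hsq))
  by_cases hbddu : BddAbove (u '' Ico 0 b)
  · -- bounded case: extend the solution to b
    classical
    set L := sSup (u '' Ico 0 b) with hLdef
    have himgne : (u '' Ico 0 b).Nonempty := ⟨u 0, mem_image_of_mem u (left_mem_Ico.2 hb0)⟩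
    have hnhds : 𝓝[Ioo 0 b] b = 𝓝[<] b := nhdsWithin_Ioo_eq_nhdsLT hb0
    have hLtend : Tendsto u (𝓝[<] b) (𝓝 L) := by
      rw [← hnhds, tendsto_order]
      constructor
      · intro l hl
        obtain ⟨z, hz, hlz⟩ := exists_lt_of_lt_csSup himgne hl
        obtain ⟨p, hp, rfl⟩ := hz
        have hmem : Ioo p b ∈ 𝓝[Ioo 0 b] b := by
          rw [hnhds]
          exact Ioo_mem_nhdsLT_of_mem ⟨hp.2, le_refl b⟩
        filter_upwards [hmem, self_mem_nhdsWithin] with x hx1 hx2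
        exact hlz.trans_le (hmono.monotoneOn hp ⟨hx2.1.le, hx2.2⟩ hx1.1.le)
      · intro l hl
        filter_upwards [self_mem_nhdsWithin] with x hx
        exact (le_csSup hbddu (mem_image_of_mem u ⟨hx.1.le, hx.2⟩)).trans_lt hl
    have hμL : μ < L := by
      have h1 := huμ' (b/2) ⟨by linarith, by linarith⟩
      have h2 : u (b/2) ≤ L :=
        le_csSup hbddu (mem_image_of_mem u ⟨by linarith, by linarith⟩)
      linarith
    set L' := Real.sqrt 2 * Real.sqrt (-(h L)) with hL'def
    have hu'tend : Tendsto u' (𝓝[<] b) (𝓝 L') := by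
      have hc : ContinuousAt (fun y => Real.sqrt 2 * Real.sqrt (-(h y))) L :=
        continuousAt_const.mul ((Real.continuous_sqrt.comp hconth.neg).continuousAt)
      have hcomp : Tendsto (fun t => Real.sqrt 2 * Real.sqrt (-(h (u t)))) (𝓝[<] b) (𝓝 L') :=
        hc.tendsto.comp hLtend
      apply hcomp.congr'
      rw [← hnhds]
      filter_upwards [self_mem_nhdsWithin] with x hx
      exact (hu'sqrt x hx).symm
    have hIooD : Ioo 0 b ⊆ D := fun x hx => hIco ⟨hx.1.le, hx.2⟩
    have hsmem : Ioo 0 b ∈ 𝓝[<] b := Ioo_mem_nhdsLT_of_mem ⟨hb0, le_refl b⟩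
    have hu''tend : Tendsto u'' (𝓝[<] b) (𝓝 (-(f L))) := by
      have hcomp : Tendsto (fun t => -(f (u t))) (𝓝[<] b) (𝓝 (-(f L))) :=
        (hf.neg.continuousAt (x := L)).tendsto.comp hLtend
      apply hcomp.congr'
      filter_upwards [hsmem] with x hx
      have := hode x (hIooD hx)
      linarith
    set v : ℝ → ℝ := fun t => if t = b then L else u t with hvdef
    set v' : ℝ → ℝ := fun t => if t = b then L' else u' t with hv'def
    set v'' : ℝ → ℝ := fun t => if t = b then -(f L) else u'' t with hv''def
    set E : Set ℝ := insert b D with hEdef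
    have hEord : E.OrdConnected := by
      constructor
      intro x hx y hy z hz
      rcases (Set.mem_insert_iff.1 hx) with rfl | hxD
      · rcases (Set.mem_insert_iff.1 hy) with rfl | hyD
        · have hzx : z = b := le_antisymm hz.2 hz.1
          rw [hzx]
          exact mem_insert _ _
        · exact absurd (hz.1.trans hz.2) (not_le.2 (hlt y hyD))
      · rcases (Set.mem_insert_iff.1 hy) with rfl | hyD
        · rcases eq_or_lt_of_le hz.2 with rfl | hzb
          · exact mem_insert _ _
          · obtain ⟨d, hd, hzd⟩ := exists_lt_of_lt_csSup ⟨0, h0D⟩ hzb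
            exact mem_insert_of_mem _ (hDconn.out hxD hd ⟨hz.1, hzd.le⟩)
        · exact mem_insert_of_mem _ (hDconn.out hxD hyD hz)
    have h0E : (0:ℝ) ∈ E := mem_insert_of_mem _ h0D
    have hEIic : E ⊆ Iic b := by
      intro x hx
      rcases (Set.mem_insert_iff.1 hx) with rfl | hxD
      · exact self_mem_Iic
      · exact (hlt x hxD).le
    have hvD : ∀ t ∈ D, v t = u t := fun t ht => if_neg (ne_of_lt (hlt t ht))
    have hv'D : ∀ t ∈ D, v' t = u' t := fun t ht => if_neg (ne_of_lt (hlt t ht))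
    have hv''D : ∀ t ∈ D, v'' t = u'' t := fun t ht => if_neg (ne_of_lt (hlt t ht))
    have hvb : v b = L := if_pos rfl
    have hv'b : v' b = L' := if_pos rfl
    have hv''b : v'' b = -(f L) := if_pos rfl
    have hvd : ∀ t ∈ D, HasDerivAt v (v' t) t := by
      intro t ht
      rw [hv'D t ht]
      apply (hu t ht).congr_of_eventuallyEq
      filter_upwards [hD.mem_nhds ht] with x hx
      exact hvD x hx
    have hv'd : ∀ t ∈ D, HasDerivAt v' (v'' t) t := by
      intro t ht
      rw [hv''D t ht]
      apply (hu' t ht).congr_of_eventuallyEq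
      filter_upwards [hD.mem_nhds ht] with x hx
      exact hv'D x hx
    have hvbd : HasDerivWithinAt v L' (Iic b) b := by
      apply hasDerivWithinAt_Iic_of_tendsto_deriv (s := Ioo 0 b)
      · exact fun x hx => ((hvd x (hIooD hx)).differentiableAt).differentiableWithinAt
      · have h1 : Tendsto v (𝓝[Ioo 0 b] b) (𝓝 L) := by
          rw [hnhds]
          apply hLtend.congr'
          filter_upwards [hsmem] with x hx
          exact (hvD x (hIooD hx)).symm
        rwa [ContinuousWithinAt, hvb]
      · exact hsmem
      · apply hu'tend.congr'
        filter_upwards [hsmem] with x hx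
        rw [(hvd x (hIooD hx)).deriv, hv'D x (hIooD hx)]
    have hv'bd : HasDerivWithinAt v' (-(f L)) (Iic b) b := by
      apply hasDerivWithinAt_Iic_of_tendsto_deriv (s := Ioo 0 b)
      · exact fun x hx => ((hv'd x (hIooD hx)).differentiableAt).differentiableWithinAt
      · have h1 : Tendsto v' (𝓝[Ioo 0 b] b) (𝓝 L') := by
          rw [hnhds]
          apply hu'tend.congr'
          filter_upwards [hsmem] with x hx
          exact (hv'D x (hIooD hx)).symm
        rwa [ContinuousWithinAt, hv'b]
      · exact hsmem
      · apply hu''tend.congr'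
        filter_upwards [hsmem] with x hx
        rw [(hv'd x (hIooD hx)).deriv, hv''D x (hIooD hx)]
    have hED : E ⊆ D := by
      apply hmax v v' v'' E hEord h0E
      · intro t ht
        rcases (Set.mem_insert_iff.1 ht) with rfl | htD
        · rw [hv'b]
          exact hvbd.mono hEIic
        · exact (hvd t htD).hasDerivWithinAt
      · intro t ht
        rcases (Set.mem_insert_iff.1 ht) with rfl | htD
        · rw [hv''b]
          exact hv'bd.mono hEIic
        · exact (hv'd t htD).hasDerivWithinAt
      · intro t ht
        rcases (Set.mem_insert_iff.1 ht) with rfl | htD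
        · rw [hv''b, hvb]
          ring
        · rw [hv''D t htD, hvD t htD]
          exact hode t htD
      · rw [hvD 0 h0D]
        exact hinit
      · rw [hv'D 0 h0D]
        exact hinit'
    exact hbD (hED (mem_insert b D))
  · -- unbounded case: contradict the divergence of the integral
    set tn : ℕ → ℝ := fun n => b / ((n:ℝ) + 3) with htn
    set Tn : ℕ → ℝ := fun n => b - b / ((n:ℝ) + 3) with hTn
    have hd3 : ∀ n : ℕ, (3:ℝ) ≤ (n:ℝ) + 3 := fun n => by
      have := n.cast_nonneg (α := ℝ); linarith
    have htn_pos : ∀ n, 0 < tn n := fun n => div_pos hb0 (by linarith [hd3 n])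
    have htn_le : ∀ n, tn n ≤ b / 3 :=
      fun n => div_le_div_of_nonneg_left hb0.le (by norm_num) (hd3 n)
    have htn_lt : ∀ n, tn n < Tn n := by
      intro n
      have h1 := htn_le n
      have h2 := htn_pos n
      simp only [hTn]
      linarith
    have hTn_lt : ∀ n, Tn n < b := fun n => by
      have := htn_pos n; simp only [hTn]; linarith
    have htn_mem : ∀ n, tn n ∈ Ioo 0 b := fun n => ⟨htn_pos n, (htn_lt n).trans (hTn_lt n)⟩
    have hTn_mem : ∀ n, Tn n ∈ Ioo 0 b := fun n => ⟨(htn_pos n).trans (htn_lt n), hTn_lt n⟩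
    -- change of variables estimate
    have key : ∀ n : ℕ, (∫⁻ y in Ioc (u (tn n)) (u (Tn n)),
        ENNReal.ofReal (g y)) ≤ ENNReal.ofReal (Real.sqrt 2 * b) := by
      intro n
      set p := tn n with hp
      set q := Tn n with hq
      have hpq : p < q := htn_lt n
      have hpmem := htn_mem n
      have hqmem := hTn_mem n
      have hIccsub : Icc p q ⊆ Ioo 0 b :=
        fun x hx => ⟨hpmem.1.trans_le hx.1, lt_of_le_of_lt hx.2 hqmem.2⟩
      have hIccD : Icc p q ⊆ D := fun x hx => hIco ⟨(hIccsub hx).1.le, (hIccsub hx).2⟩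
      have huIcc : uIcc p q = Icc p q := uIcc_of_le hpq.le
      have hucont : ContinuousOn u (uIcc p q) := by
        rw [huIcc]; exact fun x hx => (hu x (hIccD hx)).continuousAt.continuousWithinAt
      have hff' : ∀ x ∈ Ioo (min p q) (max p q), HasDerivWithinAt u (u' x) (Ioi x) x := by
        intro x hx
        rw [min_eq_left hpq.le, max_eq_right hpq.le] at hx
        exact (hu x (hIccD (Ioo_subset_Icc_self hx))).hasDerivWithinAt
      have hu'cont : ContinuousOn u' (uIcc p q) := by
        rw [huIcc]; exact fun x hx => (hu' x (hIccD hx)).continuousAt.continuousWithinAt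
      have hgco : ContinuousOn g (u '' uIcc p q) := by
        intro y hy
        obtain ⟨x, hx, rfl⟩ := hy
        rw [huIcc] at hx
        exact (hgcont (u x) (huμ' x (hIccsub hx))).continuousWithinAt
      have cov := intervalIntegral.integral_comp_smul_deriv'' hucont hff' hu'cont hgco
      have hLHS : (∫ x in p..q, u' x • (g ∘ u) x) = Real.sqrt 2 * (q - p) := by
        have heq : EqOn (fun x => u' x • (g ∘ u) x) (fun _ => Real.sqrt 2) (uIcc p q) := by
          intro x hx
          rw [huIcc] at hx
          have hx' := hIccsub hx
          have h1 := hu'sqrt x hx'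
          have h2 : (0:ℝ) < Real.sqrt (-(h (u x))) :=
            Real.sqrt_pos.2 (by linarith [hneg (u x) (huμ' x hx')])
          simp only [Function.comp_apply, smul_eq_mul, hgdef, h1]
          field_simp
        rw [intervalIntegral.integral_congr heq, intervalIntegral.integral_const,
          smul_eq_mul, mul_comm]
      have hupq : u p ≤ u q :=
        (hmono ⟨hpmem.1.le, hpmem.2⟩ ⟨hqmem.1.le, hqmem.2⟩ hpq).le
      have hgint : IntegrableOn g (Ioc (u p) (u q)) := by
        apply IntegrableOn.mono_set _ Ioc_subset_Icc_self
        apply ContinuousOn.integrableOn_Icc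
        intro y hy
        have hμy : μ < y := lt_of_lt_of_le (huμ' p hpmem) hy.1
        exact (hgcont y hμy).continuousWithinAt
      have hset : (∫ y in Ioc (u p) (u q), g y) = ∫ y in (u p)..(u q), g y :=
        (intervalIntegral.integral_of_le hupq).symm
      have hlin : (∫⁻ y in Ioc (u p) (u q), ENNReal.ofReal (g y))
          = ENNReal.ofReal (∫ y in Ioc (u p) (u q), g y) :=
        (ofReal_integral_eq_lintegral_ofReal hgint
          (Filter.Eventually.of_forall fun y => hgnn y)).symm
      rw [hlin, hset, ← cov, hLHS]
      apply ENNReal.ofReal_le_ofReal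
      have h1 : q - p ≤ b := by
        have := hpmem.1; have := hqmem.2; linarith
      have h2 : (0:ℝ) ≤ Real.sqrt 2 := Real.sqrt_nonneg 2
      nlinarith
    -- union covers (μ, ∞)
    have htn0 : Filter.Tendsto tn Filter.atTop (𝓝 0) := by
      apply Filter.Tendsto.div_atTop tendsto_const_nhds
      exact Filter.tendsto_atTop_add_const_right _ 3 tendsto_natCast_atTop_atTop
    have hutn : Filter.Tendsto (fun n => u (tn n)) Filter.atTop (𝓝 μ) := by
      have := (hu 0 h0D).continuousAt.tendsto.comp htn0
      simpa [hinit, Function.comp_def] using this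
    have hTnb : Filter.Tendsto Tn Filter.atTop (𝓝 b) := by
      have := htn0.const_sub b
      simpa [hTn] using this
    have hsub : Ioi μ ⊆ ⋃ n, Ioc (u (tn n)) (u (Tn n)) := by
      intro y hy
      obtain ⟨z, hz, hyz⟩ := not_bddAbove_iff.1 hbddu y
      obtain ⟨pt, hpt, rfl⟩ := hz
      have ev1 : ∀ᶠ n in Filter.atTop, u (tn n) < y := hutn.eventually_lt_const hy
      have ev2 : ∀ᶠ n in Filter.atTop, pt < Tn n := hTnb.eventually_const_lt hpt.2
      obtain ⟨n, h1, h2⟩ := (ev1.and ev2).exists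
      refine mem_iUnion.2 ⟨n, h1, ?_⟩
      calc y ≤ u pt := hyz.le
        _ ≤ u (Tn n) := hmono.monotoneOn hpt ⟨(hTn_mem n).1.le, (hTn_mem n).2⟩ h2.le
    have hmeasg : Measurable fun y => ENNReal.ofReal (g y) := by
      apply ENNReal.measurable_ofReal.comp
      exact measurable_const.div (Real.continuous_sqrt.comp hconth.neg).measurable
    set m : Measure ℝ := volume.withDensity (fun y => ENNReal.ofReal (g y)) with hm
    have hmonoset : Monotone (fun n => Ioc (u (tn n)) (u (Tn n))) := by
      intro n k hnk
      apply Ioc_subset_Ioc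
      · apply hmono.monotoneOn ⟨(htn_mem k).1.le, (htn_mem k).2⟩
          ⟨(htn_mem n).1.le, (htn_mem n).2⟩
        exact div_le_div_of_nonneg_left hb0.le (by linarith [hd3 n]) (by
          have : (n:ℝ) ≤ (k:ℝ) := Nat.cast_le.2 hnk
          linarith)
      · apply hmono.monotoneOn ⟨(hTn_mem n).1.le, (hTn_mem n).2⟩
          ⟨(hTn_mem k).1.le, (hTn_mem k).2⟩
        have : (n:ℝ) ≤ (k:ℝ) := Nat.cast_le.2 hnk
        have h3 : (n:ℝ) + 3 ≤ (k:ℝ) + 3 := by linarith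
        have := div_le_div_of_nonneg_left hb0.le (by linarith [hd3 n]) h3
        simp only [hTn]
        linarith
    have hcontr : (⊤ : ℝ≥0∞) ≤ ENNReal.ofReal (Real.sqrt 2 * b) := by
      calc (⊤ : ℝ≥0∞) = ∫⁻ y in Ioi μ, ENNReal.ofReal (g y) := hdiv.symm
        _ = m (Ioi μ) := (withDensity_apply _ measurableSet_Ioi).symm
        _ ≤ m (⋃ n, Ioc (u (tn n)) (u (Tn n))) := measure_mono hsub
        _ = ⨆ n, m (Ioc (u (tn n)) (u (Tn n))) := hmonoset.directed_le.measure_iUnion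
        _ ≤ ENNReal.ofReal (Real.sqrt 2 * b) := by
            apply iSup_le
            intro n
            rw [hm, withDensity_apply _ measurableSet_Ioc]
            exact key n
    exact absurd hcontr (not_le.2 ENNReal.ofReal_lt_top)

/-- Noncompact type I. Let `f(μ) < 0`, `h(s) = ∫_μ^s f`, assume
`h < 0` on `(μ, ∞)` and `∫_μ^∞ (−h)^{−1/2} = ∞`. Then the maximal solution `u` of
`u'' + f(u) = 0`, `u(0) = μ`, `u'(0) = 0` (maximality expressed by saying that the
domain `D` contains the domain of any solution of the same initial value problem)
is defined on all of ℝ, and `u'(t) > 0` for every `t > 0`. -/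
theorem obata_ode_noncompact_type_I_global
    (f : ℝ → ℝ) (hf : ContDiff ℝ (⊤ : ℕ∞) f) (μ : ℝ) (hfμ : f μ < 0)
    (h : ℝ → ℝ) (hh : ∀ s : ℝ, h s = ∫ τ in μ..s, f τ)
    (hneg : ∀ s : ℝ, μ < s → h s < 0)
    (hdiv : ∫⁻ s in Set.Ioi μ, ENNReal.ofReal (1 / Real.sqrt (-h s)) = ⊤)
    (D : Set ℝ) (hD : IsOpen D) (hDconn : D.OrdConnected) (h0D : (0 : ℝ) ∈ D)
    (u u' u'' : ℝ → ℝ)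
    (hu : ∀ t ∈ D, HasDerivAt u (u' t) t)
    (hu' : ∀ t ∈ D, HasDerivAt u' (u'' t) t)
    (hode : ∀ t ∈ D, u'' t + f (u t) = 0)
    (hinit : u 0 = μ) (hinit' : u' 0 = 0)
    (hmax : ∀ (v v' v'' : ℝ → ℝ) (E : Set ℝ), E.OrdConnected → (0 : ℝ) ∈ E →
      (∀ t ∈ E, HasDerivWithinAt v (v' t) E t) →
      (∀ t ∈ E, HasDerivWithinAt v' (v'' t) E t) →
      (∀ t ∈ E, v'' t + f (v t) = 0) → v 0 = μ → v' 0 = 0 → E ⊆ D) :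
    D = Set.univ ∧ ∀ t : ℝ, 0 < t → 0 < u' t := by
  have hfc : Continuous f := hf.continuous
  have main1 := obata_unbounded f hfc μ hfμ h hh hneg hdiv D hD hDconn h0D
    u u' u'' hu hu' hode hinit hinit' hmax
  obtain ⟨_, _, hupos⟩ := obata_aux f hfc μ hfμ h hh hneg D hD hDconn h0D
    u u' u'' hu hu' hode hinit hinit'
  -- reflected system
  set D' : Set ℝ := (fun t : ℝ => -t) ⁻¹' D with hD'def
  have hD'open : IsOpen D' := hD.preimage continuous_neg
  have hD'conn : D'.OrdConnected := by
    constructor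
    intro x hx y hy z hz
    exact hDconn.out hy hx ⟨neg_le_neg hz.2, neg_le_neg hz.1⟩
  have h0D' : (0:ℝ) ∈ D' := by simpa [hD'def] using h0D
  have hru : ∀ t ∈ D', HasDerivAt (fun s : ℝ => u (-s)) (-u' (-t)) t := by
    intro t ht
    have h1 := (hu (-t) ht).comp t (hasDerivAt_neg t)
    simpa [Function.comp_def, mul_neg_one, Pi.neg_def] using h1
  have hru' : ∀ t ∈ D', HasDerivAt (fun s : ℝ => -u' (-s)) (u'' (-t)) t := by
    intro t ht
    have h1 := ((hu' (-t) ht).comp t (hasDerivAt_neg t)).neg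
    simpa [Function.comp_def, mul_neg_one, Pi.neg_def] using h1
  have hrmax : ∀ (v v' v'' : ℝ → ℝ) (E : Set ℝ), E.OrdConnected → (0 : ℝ) ∈ E →
      (∀ t ∈ E, HasDerivWithinAt v (v' t) E t) →
      (∀ t ∈ E, HasDerivWithinAt v' (v'' t) E t) →
      (∀ t ∈ E, v'' t + f (v t) = 0) → v 0 = μ → v' 0 = 0 → E ⊆ D' := by
    intro w w' w'' E hEord h0E hw hw' hwode hw0 hw'0
    set rE : Set ℝ := (fun t : ℝ => -t) ⁻¹' E with hrEdef
    have hrEord : rE.OrdConnected := by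
      constructor
      intro x hx y hy z hz
      exact hEord.out hy hx ⟨neg_le_neg hz.2, neg_le_neg hz.1⟩
    have h0rE : (0:ℝ) ∈ rE := by simpa [hrEdef] using h0E
    have hmapsTo : Set.MapsTo (fun t : ℝ => -t) rE E := fun x hx => hx
    have hrw : ∀ t ∈ rE, HasDerivWithinAt (fun s => w (-s)) (-w' (-t)) rE t := by
      intro t ht
      have h1 := (hw (-t) ht).comp t (hasDerivAt_neg t).hasDerivWithinAt hmapsTo
      simpa [Function.comp_def, mul_neg_one, Pi.neg_def] using h1
    have hrw' : ∀ t ∈ rE, HasDerivWithinAt (fun s => -w' (-s)) (w'' (-t)) rE t := by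
      intro t ht
      have h1 := ((hw' (-t) ht).comp t (hasDerivAt_neg t).hasDerivWithinAt hmapsTo).neg
      simpa [Function.comp_def, mul_neg_one, Pi.neg_def] using h1
    have hsub := hmax (fun s => w (-s)) (fun s => -w' (-s)) (fun s => w'' (-s)) rE
      hrEord h0rE hrw hrw' (fun t ht => hwode (-t) ht)
      (by simpa using hw0) (by simp [hw'0])
    intro t ht
    have h2 : -t ∈ rE := by simpa [hrEdef] using ht
    exact hsub h2
  have main2 := obata_unbounded f hfc μ hfμ h hh hneg hdiv D' hD'open hD'conn h0D'
    (fun s => u (-s)) (fun s => -u' (-s)) (fun s => u'' (-s)) hru hru'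
    (fun t ht => hode (-t) ht) (by simpa using hinit) (by simp [hinit']) hrmax
  have hDuniv : D = Set.univ := by
    ext t
    simp only [Set.mem_univ, iff_true]
    obtain ⟨d2, hd2, htd2⟩ := not_bddAbove_iff.1 main1 t
    obtain ⟨d1, hd1, htd1⟩ := not_bddAbove_iff.1 main2 (-t)
    have hd1' : -d1 ∈ D := hd1
    exact hDconn.out hd1' hd2 ⟨by linarith, htd2.le⟩
  refine ⟨hDuniv, fun t ht => hupos t (by rw [hDuniv]; trivial) ht⟩
end

section
/- Let f : ℝ → ℝ be smooth and coercive, and let u : ℝ → ℝ be a nonconstant twice differentiable function satisfying u''(t) + f(u(t)) = 0 for all t ∈ ℝ. Then u has at least one critical point, i.e. there exists t₀ ∈ ℝ with u'(t₀) = 0. -/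
open Filter Set Topology


/-- A smooth function `f : ℝ → ℝ` is *coercive* if: every antiderivative `h` of `f`
that is negative somewhere has a zero; whenever an antiderivative `h` of `f` satisfies
`h(μ) = h(ν) = 0` and `h < 0` on `(μ, ν)`, then `f(μ)` and `f(ν)` are not both zero;
and whenever an antiderivative `h` of `f` has a zero `μ` with `h < 0` on `(μ, ∞)`
(so `μ` is the maximal zero), or a zero `μ` with `h < 0` on `(−∞, μ)` (so `μ` is the
minimal zero), then `f(μ) ≠ 0`. -/
def Coercive (f : ℝ → ℝ) : Prop :=
  ∀ h : ℝ → ℝ, (∀ s : ℝ, HasDerivAt h (f s) s) →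
    ((∃ s : ℝ, h s < 0) → ∃ s : ℝ, h s = 0) ∧
    (∀ μ ν : ℝ, μ < ν → h μ = 0 → h ν = 0 → (∀ s ∈ Set.Ioo μ ν, h s < 0) →
      ¬(f μ = 0 ∧ f ν = 0)) ∧
    (∀ μ : ℝ, h μ = 0 → (∀ s : ℝ, μ < s → h s < 0) → f μ ≠ 0) ∧
    (∀ μ : ℝ, h μ = 0 → (∀ s : ℝ, s < μ → h s < 0) → f μ ≠ 0)

/-- `f` is *degenerately coercive* if it is coercive and, whenever an antiderivative
`h` of `f` satisfies `h(μ) = h(ν) = 0` and `h < 0` on `(μ, ν)`, then `f(μ)·f(ν) = 0`. -/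
def DegeneratelyCoercive (f : ℝ → ℝ) : Prop :=
  Coercive f ∧
    ∀ h : ℝ → ℝ, (∀ s : ℝ, HasDerivAt h (f s) s) →
      ∀ μ ν : ℝ, μ < ν → h μ = 0 → h ν = 0 → (∀ s ∈ Set.Ioo μ ν, h s < 0) →
        f μ * f ν = 0

/-- `f` is *nondegenerately coercive* if for every antiderivative `h` of `f`, the set
`{s : h s < 0}` is a disjoint union of bounded open intervals whose endpoints are
zeros of `h` at which `f` does not vanish; equivalently, every point where `h < 0`
lies in a bounded open interval `(a, b)` with `h(a) = h(b) = 0`, `h < 0` on `(a, b)`,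
`f(a) ≠ 0` and `f(b) ≠ 0`. -/
def NondegeneratelyCoercive (f : ℝ → ℝ) : Prop :=
  ∀ h : ℝ → ℝ, (∀ s : ℝ, HasDerivAt h (f s) s) →
    ∀ c : ℝ, h c < 0 → ∃ a b : ℝ, a < c ∧ c < b ∧ h a = 0 ∧ h b = 0 ∧
      (∀ s ∈ Set.Ioo a b, h s < 0) ∧ f a ≠ 0 ∧ f b ≠ 0

private lemma growth_lem {g g' : ℝ → ℝ} (hg : ∀ t, HasDerivAt g (g' t) t) {c : ℝ} (T : ℝ)
    (hc : ∀ t, T ≤ t → c ≤ g' t) : ∀ t, T ≤ t → g T + c * (t - T) ≤ g t := by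
  intro t ht
  set φ : ℝ → ℝ := fun s => g s - c * s with hφdef
  have hφd : ∀ s, HasDerivAt φ (g' s - c) s := by
    intro s
    have h1 : HasDerivAt (fun x : ℝ => c * x) c s := by
      simpa using (hasDerivAt_id s).const_mul c
    exact (hg s).sub h1
  have hφdiff : Differentiable ℝ φ := fun s => (hφd s).differentiableAt
  have hmono : MonotoneOn φ (Set.Ici T) := by
    apply monotoneOn_of_deriv_nonneg (convex_Ici T) hφdiff.continuous.continuousOn
      hφdiff.differentiableOn
    intro x hx
    rw [(hφd x).deriv]
    rw [interior_Ici] at hx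
    have := hc x (le_of_lt hx)
    linarith
  have hmt := hmono self_mem_Ici (mem_Ici.mpr ht) ht
  have h2 : c * (t - T) = c * t - c * T := by ring
  simp only [hφdef] at hmt
  linarith

private lemma ivt_zero {g : ℝ → ℝ} (hg : Continuous g) {a b : ℝ} (ha : g a < 0) (hb : 0 < g b) :
    ∃ c, g c = 0 := by
  rcases le_total a b with hab | hab
  · obtain ⟨c, _, hc⟩ := intermediate_value_Icc hab hg.continuousOn ⟨ha.le, hb.le⟩
    exact ⟨c, hc⟩
  · obtain ⟨c, _, hc⟩ := intermediate_value_Icc' hab hg.continuousOn ⟨ha.le, hb.le⟩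
    exact ⟨c, hc⟩

private lemma side_lem (f u h u' : ℝ → ℝ)
    (hu : ∀ t, HasDerivAt u (u' t) t)
    (hu'd : ∀ t, HasDerivAt u' (-(f (u t))) t)
    (hpos : ∀ t, 0 < u' t)
    (henergy : ∀ t, h (u t) = -(u' t)^2 / 2)
    (hhc : Continuous h) (hfcont : Continuous f) :
    Tendsto u atTop atTop ∨
      ∃ L, (∀ t, u t < L) ∧ Tendsto u atTop (𝓝 L) ∧ h L = 0 ∧ f L = 0 := by
  have hSM : StrictMono u := strictMono_of_deriv_pos (fun x => by rw [(hu x).deriv]; exact hpos x)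
  have hmono : Monotone u := hSM.monotone
  by_cases hbdd : BddAbove (Set.range u)
  · right
    set L : ℝ := ⨆ t, u t with hLdef
    have htend : Tendsto u atTop (𝓝 L) := tendsto_atTop_ciSup hmono hbdd
    have hlt : ∀ t, u t < L := fun t =>
      lt_of_lt_of_le (hSM (lt_add_one t)) (le_ciSup hbdd (t + 1))
    have hsq : ∀ t, u' t = Real.sqrt (-2 * h (u t)) := by
      intro t
      rw [henergy t, show -2 * (-(u' t)^2 / 2) = (u' t)^2 by ring, Real.sqrt_sq (hpos t).le]
    have hhuL : Tendsto (fun t => h (u t)) atTop (𝓝 (h L)) := (hhc.tendsto L).comp htend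
    have htendu' : Tendsto u' atTop (𝓝 (Real.sqrt (-2 * h L))) := by
      have h1 : Tendsto (fun t => Real.sqrt (-2 * h (u t))) atTop (𝓝 (Real.sqrt (-2 * h L))) :=
        (Real.continuous_sqrt.tendsto _).comp (tendsto_const_nhds.mul hhuL)
      exact h1.congr (fun t => (hsq t).symm)
    have hhL : h L = 0 := by
      by_contra hne
      have hle : h L ≤ 0 := by
        have hh0 : ∀ t, h (u t) ≤ 0 := fun t => by
          rw [henergy t]
          have := sq_nonneg (u' t); linarith
        exact le_of_tendsto hhuL (Eventually.of_forall hh0)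
      have hlt0 : h L < 0 := lt_of_le_of_ne hle hne
      set c : ℝ := Real.sqrt (-2 * h L) with hcdef
      have hc0 : 0 < c := Real.sqrt_pos.mpr (by linarith)
      have hev : ∀ᶠ t in atTop, c / 2 ≤ u' t :=
        htendu'.eventually (eventually_ge_nhds (by linarith))
      obtain ⟨T, hT⟩ := hev.exists_forall_of_atTop
      have hgrow := growth_lem hu T (fun t ht => hT t ht)
      set t₀ : ℝ := T + 2 * (L - u T) / c + 1 with ht₀
      have hLu : u T < L := hlt T
      have hTt : T ≤ t₀ := by
        have hd : 0 ≤ 2 * (L - u T) / c := by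
          apply div_nonneg (by linarith) hc0.le
        simp only [ht₀]; linarith
      have hgr := hgrow t₀ hTt
      have h2 : c / 2 * (t₀ - T) = (L - u T) + c / 2 := by
        rw [ht₀]; field_simp; ring
      have hlt' := hlt t₀
      nlinarith
    refine ⟨L, hlt, htend, hhL, ?_⟩
    have htendu'0 : Tendsto u' atTop (𝓝 0) := by
      rw [hhL] at htendu'; simpa using htendu'
    by_contra hfL
    have hfuL : Tendsto (fun t => f (u t)) atTop (𝓝 (f L)) := (hfcont.tendsto L).comp htend
    rcases lt_or_gt_of_ne hfL with hneg | hposL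
    · have hev : ∀ᶠ t in atTop, -(f L) / 2 ≤ -(f (u t)) := by
        have h1 : ∀ᶠ t in atTop, f (u t) ≤ f L / 2 :=
          hfuL.eventually (eventually_le_nhds (by linarith))
        exact h1.mono (fun t ht => by linarith)
      obtain ⟨T, hT⟩ := hev.exists_forall_of_atTop
      have hgrow := growth_lem hu'd T (fun t ht => hT t ht)
      have hev2 : ∀ᶠ t in atTop, u' t < u' T + 1 :=
        htendu'0.eventually (eventually_lt_nhds (by linarith [hpos T]))
      obtain ⟨S, hS⟩ := hev2.exists_forall_of_atTop
      set t₂ : ℝ := max (T + 2 / (-(f L) / 2)) S with ht₂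
      have hTt : T ≤ t₂ := by
        have hflpos : 0 < -(f L) / 2 := by linarith
        have : 0 ≤ 2 / (-(f L) / 2) := by positivity
        calc T ≤ T + 2 / (-(f L) / 2) := by linarith
        _ ≤ t₂ := le_max_left _ _
      have hgr := hgrow t₂ hTt
      have hflpos : 0 < -(f L) / 2 := by linarith
      have ht2big : T + 2 / (-(f L) / 2) ≤ t₂ := le_max_left _ _
      have h2le : 2 ≤ -(f L) / 2 * (t₂ - T) := by
        have hle' : 2 / (-(f L) / 2) ≤ t₂ - T := by linarith
        calc (2:ℝ) = -(f L) / 2 * (2 / (-(f L) / 2)) := by field_simp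
        _ ≤ -(f L) / 2 * (t₂ - T) := mul_le_mul_of_nonneg_left hle' hflpos.le
      have hsmall := hS t₂ (le_max_right _ _)
      have hupos := hpos T
      linarith
    · have hev : ∀ᶠ t in atTop, f L / 2 ≤ f (u t) :=
        hfuL.eventually (eventually_ge_nhds (by linarith))
      obtain ⟨T, hT⟩ := hev.exists_forall_of_atTop
      have hnegd : ∀ t, HasDerivAt (fun s => -(u' s)) (f (u t)) t := by
        intro t; have h5 := (hu'd t).neg; simp only [neg_neg] at h5; exact h5
      have hgrow := growth_lem hnegd T (fun t ht => hT t ht)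
      set t₁ : ℝ := T + 2 * u' T / (f L) + 1 with ht₁
      have hTt : T ≤ t₁ := by
        have hd : 0 ≤ 2 * u' T / f L := by
          apply div_nonneg (by linarith [hpos T]) hposL.le
        simp only [ht₁]; linarith
      have hgr := hgrow t₁ hTt
      have h2 : f L / 2 * (t₁ - T) = u' T + f L / 2 := by
        rw [ht₁]; field_simp; ring
      have hp1 := hpos t₁
      nlinarith
  · exact Or.inl (tendsto_atTop_atTop_of_monotone' hmono hbdd)

private lemma aux_lem (f u h u' : ℝ → ℝ)
    (hfc : Coercive f)
    (hh : ∀ s, HasDerivAt h (f s) s)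
    (hu : ∀ t, HasDerivAt u (u' t) t)
    (hu'd : ∀ t, HasDerivAt u' (-(f (u t))) t)
    (hpos : ∀ t, 0 < u' t)
    (henergy : ∀ t, h (u t) = -(u' t)^2 / 2)
    (hfcont : Continuous f) : False := by
  have hhc : Continuous h := (Differentiable.continuous (fun s => (hh s).differentiableAt))
  have hucont : Continuous u := (Differentiable.continuous (fun t => (hu t).differentiableAt))
  have hmono : Monotone u :=
    (strictMono_of_deriv_pos (fun x => by rw [(hu x).deriv]; exact hpos x)).monotone
  -- h is negative at attained values
  have hneg_at : ∀ s : ℝ, (∃ t₀, u t₀ ≤ s) → (∃ t₁, s ≤ u t₁) → h s < 0 := by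
    rintro s ⟨t₀, h0⟩ ⟨t₁, h1⟩
    have hattain : ∃ t, u t = s := by
      rcases le_total t₀ t₁ with hle | hle
      · obtain ⟨t, _, ht⟩ := intermediate_value_Icc hle hucont.continuousOn ⟨h0, h1⟩
        exact ⟨t, ht⟩
      · have : u t₁ ≤ u t₀ := hmono hle
        exact ⟨t₀, le_antisymm (by linarith) (by linarith)⟩
    obtain ⟨t, ht⟩ := hattain
    rw [← ht, henergy t]
    have := hpos t; nlinarith
  -- top side
  have htop := side_lem f u h u' hu hu'd hpos henergy hhc hfcont
  -- bottom side via reflection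
  have hbot : Tendsto u atBot atBot ∨
      ∃ M, (∀ t, M < u t) ∧ Tendsto u atBot (𝓝 M) ∧ h M = 0 ∧ f M = 0 := by
    have hv : ∀ t, HasDerivAt (fun s => -u (-s)) (u' (-t)) t := by
      intro t
      have h1 : HasDerivAt (fun s : ℝ => u (-s)) (u' (-t) * (-1)) t :=
        (hu (-t)).comp t (hasDerivAt_neg t)
      have h5 := h1.neg; simp only [mul_neg, mul_one, neg_neg] at h5; exact h5
    have hv' : ∀ t, HasDerivAt (fun s => u' (-s))
        (-((fun y => -f (-y)) ((fun s => -u (-s)) t))) t := by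
      intro t
      have h1 : HasDerivAt (fun s : ℝ => u' (-s)) (-(f (u (-t))) * (-1)) t :=
        (hu'd (-t)).comp t (hasDerivAt_neg t)
      simpa using h1
    have hside := side_lem (fun y => -f (-y)) (fun s => -u (-s)) (fun y => h (-y))
      (fun s => u' (-s)) hv hv' (fun t => hpos (-t))
      (fun t => by simpa using henergy (-t))
      (hhc.comp continuous_neg) ((hfcont.comp continuous_neg).neg)
    rcases hside with hinf | ⟨L, hltL, htendL, hhL, hfL⟩
    · left
      have h1 : Tendsto (fun s => -u (-s)) atTop atTop := hinf
      have h2 : Tendsto (fun t : ℝ => -u (- -t)) atBot atTop := h1.comp tendsto_neg_atBot_atTop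
      have h3 : Tendsto (fun t : ℝ => -u t) atBot atTop := by simpa using h2
      exact (tendsto_neg_atTop_atBot.comp h3).congr (fun t => by simp)
    · right
      refine ⟨-L, fun t => ?_, ?_, by simpa using hhL, by
        have : -f (- L) = 0 := hfL
        linarith⟩
      · have := hltL (-t); simp at this; linarith
      · have h2 : Tendsto (fun s : ℝ => u (-s)) atTop (𝓝 (-L)) := by
          have := htendL.neg; simpa using this
        exact (h2.comp tendsto_neg_atBot_atTop).congr (fun t => by simp)
  -- case analysis
  obtain ⟨hz, hmid, hmax, hmin⟩ := hfc h hh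
  rcases htop with htopI | ⟨L, hltL, htendL, hhL, hfL⟩
  · rcases hbot with hbotI | ⟨M, hltM, htendM, hhM, hfM⟩
    · -- h < 0 everywhere, but has a zero
      have hall : ∀ s, h s < 0 := fun s =>
        hneg_at s ((hbotI.eventually_le_atBot s).exists) ((htopI.eventually_ge_atTop s).exists)
      obtain ⟨s, hs⟩ := hz ⟨u 0, hall (u 0)⟩
      exact absurd hs (ne_of_lt (hall s))
    · -- h M = 0, h < 0 on (M, ∞), f M = 0 contradicts clause 3
      refine hmax M hhM (fun s hs => hneg_at s ?_ ((htopI.eventually_ge_atTop s).exists)) hfM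
      obtain ⟨t, ht⟩ := (htendM.eventually (eventually_lt_nhds hs)).exists
      exact ⟨t, ht.le⟩
  · rcases hbot with hbotI | ⟨M, hltM, htendM, hhM, hfM⟩
    · refine hmin L hhL (fun s hs => hneg_at s ((hbotI.eventually_le_atBot s).exists) ?_) hfL
      obtain ⟨t, ht⟩ := (htendL.eventually (eventually_gt_nhds hs)).exists
      exact ⟨t, ht.le⟩
    · have hML : M < L := lt_trans (hltM 0) (hltL 0)
      refine hmid M L hML hhM hhL (fun s hs => hneg_at s ?_ ?_) ⟨hfM, hfL⟩
      · obtain ⟨t, ht⟩ := (htendM.eventually (eventually_lt_nhds hs.1)).exists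
        exact ⟨t, ht.le⟩
      · obtain ⟨t, ht⟩ := (htendL.eventually (eventually_gt_nhds hs.2)).exists
        exact ⟨t, ht.le⟩


/-- A nonconstant twice differentiable global solution of
`u'' + f(u) = 0` with `f` smooth and coercive has at least one critical point. -/
theorem obata_ode_coercive_exists_critical_point
    (f u : ℝ → ℝ) (hf : ContDiff ℝ (⊤ : ℕ∞) f) (hfc : Coercive f)
    (hu : Differentiable ℝ u) (hu' : Differentiable ℝ (deriv u))
    (hode : ∀ t : ℝ, deriv (deriv u) t + f (u t) = 0)
    (hnc : ∃ s t : ℝ, u s ≠ u t) :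
    ∃ t₀ : ℝ, deriv u t₀ = 0 := by
  by_contra hcon
  push_neg at hcon
  have hfcont : Continuous f := hf.continuous
  -- antiderivative of f
  set F : ℝ → ℝ := fun s => ∫ x in (0:ℝ)..s, f x with hFdef
  have hF : ∀ s, HasDerivAt F (f s) s := fun s =>
    intervalIntegral.integral_hasDerivAt_right (hfcont.intervalIntegrable 0 s)
      (hfcont.stronglyMeasurableAtFilter _ _) hfcont.continuousAt
  have hud : ∀ t, HasDerivAt u (deriv u t) t := fun t => (hu t).hasDerivAt
  have hd2 : ∀ t, HasDerivAt (deriv u) (-(f (u t))) t := by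
    intro t
    have h1 := (hu' t).hasDerivAt
    have h2 : deriv (deriv u) t = -(f (u t)) := by linarith [hode t]
    rwa [h2] at h1
  -- energy
  set E : ℝ → ℝ := fun t => (deriv u t)^2 / 2 + F (u t) with hEdef
  have hE : ∀ t, HasDerivAt E 0 t := by
    intro t
    have h1 : HasDerivAt (fun t => (deriv u t)^2 / 2)
        ((2 * deriv u t ^ 1 * (-(f (u t)))) / 2) t := ((hd2 t).pow 2).div_const 2
    have h2 : HasDerivAt (fun t => F (u t)) (f (u t) * deriv u t) t :=
      (hF (u t)).comp t (hud t)
    have h3 := h1.add h2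
    have h4 : (2 * deriv u t ^ 1 * (-(f (u t)))) / 2 + f (u t) * deriv u t = 0 := by ring
    rwa [h4] at h3
  have hconst : ∀ t, E t = E 0 := fun t =>
    is_const_of_deriv_eq_zero (fun x => (hE x).differentiableAt) (fun x => (hE x).deriv) t 0
  set h : ℝ → ℝ := fun s => F s - E 0 with hhdef
  have hh : ∀ s, HasDerivAt h (f s) s := fun s => (hF s).sub_const _
  have henergy : ∀ t, h (u t) = -(deriv u t)^2 / 2 := by
    intro t
    have := hconst t
    simp only [hhdef, hEdef] at this ⊢
    linarith
  rcases (hcon 0).lt_or_gt with hneg | hpos0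
  · -- deriv u < 0 everywhere
    have hallneg : ∀ t, deriv u t < 0 := by
      intro t
      by_contra hge
      push_neg at hge
      have hgt : 0 < deriv u t := lt_of_le_of_ne hge (Ne.symm (hcon t))
      obtain ⟨c, hc⟩ := ivt_zero hu'.continuous hneg hgt
      exact hcon c hc
    -- reflect time
    have hv : ∀ t, HasDerivAt (fun s => u (-s)) (-(deriv u (-t))) t := by
      intro t
      have h1 : HasDerivAt (fun s : ℝ => u (-s)) (deriv u (-t) * (-1)) t :=
        (hud (-t)).comp t (hasDerivAt_neg t)
      simpa using h1
    have hv' : ∀ t, HasDerivAt (fun s => -(deriv u (-s)))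
        (-(f ((fun s => u (-s)) t))) t := by
      intro t
      have h1 : HasDerivAt (fun s : ℝ => deriv u (-s)) (-(f (u (-t))) * (-1)) t :=
        (hd2 (-t)).comp t (hasDerivAt_neg t)
      have h2 := h1.neg
      simp only [mul_neg, mul_one, neg_neg] at h2; exact h2
    exact aux_lem f (fun s => u (-s)) h (fun s => -(deriv u (-s)))
      hfc hh hv hv' (fun t => by show (0:ℝ) < -(deriv u (-t)); linarith [hallneg (-t)])
      (fun t => by simpa [neg_sq] using henergy (-t)) hfcont
  · have hallpos : ∀ t, 0 < deriv u t := by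
      intro t
      by_contra hge
      push_neg at hge
      have hlt : deriv u t < 0 := lt_of_le_of_ne hge (hcon t)
      obtain ⟨c, hc⟩ := ivt_zero hu'.continuous hlt hpos0
      exact hcon c hc
    exact aux_lem f u h (deriv u) hfc hh hud hd2 hallpos henergy hfcont
end

section
/- Let f : ℝ → ℝ be smooth and degenerately coercive, and let u : ℝ → ℝ be a nonconstant twice differentiable function satisfying u''(t) + f(u(t)) = 0 for all t ∈ ℝ. Then u has precisely one critical point, i.e. there exists exactly one t₀ ∈ ℝ with u'(t₀) = 0. -/
open Set Filter Topology


/-- If `deriv g ≥ c` on `[T,∞)`, then `g` grows at least linearly. -/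
lemma aux_grow {g : ℝ → ℝ} (hg : Differentiable ℝ g) {T c : ℝ}
    (hc : ∀ t, T ≤ t → c ≤ deriv g t) {t : ℝ} (ht : T ≤ t) :
    g T + c * (t - T) ≤ g t := by
  have hφ : ∀ x : ℝ, HasDerivAt (fun s => g s - c * s) (deriv g x - c) x := by
    intro x
    exact (hg x).hasDerivAt.sub (by simpa using (hasDerivAt_id x).const_mul c)
  have hmono : MonotoneOn (fun s => g s - c * s) (Set.Ici T) := by
    apply monotoneOn_of_deriv_nonneg (convex_Ici T)
      (fun x _ => (hφ x).differentiableAt.continuousAt.continuousWithinAt)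
      (fun x _ => (hφ x).differentiableAt.differentiableWithinAt)
    intro x hx
    rw [interior_Ici] at hx
    rw [(hφ x).deriv]
    have := hc x (le_of_lt hx)
    linarith
  have := hmono (self_mem_Ici) (show t ∈ Set.Ici T from ht) ht
  simp only at this
  linarith

/-- Energy conservation: there is an antiderivative `h` of `f` with
`h (u t) = -(u' t)^2 / 2`. -/
lemma aux_energy (f u : ℝ → ℝ) (hfc : Continuous f)
    (hu : Differentiable ℝ u) (hu' : Differentiable ℝ (deriv u))
    (hode : ∀ t : ℝ, deriv (deriv u) t + f (u t) = 0) :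
    ∃ h : ℝ → ℝ, (∀ s : ℝ, HasDerivAt h (f s) s) ∧
      ∀ t : ℝ, h (u t) = -((deriv u t) ^ 2 / 2) := by
  set F : ℝ → ℝ := fun s => ∫ x in (u 0)..s, f x with hF
  have hFd : ∀ s : ℝ, HasDerivAt F (f s) s := by
    intro s
    exact intervalIntegral.integral_hasDerivAt_right
      (hfc.intervalIntegrable _ _)
      (hfc.stronglyMeasurableAtFilter _ _) hfc.continuousAt
  refine ⟨fun s => F s - (deriv u 0) ^ 2 / 2, fun s => (hFd s).sub_const _, ?_⟩
  have key : ∀ t : ℝ, F (u t) + (deriv u t) ^ 2 / 2 = F (u 0) + (deriv u 0) ^ 2 / 2 := by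
    have hG : ∀ t : ℝ, HasDerivAt (fun t => F (u t) + (deriv u t) ^ 2 / 2) 0 t := by
      intro t
      have h1 : HasDerivAt (fun t => F (u t)) (f (u t) * deriv u t) t :=
        (hFd (u t)).comp t (hu t).hasDerivAt
      have h2 : HasDerivAt (fun t => (deriv u t) ^ 2 / 2)
          (deriv u t * deriv (deriv u) t) t := by
        have := ((hu' t).hasDerivAt.fun_pow 2)
        have h3 := this.div_const 2
        refine h3.congr_deriv ?_
        ring_nf
      have := h1.add h2
      have hd2 : deriv (deriv u) t = -f (u t) := by linarith [hode t]
      have he : f (u t) * deriv u t + deriv u t * deriv (deriv u) t = 0 := by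
        rw [hd2]; ring
      rwa [he] at this
    intro t
    have : ∀ x y : ℝ, (fun t => F (u t) + (deriv u t) ^ 2 / 2) x
        = (fun t => F (u t) + (deriv u t) ^ 2 / 2) y := by
      apply is_const_of_deriv_eq_zero
      · exact fun x => (hG x).differentiableAt
      · exact fun x => (hG x).deriv
    exact this t 0
  intro t
  have := key t
  have h0 : F (u 0) = 0 := intervalIntegral.integral_same
  simp only
  rw [h0] at this
  linarith


/-- If the energy identity forces `(u')² = -2 h(u)`, `h(μ) = 0`, `f(μ) = 0`, and
`u t₀ = μ`, then `u ≡ μ` to the right of `t₀` (scalar Grönwall argument). -/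
lemma aux_stay_right (f h u : ℝ → ℝ) (hf : ContDiff ℝ (⊤ : ℕ∞) f)
    (hh : ∀ s : ℝ, HasDerivAt h (f s) s) (hu : Differentiable ℝ u)
    (hen : ∀ t : ℝ, (deriv u t) ^ 2 = -(2 * h (u t)))
    {μ t₀ : ℝ} (hfμ : f μ = 0) (hhμ : h μ = 0) (h0 : u t₀ = μ) :
    ∀ t : ℝ, t₀ ≤ t → u t = μ := by
  -- get a Lipschitz constant for f near μ
  have hf1 : ContDiffAt ℝ 1 f μ := (hf.of_le (by simp)).contDiffAt
  obtain ⟨K, s, hs, hK⟩ := hf1.exists_lipschitzOnWith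
  obtain ⟨δ₀, hδ₀, hball⟩ := Metric.mem_nhds_iff.1 hs
  set δ := δ₀ / 2 with hδ
  have hδpos : 0 < δ := by positivity
  have hsub : Icc (μ - δ) (μ + δ) ⊆ s := by
    intro x hx
    apply hball
    simp only [Metric.mem_ball, Real.dist_eq]
    rw [abs_lt]
    constructor <;> [linarith [hx.1]; linarith [hx.2]]
  -- |f| ≤ K |s - μ| on the interval
  have hfb : ∀ x ∈ Icc (μ - δ) (μ + δ), |f x| ≤ K * |x - μ| := by
    intro x hx
    have := hK.dist_le_mul x (hsub hx) μ (hsub ⟨by linarith, by linarith⟩)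
    rw [Real.dist_eq, Real.dist_eq, hfμ, sub_zero] at this
    exact this
  -- h ≥ -(K/2)(s-μ)² on the interval
  have hhb : ∀ x ∈ Icc (μ - δ) (μ + δ), -(K / 2 * (x - μ) ^ 2) ≤ h x := by
    intro x hx
    set φ : ℝ → ℝ := fun x => h x + K / 2 * (x - μ) ^ 2 with hφdef
    have hφ : ∀ x : ℝ, HasDerivAt φ (f x + K * (x - μ)) x := by
      intro x
      have h1 : HasDerivAt (fun x : ℝ => K / 2 * (x - μ) ^ 2) (K * (x - μ)) x := by
        have h2 : HasDerivAt (fun x : ℝ => (x - μ) ^ 2) (2 * (x - μ)) x := by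
          simpa using ((hasDerivAt_id x).sub_const μ).fun_pow 2
        have := h2.const_mul (K / 2 : ℝ)
        refine this.congr_deriv ?_
        ring
      exact (hh x).add h1
    suffices hsuff : 0 ≤ φ x by
      simp only [hφdef] at hsuff; linarith
    rcases le_total μ x with hc | hc
    · -- monotone on [μ, μ+δ]
      have hmono : MonotoneOn φ (Icc μ (μ + δ)) := by
        apply monotoneOn_of_deriv_nonneg (convex_Icc _ _)
          (fun y _ => (hφ y).differentiableAt.continuousAt.continuousWithinAt)
          (fun y _ => (hφ y).differentiableAt.differentiableWithinAt)
        intro y hy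
        rw [interior_Icc] at hy
        rw [(hφ y).deriv]
        have hy' : y ∈ Icc (μ - δ) (μ + δ) := ⟨by linarith [hy.1], le_of_lt hy.2⟩
        have := hfb y hy'
        have h3 : -(K * |y - μ|) ≤ f y := by
          have := neg_abs_le (f y)
          linarith
        have h4 : |y - μ| = y - μ := abs_of_nonneg (by linarith [hy.1])
        rw [h4] at h3
        linarith
      have := hmono ⟨le_refl μ, by linarith⟩ ⟨hc, hx.2⟩ hc
      have hφμ : φ μ = 0 := by simp [hφdef, hhμ]
      linarith
    · -- antitone on [μ-δ, μ]
      have hanti : AntitoneOn φ (Icc (μ - δ) μ) := by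
        apply antitoneOn_of_deriv_nonpos (convex_Icc _ _)
          (fun y _ => (hφ y).differentiableAt.continuousAt.continuousWithinAt)
          (fun y _ => (hφ y).differentiableAt.differentiableWithinAt)
        intro y hy
        rw [interior_Icc] at hy
        rw [(hφ y).deriv]
        have hy' : y ∈ Icc (μ - δ) (μ + δ) := ⟨le_of_lt hy.1, by linarith [hy.2]⟩
        have h3 : f y ≤ K * |y - μ| := le_trans (le_abs_self _) (hfb y hy')
        have h4 : |y - μ| = μ - y := by
          rw [abs_sub_comm]; exact abs_of_nonneg (by linarith [hy.2])
        rw [h4] at h3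
        linarith
      have := hanti ⟨hx.1, hc⟩ ⟨by linarith, le_refl μ⟩ hc
      have hφμ : φ μ = 0 := by simp [hφdef, hhμ]
      linarith
  -- the pointwise derivative bound where u stays in the interval
  have hKnn : (0 : ℝ) ≤ K := K.2
  have hderivb : ∀ t : ℝ, u t ∈ Icc (μ - δ) (μ + δ) →
      |deriv u t| ≤ Real.sqrt K * |u t - μ| := by
    intro t htmem
    have h1 : (deriv u t) ^ 2 ≤ K * (u t - μ) ^ 2 := by
      have := hhb _ htmem
      have h2 := hen t
      linarith
    have h3 : |deriv u t| = Real.sqrt ((deriv u t) ^ 2) := by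
      rw [Real.sqrt_sq_eq_abs]
    rw [h3]
    calc Real.sqrt ((deriv u t) ^ 2) ≤ Real.sqrt (K * (u t - μ) ^ 2) :=
          Real.sqrt_le_sqrt h1
      _ = Real.sqrt K * |u t - μ| := by
          rw [Real.sqrt_mul hKnn, Real.sqrt_sq_eq_abs]
  -- main continuity + Grönwall argument
  by_contra hcon
  push_neg at hcon
  obtain ⟨b, htb, hub⟩ := hcon
  have hbne : t₀ < b := by
    rcases lt_or_eq_of_le htb with h | h
    · exact h
    · exact absurd (h ▸ h0) hub
  set S : Set ℝ := {t | t ∈ Icc t₀ b ∧ u t ≠ μ} with hS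
  have hSne : S.Nonempty := ⟨b, ⟨le_of_lt hbne, le_refl b⟩, hub⟩
  have hSbdd : BddBelow S := ⟨t₀, fun x hx => hx.1.1⟩
  set c := sInf S with hc
  have hcmem : c ∈ Icc t₀ b := by
    constructor
    · exact le_csInf hSne fun x hx => hx.1.1
    · exact csInf_le hSbdd ⟨⟨le_of_lt hbne, le_refl b⟩, hub⟩
  have hucμ : u c = μ := by
    by_contra hne
    have hct₀ : t₀ < c := by
      rcases lt_or_eq_of_le hcmem.1 with h | h
      · exact h
      · exact absurd (h ▸ h0) hne
    -- continuity: u ≠ μ on a left-neighborhood of c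
    have : ∀ᶠ x in nhds c, u x ≠ μ := (hu.continuous.continuousAt).eventually_ne hne
    obtain ⟨ε, hε, hεne⟩ := Metric.eventually_nhds_iff.1 this
    set ε' := min (ε / 2) ((c - t₀) / 2) with hε'
    have hε'pos : 0 < ε' := by
      apply lt_min <;> [positivity; linarith]
    have hlow : c - ε' ∈ S := by
      constructor
      · constructor
        · have : ε' ≤ (c - t₀) / 2 := min_le_right _ _
          linarith
        · linarith [hcmem.2]
      · apply hεne
        rw [Real.dist_eq]
        have h1 : ε' ≤ ε / 2 := min_le_left _ _
        rw [abs_of_nonpos (by linarith)]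
        linarith
    have := csInf_le hSbdd hlow
    linarith
  have hcb : c < b := by
    rcases lt_or_eq_of_le hcmem.2 with h | h
    · exact h
    · exact absurd (h ▸ hucμ) hub
  -- continuity: u stays within δ of μ on [c, c+ρ]
  have : ∀ᶠ x in nhds c, |u x - μ| ≤ δ := by
    have hcont : ContinuousAt (fun x => |u x - μ|) c :=
      ((hu.continuous.sub continuous_const).abs).continuousAt
    have := hcont.eventually_le_const (show (fun x => |u x - μ|) c < δ by
      simp [hucμ, hδpos])
    exact this
  obtain ⟨ρ₀, hρ₀, hρball⟩ := Metric.eventually_nhds_iff.1 this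
  set ρ := min (ρ₀ / 2) (b - c) with hρ
  have hρpos : 0 < ρ := lt_min (by positivity) (by linarith)
  have hstay : ∀ t ∈ Icc c (c + ρ), u t ∈ Icc (μ - δ) (μ + δ) := by
    intro t ht
    have hd : dist t c < ρ₀ := by
      rw [Real.dist_eq, abs_of_nonneg (by linarith [ht.1])]
      have : ρ ≤ ρ₀ / 2 := min_le_left _ _
      linarith [ht.2]
    have := hρball hd
    rw [abs_le] at this
    constructor <;> linarith [this.1, this.2]
  -- Grönwall on [c, c+ρ]
  have hgron : ∀ t ∈ Icc c (c + ρ), ‖u t - μ‖ ≤ gronwallBound 0 (Real.sqrt K) 0 (t - c) := by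
    apply norm_le_gronwallBound_of_norm_deriv_right_le
      (f := fun t => u t - μ) (f' := fun t => deriv u t)
    · exact ((hu.continuous.sub continuous_const)).continuousOn
    · intro x _
      exact (((hu x).hasDerivAt.sub_const μ)).hasDerivWithinAt
    · simp [hucμ]
    · intro x hx
      have := hderivb x (hstay x ⟨hx.1, le_of_lt hx.2⟩)
      rw [Real.norm_eq_abs, Real.norm_eq_abs]
      simpa using this
  -- but S has points arbitrarily close to c, contradiction
  have hexists : ∃ x ∈ S, x < c + ρ := by
    by_contra hcon2
    push_neg at hcon2
    have : c + ρ ≤ c := le_csInf hSne hcon2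
    linarith
  obtain ⟨x, hxS, hxlt⟩ := hexists
  have hxc : c ≤ x := csInf_le hSbdd hxS
  have := hgron x ⟨hxc, le_of_lt hxlt⟩
  rw [gronwallBound_ε0_δ0] at this
  have : u x = μ := by
    have h1 : |u x - μ| ≤ 0 := by simpa [Real.norm_eq_abs] using this
    have := abs_nonneg (u x - μ)
    have : |u x - μ| = 0 := le_antisymm h1 this
    rw [abs_eq_zero] at this
    linarith
  exact hxS.2 this



/-- Endpoint analysis at the supremum for a strictly increasing global solution. -/
lemma aux_endpoint_top (f h u : ℝ → ℝ) (hfc : Continuous f)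
    (hh : ∀ s : ℝ, HasDerivAt h (f s) s) (hu : Differentiable ℝ u)
    (hu' : Differentiable ℝ (deriv u))
    (hode : ∀ t : ℝ, deriv (deriv u) t = -f (u t))
    (hen : ∀ t : ℝ, h (u t) = -((deriv u t) ^ 2 / 2))
    (hpos : ∀ t : ℝ, 0 < deriv u t)
    (hb : BddAbove (Set.range u)) :
    h (sSup (Set.range u)) = 0 ∧ f (sSup (Set.range u)) = 0 := by
  set β := sSup (Set.range u) with hβ
  have hmono : StrictMono u := strictMono_of_deriv_pos hpos
  have hlim : Tendsto u atTop (nhds β) := tendsto_atTop_ciSup hmono.monotone hb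
  have hub : ∀ t, u t < β :=
    fun t => lt_of_lt_of_le (hmono (lt_add_one t)) (le_csSup hb (mem_range_self _))
  have hconth : Continuous h := Differentiable.continuous (fun s => (hh s).differentiableAt)
  have hhu : Tendsto (fun t => h (u t)) atTop (nhds (h β)) :=
    (hconth.continuousAt.tendsto).comp hlim
  -- first claim : h β = 0
  have hβ0 : h β = 0 := by
    have hle : h β ≤ 0 := by
      apply le_of_tendsto hhu
      filter_upwards with t
      rw [hen t]
      have := sq_nonneg (deriv u t)
      linarith
    rcases lt_or_eq_of_le hle with hlt | heq
    · exfalso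
      -- u' tends to √(-2 h β) > 0
      have hsq : ∀ t, deriv u t = Real.sqrt (-(2 * h (u t))) := by
        intro t
        have h1 : (deriv u t) ^ 2 = -(2 * h (u t)) := by rw [hen t]; ring
        rw [← h1, Real.sqrt_sq (le_of_lt (hpos t))]
      have hlim' : Tendsto (fun t => deriv u t) atTop
          (nhds (Real.sqrt (-(2 * h β)))) := by
        have h2 : Tendsto (fun t => -(2 * h (u t))) atTop (nhds (-(2 * h β))) :=
          (hhu.const_mul 2).neg
        have h3 := (Real.continuous_sqrt.continuousAt.tendsto).comp h2
        rw [show (fun t => deriv u t) = fun t => Real.sqrt (-(2 * h (u t))) from funext hsq]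
        exact h3
      set c := Real.sqrt (-(2 * h β)) with hcdef
      have hcpos : 0 < c := Real.sqrt_pos.2 (by linarith)
      have hev : ∀ᶠ t in atTop, c / 2 ≤ deriv u t :=
        hlim'.eventually_const_le (by linarith)
      obtain ⟨T, hT⟩ := eventually_atTop.1 hev
      have hgrow := fun t ht => aux_grow hu (fun s hs => hT s hs) (T := T) (c := c / 2) (t := t) ht
      set t₁ := T + (β - u T) / (c / 2) + 1 with ht₁
      have ht₁T : T ≤ t₁ := by
        have : 0 ≤ (β - u T) / (c / 2) := by
          apply div_nonneg (by linarith [hub T]) (by linarith)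
        rw [ht₁]; linarith
      have := hgrow t₁ ht₁T
      have hcalc : c / 2 * (t₁ - T) = (β - u T) + c / 2 := by
        rw [ht₁]
        field_simp
        ring
      rw [hcalc] at this
      linarith [hub t₁]
    · exact heq
  refine ⟨hβ0, ?_⟩
  -- second claim : f β = 0
  by_contra hfβ
  have hfu : Tendsto (fun t => f (u t)) atTop (nhds (f β)) :=
    (hfc.continuousAt.tendsto).comp hlim
  rcases lt_or_gt_of_ne hfβ with hneg | hposβ
  · -- f β < 0 : u'' ≥ -f β / 2 > 0 eventually, u → ∞, contradiction
    have hev : ∀ᶠ t in atTop, f (u t) ≤ f β / 2 :=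
      hfu.eventually_le_const (by linarith)
    obtain ⟨T, hT⟩ := eventually_atTop.1 hev
    set c := -(f β) / 2 with hcdef
    have hcpos : 0 < c := by simp [hcdef]; linarith
    have hgrow1 : ∀ t, T ≤ t → deriv u T + c * (t - T) ≤ deriv u t := by
      intro t ht
      apply aux_grow hu' _ ht
      intro s hs
      rw [hode s]
      have := hT s hs
      simp [hcdef]; linarith
    set T₂ := max T (T + (1 - deriv u T) / c) with hT₂
    have hT₂T : T ≤ T₂ := le_max_left _ _
    have hone : ∀ t, T₂ ≤ t → 1 ≤ deriv u t := by
      intro t ht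
      have h1 : T ≤ t := le_trans hT₂T ht
      have h2 := hgrow1 t h1
      have h3 : (1 - deriv u T) / c ≤ t - T := by
        have := le_trans (le_max_right T (T + (1 - deriv u T) / c)) ht
        linarith
      have h4 : 1 - deriv u T ≤ c * (t - T) := by
        rw [div_le_iff₀ hcpos] at h3
        linarith [mul_comm c (t - T)]
      linarith
    have hgrow2 : ∀ t, T₂ ≤ t → u T₂ + 1 * (t - T₂) ≤ u t :=
      fun t ht => aux_grow hu (fun s hs => hone s hs) ht
    have := hgrow2 (T₂ + (β - u T₂) + 1) (by linarith [hub T₂])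
    have h5 := hub (T₂ + (β - u T₂) + 1)
    linarith
  · -- f β > 0 : u'' ≤ -f β / 2 < 0 eventually, u' → -∞, contradiction
    have hev : ∀ᶠ t in atTop, f β / 2 ≤ f (u t) :=
      hfu.eventually_const_le (by linarith)
    obtain ⟨T, hT⟩ := eventually_atTop.1 hev
    set c := f β / 2 with hcdef
    have hcpos : 0 < c := by simp [hcdef]; linarith
    have hgrow1 : ∀ t, T ≤ t → -(deriv u T) + c * (t - T) ≤ -(deriv u t) := by
      intro t ht
      apply aux_grow hu'.neg _ ht
      intro s hs
      rw [deriv.neg, hode s]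
      have := hT s hs
      simp [hcdef]; linarith
    set t₁ := T + (deriv u T) / c + 1 with ht₁
    have ht₁T : T ≤ t₁ := by
      have : 0 ≤ deriv u T / c := div_nonneg (le_of_lt (hpos T)) (le_of_lt hcpos)
      rw [ht₁]; linarith
    have := hgrow1 t₁ ht₁T
    have hcalc : c * (t₁ - T) = deriv u T + c := by
      rw [ht₁]; field_simp; ring
    rw [hcalc] at this
    linarith [hpos t₁]



lemma aux_endpoint_bot (f h u : ℝ → ℝ) (hfc : Continuous f)
    (hh : ∀ s : ℝ, HasDerivAt h (f s) s) (hu : Differentiable ℝ u)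
    (hu' : Differentiable ℝ (deriv u))
    (hode : ∀ t : ℝ, deriv (deriv u) t = -f (u t))
    (hen : ∀ t : ℝ, h (u t) = -((deriv u t) ^ 2 / 2))
    (hpos : ∀ t : ℝ, 0 < deriv u t)
    (hb : BddBelow (Set.range u)) :
    h (sInf (Set.range u)) = 0 ∧ f (sInf (Set.range u)) = 0 := by
  set w : ℝ → ℝ := fun t => -u (-t) with hw
  set g : ℝ → ℝ := fun x => -f (-x) with hg
  set H : ℝ → ℝ := fun x => h (-x) with hH
  have hgc : Continuous g := (hfc.comp continuous_neg).neg
  have hHd : ∀ s : ℝ, HasDerivAt H (g s) s := by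
    intro s
    have := (hh (-s)).comp s (hasDerivAt_neg s)
    refine this.congr_deriv ?_
    simp [hg]
  have hwd : Differentiable ℝ w := (hu.comp differentiable_neg).neg
  have hderw : ∀ t : ℝ, deriv w t = deriv u (-t) := by
    intro t
    have h1 : deriv w t = -(deriv (fun t => u (-t)) t) := deriv.neg
    rw [h1, deriv_comp_neg]
    ring
  have hwd' : Differentiable ℝ (deriv w) := by
    rw [show deriv w = fun t => deriv u (-t) from funext hderw]
    exact (hu'.comp differentiable_neg)
  have hodew : ∀ t : ℝ, deriv (deriv w) t = -g (w t) := by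
    intro t
    rw [show deriv w = fun t => deriv u (-t) from funext hderw]
    rw [deriv_comp_neg, hode (-t)]
    simp [hg, hw]
  have henw : ∀ t : ℝ, H (w t) = -((deriv w t) ^ 2 / 2) := by
    intro t
    rw [hderw]
    simp only [hH, hw, neg_neg]
    exact hen (-t)
  have hposw : ∀ t : ℝ, 0 < deriv w t := fun t => (hderw t) ▸ hpos (-t)
  set α := sInf (Set.range u) with hα
  have hlub : IsLUB (Set.range w) (-α) := by
    constructor
    · rintro x ⟨t, rfl⟩
      simp only [hw]
      have : α ≤ u (-t) := csInf_le hb (mem_range_self _)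
      linarith
    · intro b hbub
      have : ∀ t : ℝ, -b ≤ u t := by
        intro t
        have := hbub (mem_range_self (f := w) (-t))
        simp only [hw, neg_neg] at this
        linarith
      have : -b ≤ α := le_csInf (Set.range_nonempty u) (by rintro x ⟨t, rfl⟩; exact this t)
      linarith
  have hbw : BddAbove (Set.range w) := ⟨-α, hlub.1⟩
  have hsup : sSup (Set.range w) = -α := hlub.csSup_eq (Set.range_nonempty w)
  have := aux_endpoint_top g H w hgc hHd hwd hwd' hodew henw hposw hbw
  rw [hsup] at this
  obtain ⟨h1, h2⟩ := this
  simp only [hH, hg, neg_neg] at h1 h2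
  exact ⟨h1, by linarith⟩

/-- No strictly increasing global solution exists (for `h` satisfying coercivity). -/
lemma aux_no_increasing (f h u : ℝ → ℝ) (hfc : Continuous f)
    (hh : ∀ s : ℝ, HasDerivAt h (f s) s) (hu : Differentiable ℝ u)
    (hu' : Differentiable ℝ (deriv u))
    (hode : ∀ t : ℝ, deriv (deriv u) t = -f (u t))
    (hen : ∀ t : ℝ, h (u t) = -((deriv u t) ^ 2 / 2))
    (hpos : ∀ t : ℝ, 0 < deriv u t)
    (hc1 : (∃ s : ℝ, h s < 0) → ∃ s : ℝ, h s = 0)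
    (hc2 : ∀ μ ν : ℝ, μ < ν → h μ = 0 → h ν = 0 → (∀ s ∈ Set.Ioo μ ν, h s < 0) →
      ¬(f μ = 0 ∧ f ν = 0))
    (hc3 : ∀ μ : ℝ, h μ = 0 → (∀ s : ℝ, μ < s → h s < 0) → f μ ≠ 0)
    (hc4 : ∀ μ : ℝ, h μ = 0 → (∀ s : ℝ, s < μ → h s < 0) → f μ ≠ 0) : False := by
  have hmono : StrictMono u := strictMono_of_deriv_pos hpos
  -- values where h < 0 : everything strictly inside the range of u
  have hrange : ∀ s : ℝ, (∃ t1, u t1 < s) → (∃ t2, s < u t2) → ∃ r, u r = s := by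
    rintro s ⟨t1, ht1⟩ ⟨t2, ht2⟩
    have hmem : s ∈ Set.uIcc (u t1) (u t2) :=
      Set.mem_uIcc.2 (Or.inl ⟨le_of_lt ht1, le_of_lt ht2⟩)
    obtain ⟨r, _, hr⟩ := intermediate_value_uIcc (hu.continuous.continuousOn) hmem
    exact ⟨r, hr⟩
  have hneg : ∀ t : ℝ, h (u t) < 0 := by
    intro t
    rw [hen t]
    have := hpos t
    have : 0 < (deriv u t) ^ 2 := by positivity
    linarith
  by_cases hB : BddAbove (Set.range u) <;> by_cases hB' : BddBelow (Set.range u)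
  · -- both bounded
    set β := sSup (Set.range u) with hβ
    set α := sInf (Set.range u) with hα
    obtain ⟨hhβ, hfβ⟩ := aux_endpoint_top f h u hfc hh hu hu' hode hen hpos hB
    obtain ⟨hhα, hfα⟩ := aux_endpoint_bot f h u hfc hh hu hu' hode hen hpos hB'
    have hαβ : α < β := by
      have h1 : α ≤ u 0 := csInf_le hB' (mem_range_self _)
      have h2 : u 1 ≤ β := le_csSup hB (mem_range_self _)
      have := hmono (show (0:ℝ) < 1 by norm_num)
      linarith
    apply hc2 α β hαβ hhα hhβ _ ⟨hfα, hfβ⟩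
    intro s hs
    obtain ⟨y1, ⟨t1, rfl⟩, hlt1⟩ := exists_lt_of_csInf_lt (Set.range_nonempty u) hs.1
    obtain ⟨y2, ⟨t2, rfl⟩, hlt2⟩ := exists_lt_of_lt_csSup (Set.range_nonempty u) hs.2
    obtain ⟨r, hr⟩ := hrange s ⟨t1, hlt1⟩ ⟨t2, hlt2⟩
    rw [← hr]; exact hneg r
  · -- bounded above, unbounded below
    set β := sSup (Set.range u) with hβ
    obtain ⟨hhβ, hfβ⟩ := aux_endpoint_top f h u hfc hh hu hu' hode hen hpos hB
    apply hc4 β hhβ _ hfβ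
    intro s hs
    obtain ⟨y2, ⟨t2, rfl⟩, hlt2⟩ := exists_lt_of_lt_csSup (Set.range_nonempty u) hs
    obtain ⟨y, hy, hy'⟩ := not_bddBelow_iff.1 hB' s
    obtain ⟨t1, rfl⟩ := hy
    obtain ⟨r, hr⟩ := hrange s ⟨t1, hy'⟩ ⟨t2, hlt2⟩
    rw [← hr]; exact hneg r
  · -- bounded below, unbounded above
    set α := sInf (Set.range u) with hα
    obtain ⟨hhα, hfα⟩ := aux_endpoint_bot f h u hfc hh hu hu' hode hen hpos hB'
    apply hc3 α hhα _ hfα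
    intro s hs
    obtain ⟨y1, ⟨t1, rfl⟩, hlt1⟩ := exists_lt_of_csInf_lt (Set.range_nonempty u) hs
    obtain ⟨y, hy, hy'⟩ := not_bddAbove_iff.1 hB s
    obtain ⟨t2, rfl⟩ := hy
    obtain ⟨r, hr⟩ := hrange s ⟨t1, hlt1⟩ ⟨t2, hy'⟩
    rw [← hr]; exact hneg r
  · -- unbounded both ways : h < 0 everywhere
    obtain ⟨s, hs⟩ := hc1 ⟨u 0, hneg 0⟩
    obtain ⟨y1, hy1, hy1'⟩ := not_bddBelow_iff.1 hB' s
    obtain ⟨t1, rfl⟩ := hy1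
    obtain ⟨y2, hy2, hy2'⟩ := not_bddAbove_iff.1 hB s
    obtain ⟨t2, rfl⟩ := hy2
    obtain ⟨r, hr⟩ := hrange s ⟨t1, hy1'⟩ ⟨t2, hy2'⟩
    rw [← hr] at hs
    exact absurd hs (ne_of_lt (hneg r))

/-- A nonconstant twice differentiable global solution of
`u'' + f(u) = 0` with `f` smooth and degenerately coercive has precisely one
critical point. -/
theorem obata_ode_degenerately_coercive_unique_critical_point
    (f u : ℝ → ℝ) (hf : ContDiff ℝ (⊤ : ℕ∞) f) (hfc : DegeneratelyCoercive f)
    (hu : Differentiable ℝ u) (hu' : Differentiable ℝ (deriv u))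
    (hode : ∀ t : ℝ, deriv (deriv u) t + f (u t) = 0)
    (hnc : ∃ s t : ℝ, u s ≠ u t) :
    ∃! t₀ : ℝ, deriv u t₀ = 0 := by
  have hfC : Continuous f := hf.continuous
  obtain ⟨h, hh, hen⟩ := aux_energy f u hfC hu hu' hode
  have hode' : ∀ t : ℝ, deriv (deriv u) t = -f (u t) := fun t => by linarith [hode t]
  have hen2 : ∀ t : ℝ, (deriv u t) ^ 2 = -(2 * h (u t)) := fun t => by linarith [hen t]
  obtain ⟨hco, hdeg⟩ := hfc
  obtain ⟨c1, c2, c3, c4⟩ := hco h hh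
  -- Step 1 : at any critical point, f (u t₀) ≠ 0
  have hfne : ∀ t₀ : ℝ, deriv u t₀ = 0 → f (u t₀) ≠ 0 := by
    intro t₀ h0 hf0
    have hhμ : h (u t₀) = 0 := by
      have := hen t₀; rw [h0] at this; simpa using this
    have hright := aux_stay_right f h u hf hh hu hen2 hf0 hhμ rfl
    set v : ℝ → ℝ := fun t => u (-t) with hv
    have hvd : Differentiable ℝ v := hu.comp differentiable_neg
    have henv : ∀ t : ℝ, (deriv v t) ^ 2 = -(2 * h (v t)) := by
      intro t
      have h1 : deriv v t = -deriv u (-t) := deriv_comp_neg u t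
      rw [h1, neg_sq]
      exact hen2 (-t)
    have hleft := aux_stay_right f h v hf hh hvd henv hf0 hhμ
      (show v (-t₀) = u t₀ by simp [hv])
    obtain ⟨s, t, hst⟩ := hnc
    have hall : ∀ s : ℝ, u s = u t₀ := by
      intro s
      rcases le_total t₀ s with hle | hle
      · exact hright s hle
      · have := hleft (-s) (by linarith)
        simpa [hv] using this
    exact hst (by rw [hall s, hall t])
  -- Step 2 : existence of a critical point
  have hex : ∃ t₀ : ℝ, deriv u t₀ = 0 := by
    by_contra hnocrit
    push_neg at hnocrit
    have hsign : (∀ t : ℝ, 0 < deriv u t) ∨ (∀ t : ℝ, deriv u t < 0) := by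
      by_cases h1 : ∀ t : ℝ, 0 < deriv u t
      · exact Or.inl h1
      · push_neg at h1
        obtain ⟨t1, ht1⟩ := h1
        have ht1' : deriv u t1 < 0 := lt_of_le_of_ne ht1 (hnocrit t1)
        refine Or.inr fun t => ?_
        by_contra h2
        push_neg at h2
        have h2' : 0 < deriv u t := lt_of_le_of_ne h2 (Ne.symm (hnocrit t))
        have hmem : (0:ℝ) ∈ Set.uIcc (deriv u t1) (deriv u t) :=
          Set.mem_uIcc.2 (Or.inl ⟨le_of_lt ht1', le_of_lt h2'⟩)
        obtain ⟨r, _, hr⟩ := intermediate_value_uIcc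
          (hu'.continuous.continuousOn) hmem
        exact hnocrit r hr
    rcases hsign with hpos | hneg
    · exact aux_no_increasing f h u hfC hh hu hu' hode' hen hpos c1 c2 c3 c4
    · -- reflect : v = -u, g x = -f (-x), H x = h (-x)
      set v : ℝ → ℝ := fun t => -u t with hvdef
      set g : ℝ → ℝ := fun x => -f (-x) with hgdef
      set H : ℝ → ℝ := fun x => h (-x) with hHdef
      have hgC : Continuous g := (hfC.comp continuous_neg).neg
      have hHd : ∀ s : ℝ, HasDerivAt H (g s) s := by
        intro s
        have := (hh (-s)).comp s (hasDerivAt_neg s)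
        refine this.congr_deriv ?_
        simp [hgdef]
      have hvd : Differentiable ℝ v := hu.neg
      have hderv : ∀ t : ℝ, deriv v t = -(deriv u t) := fun t => deriv.neg
      have hv' : Differentiable ℝ (deriv v) := by
        rw [show deriv v = fun t => -(deriv u t) from funext hderv]
        exact hu'.neg
      have hodev : ∀ t : ℝ, deriv (deriv v) t = -g (v t) := by
        intro t
        rw [show deriv v = fun t => -(deriv u t) from funext hderv]
        have : deriv (fun t => -(deriv u t)) t = -(deriv (deriv u) t) := deriv.neg
        rw [this, hode' t]
        simp [hgdef, hvdef]
      have henv : ∀ t : ℝ, H (v t) = -((deriv v t) ^ 2 / 2) := by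
        intro t
        rw [hderv t]
        simp only [hHdef, hvdef, neg_neg, neg_sq]
        exact hen t
      have hposv : ∀ t : ℝ, 0 < deriv v t := by
        intro t; rw [hderv t]; linarith [hneg t]
      have gc1 : (∃ s : ℝ, H s < 0) → ∃ s : ℝ, H s = 0 := by
        rintro ⟨s, hs⟩
        obtain ⟨z, hz⟩ := c1 ⟨-s, hs⟩
        exact ⟨-z, by simpa [hHdef] using hz⟩
      have gc2 : ∀ μ ν : ℝ, μ < ν → H μ = 0 → H ν = 0 →
          (∀ s ∈ Set.Ioo μ ν, H s < 0) → ¬(g μ = 0 ∧ g ν = 0) := by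
        rintro μ ν hlt hμ hν hnegs ⟨ha, hb⟩
        apply c2 (-ν) (-μ) (by linarith) (by simpa [hHdef] using hν)
          (by simpa [hHdef] using hμ)
        · intro s hs
          have := hnegs (-s) ⟨by linarith [hs.2], by linarith [hs.1]⟩
          simpa [hHdef] using this
        · exact ⟨by simpa [hgdef, neg_eq_zero] using hb,
            by simpa [hgdef, neg_eq_zero] using ha⟩
      have gc3 : ∀ μ : ℝ, H μ = 0 → (∀ s : ℝ, μ < s → H s < 0) → g μ ≠ 0 := by
        intro μ hμ hnegs
        have := c4 (-μ) (by simpa [hHdef] using hμ)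
          (fun s hs => by simpa [hHdef] using hnegs (-s) (by linarith))
        simpa [hgdef, neg_eq_zero] using this
      have gc4 : ∀ μ : ℝ, H μ = 0 → (∀ s : ℝ, s < μ → H s < 0) → g μ ≠ 0 := by
        intro μ hμ hnegs
        have := c3 (-μ) (by simpa [hHdef] using hμ)
          (fun s hs => by simpa [hHdef] using hnegs (-s) (by linarith))
        simpa [hgdef, neg_eq_zero] using this
      exact aux_no_increasing g H v hgC hHd hvd hv' hodev henv hposv gc1 gc2 gc3 gc4
  -- Step 3 : isolation of critical points
  have hiso : ∀ t₀ : ℝ, deriv u t₀ = 0 →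
      ∃ ε > 0, ∀ t : ℝ, |t - t₀| < ε → t ≠ t₀ → deriv u t ≠ 0 := by
    intro t₀ h0
    have hD : deriv (deriv u) t₀ ≠ 0 := by
      rw [hode' t₀]
      simpa using hfne t₀ h0
    have hslope := hasDerivAt_iff_tendsto_slope.1 (hu' t₀).hasDerivAt
    have hev : ∀ᶠ t in nhdsWithin t₀ {t₀}ᶜ, slope (deriv u) t₀ t ≠ 0 :=
      hslope.eventually_ne hD
    rw [eventually_nhdsWithin_iff] at hev
    obtain ⟨ε, hε, hb⟩ := Metric.eventually_nhds_iff.1 hev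
    refine ⟨ε, hε, fun t ht hne h0' => ?_⟩
    have hmem : t ∈ ({t₀}ᶜ : Set ℝ) := by simpa using hne
    have := hb (show dist t t₀ < ε by rwa [Real.dist_eq]) hmem
    apply this
    rw [slope_def_field, h0', h0]
    simp
  -- Step 4 : no two critical points
  have huniq : ∀ a b : ℝ, deriv u a = 0 → deriv u b = 0 → a < b → False := by
    intro a b ha0 hb0 hab
    obtain ⟨ε, hε, hisoa⟩ := hiso a ha0
    set m := min ε (b - a) with hm
    have hm0 : 0 < m := lt_min hε (by linarith)
    have hmε : m ≤ ε := min_le_left _ _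
    have hmb : a + m ≤ b := by
      have := min_le_right ε (b - a); rw [hm]; linarith
    set SS := {t : ℝ | deriv u t = 0} ∩ Set.Icc (a + m) b with hSS
    have hSSclosed : IsClosed SS :=
      (isClosed_eq hu'.continuous continuous_const).inter isClosed_Icc
    have hSSne : SS.Nonempty := ⟨b, hb0, hmb, le_refl b⟩
    have hSSbdd : BddBelow SS := ⟨a, fun x hx => by linarith [hx.2.1]⟩
    have hcmem := hSSclosed.csInf_mem hSSne hSSbdd
    set c := sInf SS with hcdef
    have hc0 : deriv u c = 0 := hcmem.1
    have hac : a < c := by linarith [hcmem.2.1]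
    have hcb : c ≤ b := hcmem.2.2
    have hno : ∀ t ∈ Set.Ioo a c, deriv u t ≠ 0 := by
      intro t ht
      by_cases hcase : t < a + m
      · apply hisoa t _ (ne_of_gt ht.1)
        rw [abs_of_pos (by linarith [ht.1])]
        linarith
      · intro h0'
        have htm : t ∈ SS := ⟨h0', ⟨not_lt.1 hcase, le_trans (le_of_lt ht.2) hcb⟩⟩
        have := csInf_le hSSbdd htm
        rw [← hcdef] at this
        linarith [ht.2]
    -- sign of u' on (a, c)
    set d := (a + c) / 2 with hd
    have hdmem : d ∈ Set.Ioo a c := ⟨by rw [hd]; linarith, by rw [hd]; linarith⟩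
    have hsame : ∀ t ∈ Set.Ioo a c, (0 < deriv u d → 0 < deriv u t) ∧
        (deriv u d < 0 → deriv u t < 0) := by
      intro t ht
      constructor <;> intro hsgn <;> by_contra hcon <;> push_neg at hcon
      · have ht' : deriv u t < 0 := lt_of_le_of_ne hcon (hno t ht)
        have hmem : (0:ℝ) ∈ Set.uIcc (deriv u t) (deriv u d) :=
          Set.mem_uIcc.2 (Or.inl ⟨le_of_lt ht', le_of_lt hsgn⟩)
        obtain ⟨r, hrmem, hr⟩ := intermediate_value_uIcc
          (hu'.continuous.continuousOn) hmem
        have hrIoo : r ∈ Set.Ioo a c := by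
          have hsub : Set.uIcc t d ⊆ Set.Ioo a c := by
            rw [Set.uIcc_eq_union]
            rintro x (hx | hx)
            · exact ⟨lt_of_lt_of_le ht.1 hx.1, lt_of_le_of_lt hx.2 hdmem.2⟩
            · exact ⟨lt_of_lt_of_le hdmem.1 hx.1, lt_of_le_of_lt hx.2 ht.2⟩
          exact hsub hrmem
        exact hno r hrIoo hr
      · have ht' : 0 < deriv u t := lt_of_le_of_ne hcon (Ne.symm (hno t ht))
        have hmem : (0:ℝ) ∈ Set.uIcc (deriv u d) (deriv u t) :=
          Set.mem_uIcc.2 (Or.inl ⟨le_of_lt hsgn, le_of_lt ht'⟩)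
        obtain ⟨r, hrmem, hr⟩ := intermediate_value_uIcc
          (hu'.continuous.continuousOn) hmem
        have hrIoo : r ∈ Set.Ioo a c := by
          have hsub : Set.uIcc d t ⊆ Set.Ioo a c := by
            rw [Set.uIcc_eq_union]
            rintro x (hx | hx)
            · exact ⟨lt_of_lt_of_le hdmem.1 hx.1, lt_of_le_of_lt hx.2 ht.2⟩
            · exact ⟨lt_of_lt_of_le ht.1 hx.1, lt_of_le_of_lt hx.2 hdmem.2⟩
          exact hsub hrmem
        exact hno r hrIoo hr
    have hha : h (u a) = 0 := by
      have := hen a; rw [ha0] at this; simpa using this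
    have hhc : h (u c) = 0 := by
      have := hen c; rw [hc0] at this; simpa using this
    rcases lt_or_gt_of_ne (hno d hdmem) with hdneg | hdpos
    · -- u' < 0 on (a, c) : u strictly decreasing on [a, c]
      have hanti : StrictAntiOn u (Set.Icc a c) := by
        apply strictAntiOn_of_deriv_neg (convex_Icc a c) hu.continuous.continuousOn
        intro x hx
        rw [interior_Icc] at hx
        exact (hsame x hx).2 hdneg
      have hμν : u c < u a := hanti ⟨le_refl a, le_of_lt hac⟩
        ⟨le_of_lt hac, le_refl c⟩ hac
      have hnegmid : ∀ s ∈ Set.Ioo (u c) (u a), h s < 0 := by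
        intro s hs
        have hsub : Set.Icc (u c) (u a) ⊆ u '' Set.Icc a c :=
          intermediate_value_Icc' (le_of_lt hac) hu.continuous.continuousOn
        obtain ⟨r, hrIcc, hr⟩ := hsub ⟨le_of_lt hs.1, le_of_lt hs.2⟩
        have hra : r ≠ a := fun hre => by rw [hre] at hr; exact ne_of_lt hs.2 hr.symm
        have hrc : r ≠ c := fun hre => by
          rw [hre] at hr; exact ne_of_gt hs.1 hr.symm
        have hrIoo : r ∈ Set.Ioo a c :=
          ⟨lt_of_le_of_ne hrIcc.1 (Ne.symm hra), lt_of_le_of_ne hrIcc.2 hrc⟩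
        have hne := hno r hrIoo
        rw [← hr, hen r]
        have : (0:ℝ) < (deriv u r) ^ 2 :=
          lt_of_le_of_ne (sq_nonneg _) (Ne.symm (pow_ne_zero 2 hne))
        linarith
      have := hdeg h hh (u c) (u a) hμν hhc hha hnegmid
      rcases mul_eq_zero.1 this with h' | h'
      · exact hfne c hc0 h'
      · exact hfne a ha0 h'
    · -- u' > 0 on (a, c) : u strictly increasing on [a, c]
      have hmono : StrictMonoOn u (Set.Icc a c) := by
        apply strictMonoOn_of_deriv_pos (convex_Icc a c) hu.continuous.continuousOn
        intro x hx
        rw [interior_Icc] at hx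
        exact (hsame x hx).1 hdpos
      have hμν : u a < u c := hmono ⟨le_refl a, le_of_lt hac⟩
        ⟨le_of_lt hac, le_refl c⟩ hac
      have hnegmid : ∀ s ∈ Set.Ioo (u a) (u c), h s < 0 := by
        intro s hs
        have hsub : Set.Icc (u a) (u c) ⊆ u '' Set.Icc a c :=
          intermediate_value_Icc (le_of_lt hac) hu.continuous.continuousOn
        obtain ⟨r, hrIcc, hr⟩ := hsub ⟨le_of_lt hs.1, le_of_lt hs.2⟩
        have hra : r ≠ a := fun hre => by rw [hre] at hr; exact ne_of_gt hs.1 hr.symm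
        have hrc : r ≠ c := fun hre => by rw [hre] at hr; exact ne_of_lt hs.2 hr.symm
        have hrIoo : r ∈ Set.Ioo a c :=
          ⟨lt_of_le_of_ne hrIcc.1 (Ne.symm hra), lt_of_le_of_ne hrIcc.2 hrc⟩
        have hne := hno r hrIoo
        rw [← hr, hen r]
        have : (0:ℝ) < (deriv u r) ^ 2 :=
          lt_of_le_of_ne (sq_nonneg _) (Ne.symm (pow_ne_zero 2 hne))
        linarith
      have := hdeg h hh (u a) (u c) hμν hha hhc hnegmid
      rcases mul_eq_zero.1 this with h' | h'
      · exact hfne a ha0 h'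
      · exact hfne c hc0 h'
  obtain ⟨t₀, ht₀⟩ := hex
  refine ⟨t₀, ht₀, fun y hy => ?_⟩
  rcases lt_trichotomy y t₀ with hlt | heq | hgt
  · exact (huniq y t₀ hy ht₀ hlt).elim
  · exact heq
  · exact (huniq t₀ y ht₀ hy hgt).elim
end

section
/- Let f : ℝ → ℝ be smooth and nondegenerately coercive, and let u : ℝ → ℝ be a nonconstant twice differentiable function satisfying u''(t) + f(u(t)) = 0 for all t ∈ ℝ. If u'(t₀) = 0 for some t₀, then there exists t₁ > t₀ with u'(t₁) = 0. -/
open Filter Set Topology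

private lemma ndc_neg {f : ℝ → ℝ} (hfc : NondegeneratelyCoercive f) :
    NondegeneratelyCoercive (fun s => -f (-s)) := by
  intro h' hh' c hc
  have hh1 : ∀ s : ℝ, HasDerivAt (fun s => h' (-s)) (f s) s := by
    intro s
    have := (hh' (-s)).comp s (hasDerivAt_neg s)
    simpa [Function.comp_def] using this
  obtain ⟨a, b, h1, h2, h3, h4, h5, h6, h7⟩ := hfc _ hh1 (-c) (by simpa using hc)
  refine ⟨-b, -a, by linarith, by linarith, by simpa using h4, by simpa using h3, ?_,
    by simpa using h7, by simpa using h6⟩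
  intro s hs
  have := h5 (-s) ⟨by linarith [hs.2], by linarith [hs.1]⟩
  simpa using this

private lemma obata_key (f u : ℝ → ℝ) (hfcont : Continuous f)
    (hfc : NondegeneratelyCoercive f)
    (hu : Differentiable ℝ u) (hu' : Differentiable ℝ (deriv u))
    (hode : ∀ t : ℝ, deriv (deriv u) t + f (u t) = 0)
    (t₀ : ℝ) (hcrit : deriv u t₀ = 0)
    (hpos : ∀ t, t₀ < t → 0 < deriv u t) : False := by
  set g := deriv u with hgdef
  set H : ℝ → ℝ := fun x => ∫ s in (0:ℝ)..x, f s with hHdef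
  have hH : ∀ x : ℝ, HasDerivAt H (f x) x := fun x =>
    (hfcont.integral_hasStrictDerivAt 0 x).hasDerivAt
  set h : ℝ → ℝ := fun s => H s - H (u t₀) with hhdef
  have hh : ∀ s : ℝ, HasDerivAt h (f s) s := fun s => (hH s).sub_const _
  -- energy conservation
  have hEderiv : ∀ t : ℝ, HasDerivAt (fun t => g t ^ 2 / 2 + h (u t)) 0 t := by
    intro t
    have hg1 : HasDerivAt g (deriv g t) t := (hu' t).hasDerivAt
    have h1 : HasDerivAt (fun t => g t ^ 2 / 2) (2 * g t ^ 1 * deriv g t / 2) t :=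
      (hg1.pow 2).div_const 2
    have h2 : HasDerivAt (fun t => h (u t)) (f (u t) * g t) t := by
      have := (hh (u t)).comp t (hu t).hasDerivAt
      exact this
    have h3 := h1.add h2
    refine h3.congr_deriv ?_
    have h4 := hode t
    have : deriv g t = deriv (deriv u) t := by rw [hgdef]
    linear_combination (g t) * h4
  have hconst : ∀ t : ℝ, g t ^ 2 / 2 + h (u t) = 0 := by
    intro t
    have hd : Differentiable ℝ (fun t => g t ^ 2 / 2 + h (u t)) :=
      fun s => (hEderiv s).differentiableAt
    have hc0 := is_const_of_deriv_eq_zero hd (fun s => (hEderiv s).deriv) t t₀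
    rw [hc0]
    have hg0 : g t₀ = 0 := hcrit
    simp [hg0, hhdef]
  have henergy : ∀ t : ℝ, h (u t) = -(g t ^ 2 / 2) := fun t => by linarith [hconst t]
  -- apply coercivity at c = u (t₀+1)
  have hc : h (u (t₀ + 1)) < 0 := by
    have := hpos (t₀ + 1) (by linarith)
    rw [henergy]; nlinarith
  obtain ⟨a, b, hac, hcb, ha0, hb0, hneg, hfa, hfb⟩ := hfc h hh (u (t₀ + 1)) hc
  -- u stays below b after t₀
  have hne : ∀ s, t₀ < s → u s ≠ b := by
    intro s hs he
    have h1 := henergy s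
    rw [he, hb0] at h1
    have := hpos s hs
    nlinarith
  have hub : ∀ t, t₀ < t → u t < b := by
    intro t ht
    rcases lt_or_ge (u t) b with h1 | h1
    · exact h1
    exfalso
    have hbt : b < u t := lt_of_le_of_ne h1 fun e => hne t ht e.symm
    have hmem : b ∈ Set.uIcc (u (t₀ + 1)) (u t) :=
      Set.mem_uIcc.mpr (Or.inl ⟨hcb.le, hbt.le⟩)
    obtain ⟨s, hs, hus⟩ := intermediate_value_uIcc hu.continuous.continuousOn hmem
    have hsgt : t₀ < s := by
      rcases Set.mem_uIcc.mp hs with ⟨h2, _⟩ | ⟨h2, _⟩ <;> linarith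
    exact hne s hsgt hus
  -- u is monotone on [t₀, ∞), bounded, so converges
  have humono : MonotoneOn u (Set.Ici t₀) := by
    apply monotoneOn_of_deriv_nonneg (convex_Ici t₀) hu.continuous.continuousOn
      (fun x _ => (hu x).differentiableWithinAt)
    intro x hx
    rw [interior_Ici] at hx
    exact (hpos x hx).le
  set w : ℝ → ℝ := fun t => u (max t t₀) with hwdef
  have hwmono : Monotone w := fun s t hst =>
    humono (Set.mem_Ici.mpr (le_max_right _ _)) (Set.mem_Ici.mpr (le_max_right _ _)) (max_le_max hst le_rfl)
  have hwle : ∀ t, w t ≤ max b (u t₀) := by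
    intro t
    rcases eq_or_lt_of_le (le_max_right t t₀) with he | hlt
    · rw [hwdef]; simp only [← he]; exact le_max_right _ _
    · exact le_trans (hub _ hlt).le (le_max_left _ _)
  have hbdd : BddAbove (Set.range w) := ⟨max b (u t₀), by rintro x ⟨t, rfl⟩; exact hwle t⟩
  set L := ⨆ t, w t with hLdef
  have hwL : Tendsto w atTop (𝓝 L) := tendsto_atTop_ciSup hwmono hbdd
  have huL : Tendsto u atTop (𝓝 L) := by
    apply Filter.Tendsto.congr' _ hwL
    filter_upwards [eventually_ge_atTop t₀] with t ht
    rw [hwdef]; simp [max_eq_left ht]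
  have hLle : L ≤ b := by
    apply le_of_tendsto huL
    filter_upwards [eventually_gt_atTop t₀] with t ht
    exact (hub t ht).le
  have hcleL : u (t₀ + 1) ≤ L := by
    have h1 : w (t₀ + 1) ≤ L := le_ciSup hbdd (t₀ + 1)
    have h2 : (t₀ + 1) ⊔ t₀ = t₀ + 1 := max_eq_left (by linarith)
    simpa [hwdef, h2] using h1
  have hhcont : Continuous h := by
    apply continuous_iff_continuousAt.mpr
    exact fun s => (hh s).continuousAt
  have hhuL : Tendsto (fun t => h (u t)) atTop (𝓝 (h L)) := (hhcont.tendsto L).comp huL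
  have hgsqL : Tendsto (fun t => g t ^ 2) atTop (𝓝 (-2 * h L)) := by
    have h1 : Tendsto (fun t => -2 * h (u t)) atTop (𝓝 (-2 * h L)) := hhuL.const_mul _
    apply h1.congr
    intro t; rw [henergy t]; ring
  have hhL0 : h L ≤ 0 :=
    le_of_tendsto hhuL (Eventually.of_forall fun t => by
      rw [henergy t]; nlinarith [sq_nonneg (g t)])
  rcases eq_or_lt_of_le hhL0 with hL0 | hLneg
  · -- h L = 0, so L = b, and g → 0 while g' → -f b ≠ 0: contradiction
    have haL : a < L := lt_of_lt_of_le hac hcleL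
    have hLb : L = b := by
      rcases eq_or_lt_of_le hLle with he | hlt
      · exact he
      · exact absurd hL0 (ne_of_lt (hneg L ⟨haL, hlt⟩))
    have hgsq0 : Tendsto (fun t => g t ^ 2) atTop (𝓝 0) := by
      have : -2 * h L = 0 := by rw [hL0]; ring
      rwa [this] at hgsqL
    have hg0 : Tendsto g atTop (𝓝 0) := by
      have h1 : Tendsto (fun t => Real.sqrt (g t ^ 2)) atTop (𝓝 0) := by
        simpa using hgsq0.sqrt
      apply Filter.Tendsto.congr' _ h1
      filter_upwards [eventually_gt_atTop t₀] with t ht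
      exact Real.sqrt_sq (hpos t ht).le
    have hfbL : Tendsto (fun t => deriv g t) atTop (𝓝 (-f b)) := by
      have h1 : Tendsto (fun t => f (u t)) atTop (𝓝 (f b)) := by
        have := (hfcont.tendsto L).comp huL
        rwa [hLb] at this
      apply h1.neg.congr
      intro t
      have h4 := hode t
      have : deriv g t = deriv (deriv u) t := by rw [hgdef]
      linarith
    set ε := |f b| with hε
    have hεpos : 0 < ε := abs_pos.mpr hfb
    have hev1 : ∀ᶠ t in atTop, |g t| < ε / 4 := by
      have := hg0.eventually (Metric.ball_mem_nhds (0 : ℝ) (by positivity : (0:ℝ) < ε / 4))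
      simpa [Real.dist_eq] using this
    have hev2 : ∀ᶠ t in atTop, |deriv g t - -f b| < ε / 2 := by
      have := hfbL.eventually (Metric.ball_mem_nhds (-f b) (by positivity : (0:ℝ) < ε / 2))
      simpa [Real.dist_eq] using this
    obtain ⟨T, hT⟩ := Filter.eventually_atTop.mp (hev1.and hev2)
    obtain ⟨ξ, hξ, hξeq⟩ := exists_hasDerivAt_eq_slope g (deriv g)
      (show T < T + 1 by linarith) hu'.continuous.continuousOn
      (fun x _ => (hu' x).hasDerivAt)
    have h1 := (hT T le_rfl).1
    have h2 := (hT (T + 1) (by linarith)).1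
    have h3 := (hT ξ hξ.1.le).2
    rw [show T + 1 - T = (1:ℝ) by ring, div_one] at hξeq
    have e1 : |(-f b)| = ε := by rw [hε, abs_neg]
    have e2 : |(-f b)| - |deriv g ξ| ≤ |deriv g ξ - -f b| := by
      have := abs_sub_abs_le_abs_sub (-f b) (deriv g ξ)
      rwa [abs_sub_comm] at this
    have e3 : |deriv g ξ| = |g (T + 1) - g T| := by rw [hξeq]
    have e4 : |g (T + 1) - g T| ≤ |g (T + 1)| + |g T| := by
      rw [sub_eq_add_neg]
      exact (abs_add_le _ _).trans (by rw [abs_neg])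
    linarith
  · -- h L < 0 : speed bounded below, u escapes past b
    have hev : ∀ᶠ t in atTop, -h L < g t ^ 2 :=
      hgsqL.eventually (eventually_gt_nhds (by linarith))
    obtain ⟨T, hT⟩ := Filter.eventually_atTop.mp (hev.and (eventually_gt_atTop t₀))
    set δ := Real.sqrt (-h L) with hδ
    have hδpos : 0 < δ := Real.sqrt_pos.mpr (by linarith)
    have hδsq : δ ^ 2 = -h L := Real.sq_sqrt (by linarith)
    have hglb : ∀ t, T ≤ t → δ < g t := by
      intro t ht
      obtain ⟨h1, h2⟩ := hT t ht
      have hg0 : 0 ≤ g t := (hpos t h2).le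
      nlinarith
    have hT0 : t₀ < T := (hT T le_rfl).2
    set t1 := T + (b - u T) / δ + 1 with ht1
    have hbu : u T < b := hub T hT0
    have hTt1 : T < t1 := by
      have := div_pos (by linarith : (0:ℝ) < b - u T) hδpos
      rw [ht1]; linarith
    obtain ⟨ξ, hξ, hξeq⟩ := exists_hasDerivAt_eq_slope u g hTt1
      hu.continuous.continuousOn (fun x _ => (hu x).hasDerivAt)
    have hgξ : δ < g ξ := hglb ξ hξ.1.le
    have h3 : u t1 - u T = g ξ * (t1 - T) := by
      rw [hξeq, div_mul_cancel₀ _ (ne_of_gt (show (0:ℝ) < t1 - T by linarith))]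
    have h4 : δ * (t1 - T) = (b - u T) + δ := by
      rw [ht1]
      field_simp
      ring
    have h5 : u t1 < b := hub t1 (by linarith)
    nlinarith [mul_lt_mul_of_pos_right hgξ (show (0:ℝ) < t1 - T by linarith)]

open Filter Set Topology in
/-- For a nonconstant twice differentiable global solution of
`u'' + f(u) = 0` with `f` smooth and nondegenerately coercive, every critical
point is followed by a later critical point. -/
theorem obata_ode_nondegenerately_coercive_second_critical_point
    (f u : ℝ → ℝ) (hf : ContDiff ℝ (⊤ : ℕ∞) f) (hfc : NondegeneratelyCoercive f)
    (hu : Differentiable ℝ u) (hu' : Differentiable ℝ (deriv u))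
    (hode : ∀ t : ℝ, deriv (deriv u) t + f (u t) = 0)
    (hnc : ∃ s t : ℝ, u s ≠ u t)
    (t₀ : ℝ) (hcrit : deriv u t₀ = 0) :
    ∃ t₁ : ℝ, t₀ < t₁ ∧ deriv u t₁ = 0 := by
  by_contra hcon
  push_neg at hcon
  have hfcont := hf.continuous
  have hsign : (∀ t, t₀ < t → 0 < deriv u t) ∨ (∀ t, t₀ < t → deriv u t < 0) := by
    by_cases hp : ∀ t, t₀ < t → 0 < deriv u t
    · exact Or.inl hp
    push_neg at hp
    obtain ⟨t₂, ht₂, ht₂le⟩ := hp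
    have ht₂neg : deriv u t₂ < 0 := lt_of_le_of_ne ht₂le (hcon t₂ ht₂)
    right
    intro t ht
    rcases lt_or_ge (deriv u t) 0 with h1 | h1
    · exact h1
    exfalso
    have h1' : 0 < deriv u t := lt_of_le_of_ne h1 (Ne.symm (hcon t ht))
    have hmem : (0:ℝ) ∈ Set.uIcc (deriv u t₂) (deriv u t) :=
      Set.mem_uIcc.mpr (Or.inl ⟨ht₂neg.le, h1'.le⟩)
    obtain ⟨s, hs, hus⟩ := intermediate_value_uIcc hu'.continuous.continuousOn hmem
    have hsgt : t₀ < s := by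
      rcases Set.mem_uIcc.mp hs with ⟨h2, _⟩ | ⟨h2, _⟩ <;> linarith
    exact hcon s hsgt hus
  rcases hsign with hp | hn
  · exact absurd (obata_key f u hfcont hfc hu hu' hode t₀ hcrit hp) not_false
  · have hdn : (deriv fun t => -u t) = fun t => -deriv u t := funext fun t => deriv.neg
    have hu2' : Differentiable ℝ (deriv fun t => -u t) := by
      rw [hdn]; exact hu'.neg
    have hode2 : ∀ t : ℝ, deriv (deriv fun t => -u t) t +
        (fun s => -f (-s)) ((fun t => -u t) t) = 0 := by
      intro t
      have h2 : deriv (deriv fun t => -u t) t = -deriv (deriv u) t := by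
        rw [hdn]; exact deriv.neg
      simp only [h2, neg_neg]
      have := hode t
      linarith
    have hcrit2 : (deriv fun t => -u t) t₀ = 0 := by
      rw [hdn]; simp [hcrit]
    have hpos2 : ∀ t, t₀ < t → 0 < (deriv fun t => -u t) t := by
      intro t ht
      rw [hdn]
      simpa using hn t ht
    exact absurd (obata_key (fun s => -f (-s)) (fun t => -u t)
      (by continuity) (ndc_neg hfc) hu.neg hu2' hode2 t₀ hcrit2 hpos2) not_false
end

section
/- Let f : ℝ → ℝ be smooth and let u : ℝ → ℝ be twice differentiable with u''(t) + f(u(t)) = 0 for all t ∈ ℝ. If u'(t₀) = u'(t₁) = 0 for some t₀ < t₁, then u is periodic with period 2(t₁ − t₀), i.e. u(t + 2(t₁ − t₀)) = u(t) for all t ∈ ℝ. -/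
open Set Metric

/-- A smooth map is Lipschitz on every closed ball. -/
lemma obata_aux_lipschitzOnBall (F : ℝ × ℝ → ℝ × ℝ) (hF : ContDiff ℝ (⊤ : ℕ∞) F) (R : ℝ) :
    ∃ K : NNReal, LipschitzOnWith K F (closedBall (0 : ℝ × ℝ) R) := by
  have hcont : ContinuousOn (fderiv ℝ F) (closedBall (0 : ℝ × ℝ) R) :=
    (hF.continuous_fderiv (by simp)).continuousOn
  obtain ⟨C, hC⟩ := (isCompact_closedBall (0 : ℝ × ℝ) R).exists_bound_of_continuousOn hcont
  refine ⟨C.toNNReal, (convex_closedBall _ _).lipschitzOnWith_of_nnnorm_fderiv_le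
    (fun x _ => (hF.differentiable (by simp)).differentiableAt) (fun x hx => ?_)⟩
  have h1 : ‖fderiv ℝ F x‖ ≤ C := hC x hx
  have : ‖fderiv ℝ F x‖₊ = Real.toNNReal ‖fderiv ℝ F x‖ := by
    simp [Real.toNNReal_eq_nnnorm_of_nonneg (norm_nonneg _)]
  rw [this]
  exact Real.toNNReal_le_toNNReal h1

/-- Global uniqueness for the ODE `y' = F(y)` with smooth `F`. -/
lemma obata_aux_unique (F : ℝ × ℝ → ℝ × ℝ) (hF : ContDiff ℝ (⊤ : ℕ∞) F)
    (y z : ℝ → ℝ × ℝ)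
    (hy : ∀ t, HasDerivAt y (F (y t)) t)
    (hz : ∀ t, HasDerivAt z (F (z t)) t)
    (a : ℝ) (hyz : y a = z a) : ∀ t, y t = z t := by
  have hyc : Continuous y := continuous_iff_continuousAt.2 fun t => (hy t).continuousAt
  have hzc : Continuous z := continuous_iff_continuousAt.2 fun t => (hz t).continuousAt
  -- uniqueness on any compact interval [p, q]
  have key : ∀ p q : ℝ, p ≤ q → y p = z p → Set.EqOn y z (Icc p q) := by
    intro p q hpq h0
    obtain ⟨Cy, hCy⟩ := isCompact_Icc.exists_bound_of_continuousOn (hyc.continuousOn (s := Icc p q))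
    obtain ⟨Cz, hCz⟩ := isCompact_Icc.exists_bound_of_continuousOn (hzc.continuousOn (s := Icc p q))
    set R : ℝ := max Cy Cz with hR
    obtain ⟨K, hK⟩ := obata_aux_lipschitzOnBall F hF R
    have hmemy : ∀ s ∈ Icc p q, y s ∈ closedBall (0 : ℝ × ℝ) R := fun s hs => by
      rw [mem_closedBall_zero_iff]; exact (hCy s hs).trans (le_max_left _ _)
    have hmemz : ∀ s ∈ Icc p q, z s ∈ closedBall (0 : ℝ × ℝ) R := fun s hs => by
      rw [mem_closedBall_zero_iff]; exact (hCz s hs).trans (le_max_right _ _)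
    exact ODE_solution_unique_of_mem_Icc_right
      (v := fun _ => F) (s := fun _ => closedBall (0 : ℝ × ℝ) R) (fun _ _ => hK)
      hyc.continuousOn (fun s _ => (hy s).hasDerivWithinAt)
      (fun s hs => hmemy s (Ico_subset_Icc_self hs))
      hzc.continuousOn (fun s _ => (hz s).hasDerivWithinAt)
      (fun s hs => hmemz s (Ico_subset_Icc_self hs)) h0
  have keyl : ∀ p q : ℝ, p ≤ q → y q = z q → Set.EqOn y z (Icc p q) := by
    intro p q hpq h0
    obtain ⟨Cy, hCy⟩ := isCompact_Icc.exists_bound_of_continuousOn (hyc.continuousOn (s := Icc p q))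
    obtain ⟨Cz, hCz⟩ := isCompact_Icc.exists_bound_of_continuousOn (hzc.continuousOn (s := Icc p q))
    set R : ℝ := max Cy Cz with hR
    obtain ⟨K, hK⟩ := obata_aux_lipschitzOnBall F hF R
    have hmemy : ∀ s ∈ Icc p q, y s ∈ closedBall (0 : ℝ × ℝ) R := fun s hs => by
      rw [mem_closedBall_zero_iff]; exact (hCy s hs).trans (le_max_left _ _)
    have hmemz : ∀ s ∈ Icc p q, z s ∈ closedBall (0 : ℝ × ℝ) R := fun s hs => by
      rw [mem_closedBall_zero_iff]; exact (hCz s hs).trans (le_max_right _ _)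
    exact ODE_solution_unique_of_mem_Icc_left
      (v := fun _ => F) (s := fun _ => closedBall (0 : ℝ × ℝ) R) (fun _ _ => hK)
      hyc.continuousOn (fun s _ => (hy s).hasDerivWithinAt)
      (fun s hs => hmemy s (Ioc_subset_Icc_self hs))
      hzc.continuousOn (fun s _ => (hz s).hasDerivWithinAt)
      (fun s hs => hmemz s (Ioc_subset_Icc_self hs)) h0
  intro t
  rcases le_total a t with h | h
  · exact key a t h hyz (right_mem_Icc.2 h)
  · exact keyl t a h hyz (left_mem_Icc.2 h)

/-- A twice differentiable global solution of `u'' + f(u) = 0` with two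
critical points `t₀ < t₁` is periodic with period `2(t₁ − t₀)`. -/
theorem obata_ode_two_critical_points_periodic
    (f u : ℝ → ℝ) (hf : ContDiff ℝ (⊤ : ℕ∞) f)
    (hu : Differentiable ℝ u) (hu' : Differentiable ℝ (deriv u))
    (hode : ∀ t : ℝ, deriv (deriv u) t + f (u t) = 0)
    (t₀ t₁ : ℝ) (hlt : t₀ < t₁) (hc₀ : deriv u t₀ = 0) (hc₁ : deriv u t₁ = 0) :
    ∀ t : ℝ, u (t + 2 * (t₁ - t₀)) = u t := by
  set F : ℝ × ℝ → ℝ × ℝ := fun p => (p.2, -f p.1) with hF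
  have hFc : ContDiff ℝ (⊤ : ℕ∞) F := contDiff_snd.prodMk (hf.comp contDiff_fst).neg
  set y : ℝ → ℝ × ℝ := fun t => (u t, deriv u t) with hy
  have hyd : ∀ t, HasDerivAt y (F (y t)) t := by
    intro t
    have h1 : HasDerivAt u (deriv u t) t := (hu t).hasDerivAt
    have h2 : HasDerivAt (deriv u) (deriv (deriv u) t) t := (hu' t).hasDerivAt
    have h3 : deriv (deriv u) t = -f (u t) := by linarith [hode t]
    rw [h3] at h2
    exact h1.prodMk h2
  -- reflection about a critical point c
  have refl : ∀ c : ℝ, deriv u c = 0 → ∀ t, u (2 * c - t) = u t := by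
    intro c hc t
    set z : ℝ → ℝ × ℝ := fun t => (u (2 * c - t), -deriv u (2 * c - t)) with hz
    have hzd : ∀ t, HasDerivAt z (F (z t)) t := by
      intro t
      have hg : HasDerivAt (fun s : ℝ => 2 * c - s) (-1) t := by
        simpa using (hasDerivAt_id' (x := t)).const_sub (2 * c)
      have h1 : HasDerivAt (fun s => u (2 * c - s)) (deriv u (2 * c - t) * (-1)) t :=
        HasDerivAt.comp t ((hu _).hasDerivAt) hg
      have h2 : HasDerivAt (fun s => deriv u (2 * c - s))
          (deriv (deriv u) (2 * c - t) * (-1)) t :=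
        HasDerivAt.comp t ((hu' _).hasDerivAt) hg
      have h3 : deriv (deriv u) (2 * c - t) = -f (u (2 * c - t)) := by
        linarith [hode (2 * c - t)]
      have h2' : HasDerivAt (fun s => -deriv u (2 * c - s)) _ t := h2.neg
      rw [h3] at h2'
      have := h1.prodMk h2'
      convert this using 2 <;> ring
    have h2c : 2 * c - c = c := by ring
    have hinit : y c = z c := by
      simp only [hy, hz, h2c, hc, neg_zero]
    have := obata_aux_unique F hFc y z hyd hzd c hinit t
    have h1 : u t = u (2 * c - t) := congrArg Prod.fst this
    exact h1.symm
  intro t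
  have e1 : u (2 * t₀ - t) = u t := refl t₀ hc₀ t
  have e2 : u (2 * t₁ - (2 * t₀ - t)) = u (2 * t₀ - t) := refl t₁ hc₁ (2 * t₀ - t)
  have e3 : 2 * t₁ - (2 * t₀ - t) = t + 2 * (t₁ - t₀) := by ring
  rw [← e3, e2, e1]
end

section
/- Let f : ℝ → ℝ be smooth and nondegenerately coercive, and let u : ℝ → ℝ be a nonconstant twice differentiable function satisfying u''(t) + f(u(t)) = 0 for all t ∈ ℝ. Then u is periodic: there exists p > 0 with u(t + p) = u(t) for all t ∈ ℝ. -/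
namespace ObataAux
open Set Filter Topology

lemma ev_right_lt {g : ℝ → ℝ} {x c : ℝ} (hg : HasDerivAt g c x) (hc : c < 0) :
    ∃ d, x < d ∧ ∀ t, x < t → t < d → g t < g x := by
  have hs := hasDerivAt_iff_tendsto_slope.mp hg
  have h2 : ∀ᶠ t in 𝓝[>] x, slope g x t < 0 :=
    (hs.mono_left (nhdsWithin_mono x fun t ht => ne_of_gt ht)).eventually_lt_const hc
  rcases mem_nhdsGT_iff_exists_Ioo_subset.mp h2 with ⟨d, hd, hsub⟩
  refine ⟨d, hd, fun t ht1 ht2 => ?_⟩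
  have h3 : slope g x t < 0 := hsub ⟨ht1, ht2⟩
  rw [slope_def_field] at h3
  rcases div_neg_iff.mp h3 with ⟨h4, h5⟩ | ⟨h4, h5⟩
  · linarith
  · linarith

lemma ev_right_gt {g : ℝ → ℝ} {x c : ℝ} (hg : HasDerivAt g c x) (hc : 0 < c) :
    ∃ d, x < d ∧ ∀ t, x < t → t < d → g x < g t := by
  rcases ev_right_lt hg.neg (neg_neg_iff_pos.mpr hc) with ⟨d, hd, h⟩
  exact ⟨d, hd, fun t ht1 ht2 => by have := h t ht1 ht2; simpa using this⟩

lemma ev_left_gt {g : ℝ → ℝ} {x c : ℝ} (hg : HasDerivAt g c x) (hc : c < 0) :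
    ∃ d, d < x ∧ ∀ t, d < t → t < x → g x < g t := by
  have hk : HasDerivAt (fun t => g (-t)) (c * (-1)) (-x) := by
    have := HasDerivAt.comp (-x) (by simpa using hg) (hasDerivAt_neg (-x))
    simpa [Function.comp_def] using this
  rcases ev_right_gt hk (by linarith) with ⟨d, hd, h⟩
  refine ⟨-d, by linarith, fun t ht1 ht2 => ?_⟩
  have := h (-t) (by linarith) (by linarith)
  simpa using this

lemma ev_left_lt {g : ℝ → ℝ} {x c : ℝ} (hg : HasDerivAt g c x) (hc : 0 < c) :
    ∃ d, d < x ∧ ∀ t, d < t → t < x → g t < g x := by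
  rcases ev_left_gt hg.neg (by linarith) with ⟨d, hd, h⟩
  exact ⟨d, hd, fun t ht1 ht2 => by have := h t ht1 ht2; simpa using this⟩

lemma crossing {w : ℝ → ℝ} (hw : Continuous w) {α β b : ℝ} (hαβ : α < β)
    (h1 : w α ≤ b) (h2 : b < w β) :
    ∃ τ, α ≤ τ ∧ τ < β ∧ w τ = b ∧ ∀ t, τ < t → t ≤ β → b < w t := by
  set S := Icc α β ∩ w ⁻¹' (Iic b) with hS
  have hne : S.Nonempty := ⟨α, ⟨le_refl α, le_of_lt hαβ⟩, h1⟩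
  have hbdd : BddAbove S := ⟨β, fun t ht => ht.1.2⟩
  set τ := sSup S with hτdef
  have hclosed : IsClosed S := (isClosed_Icc).inter (isClosed_Iic.preimage hw)
  have hτS : τ ∈ S := hclosed.csSup_mem hne hbdd
  have hub : ∀ t ∈ S, t ≤ τ := fun t ht => le_csSup hbdd ht
  have hτβ : τ < β := lt_of_le_of_ne hτS.1.2 (by
    intro h; have : w τ ≤ b := hτS.2; rw [h] at this; linarith)
  have hgt : ∀ t, τ < t → t ≤ β → b < w t := by
    intro t ht1 ht2
    by_contra hle
    push_neg at hle
    exact absurd (hub t ⟨⟨le_trans hτS.1.1 (le_of_lt ht1), ht2⟩, hle⟩) (not_le.mpr ht1)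
  have hwτ : w τ = b := by
    have hle2 : w τ ≤ b := hτS.2
    rcases lt_or_eq_of_le hle2 with hlt | heq
    · exfalso
      have hev : ∀ᶠ t in 𝓝[>] τ, w t < b :=
        (hw.continuousAt.eventually_lt_const hlt).filter_mono nhdsWithin_le_nhds
      have hIoo : Ioo τ β ∈ 𝓝[>] τ := Ioo_mem_nhdsGT_of_mem ⟨le_refl τ, hτβ⟩
      rcases (hev.and (eventually_of_mem hIoo fun t ht => ht)).exists with ⟨t, hlt', hmem⟩
      exact absurd (hgt t hmem.1 (le_of_lt hmem.2)) (not_lt.mpr (le_of_lt hlt'))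
    · exact heq
  exact ⟨τ, hτS.1.1, hτβ, hwτ, hgt⟩

lemma not_cross_upward {u : ℝ → ℝ} (hu : Differentiable ℝ u)
    {b t₀ : ℝ} (ht₀ : u t₀ < b)
    (hder0 : ∀ τ, u τ = b → deriv u τ = 0)
    (hder2 : ∀ τ, u τ = b → ∃ c, c < 0 ∧ HasDerivAt (deriv u) c τ) :
    ∀ s, u s ≤ b := by
  have hcont : Continuous u := hu.continuous
  intro s
  by_contra hgt
  push_neg at hgt
  rcases lt_trichotomy t₀ s with hts | hts | hts
  · rcases crossing hcont hts (le_of_lt ht₀) hgt with ⟨τ, _, hτs, hτb, hab⟩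
    rcases hder2 τ hτb with ⟨c, hc, hder⟩
    rcases ev_right_lt hder hc with ⟨d, hd, hneg⟩
    have hmin : τ < min d s := lt_min hd hτs
    set t' := (τ + min d s)/2 with ht'
    have ht'1 : τ < t' := by rw [ht']; linarith
    have ht'2 : t' < min d s := by rw [ht']; linarith
    have hanti : StrictAntiOn u (Icc τ t') := by
      apply strictAntiOn_of_deriv_neg (convex_Icc τ t') (hcont.continuousOn)
      intro x hx
      rw [interior_Icc] at hx
      have := hneg x hx.1 (lt_of_lt_of_le (lt_of_lt_of_le hx.2 (le_of_lt ht'2)) (min_le_left _ _))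
      rwa [hder0 τ hτb] at this
    have h1 : u t' < u τ := hanti ⟨le_refl τ, le_of_lt ht'1⟩ ⟨le_of_lt ht'1, le_refl t'⟩ ht'1
    have h2 : b < u t' := hab t' ht'1 (le_of_lt (lt_of_lt_of_le ht'2 (min_le_right _ _)))
    rw [hτb] at h1; linarith
  · rw [hts] at ht₀; linarith
  · have hw : Continuous (fun t => u (-t)) := hcont.comp continuous_neg
    rcases crossing hw (neg_lt_neg hts) (by simpa using le_of_lt ht₀) (by simpa using hgt) with
      ⟨τ, _, hτs, hτb, hab⟩
    set r := -τ with hr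
    have hur : u r = b := by simpa [hr] using hτb
    have hsr : s < r := by rw [hr]; linarith
    rcases hder2 r hur with ⟨c, hc, hder⟩
    rcases ev_left_gt hder hc with ⟨d, hd, hpos⟩
    have hmax : max d s < r := max_lt hd hsr
    set t' := (max d s + r)/2 with ht'
    have ht'1 : max d s < t' := by rw [ht']; linarith
    have ht'2 : t' < r := by rw [ht']; linarith
    have hmono : StrictMonoOn u (Icc t' r) := by
      apply strictMonoOn_of_deriv_pos (convex_Icc t' r) (hcont.continuousOn)
      intro x hx
      rw [interior_Icc] at hx
      have := hpos x (lt_of_le_of_lt (le_max_left d s) (lt_trans ht'1 hx.1)) hx.2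
      rwa [hder0 r hur] at this
    have h1 : u t' < u r := hmono ⟨le_refl t', le_of_lt ht'2⟩ ⟨le_of_lt ht'2, le_refl r⟩ ht'2
    have h2 : b < u t' := by
      have := hab (-t') (by rw [hr] at ht'2; linarith)
        (by have : s ≤ max d s := le_max_right d s; linarith)
      simpa using this
    rw [hur] at h1; linarith

lemma confine {f u h : ℝ → ℝ} (hu : Differentiable ℝ u) (hu' : Differentiable ℝ (deriv u))
    (hode : ∀ t, deriv (deriv u) t = -f (u t))
    (hen : ∀ t, h (u t) = -(deriv u t)^2/2)
    {a b t₀ : ℝ} (ha0 : h a = 0) (hb0 : h b = 0) (hta : a < u t₀) (htb : u t₀ < b)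
    (hfa : f a < 0) (hfb : 0 < f b) :
    ∀ t, a ≤ u t ∧ u t ≤ b := by
  have hder0 : ∀ τ b', h b' = 0 → u τ = b' → deriv u τ = 0 := by
    intro τ b' hb' hub'
    have := hen τ
    rw [hub', hb'] at this
    have h2 : (deriv u τ)^2 = 0 := by linarith
    exact pow_eq_zero_iff two_ne_zero |>.mp h2
  have hupper : ∀ s, u s ≤ b := by
    apply not_cross_upward hu htb
    · intro τ hτ; exact hder0 τ b hb0 hτ
    · intro τ hτ
      refine ⟨-f b, by linarith, ?_⟩
      have h1 : HasDerivAt (deriv u) (deriv (deriv u) τ) τ := (hu' τ).hasDerivAt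
      rwa [hode τ, hτ] at h1
  have hlower : ∀ s, a ≤ u s := by
    have hnegb : ∀ s, (fun t => -u t) s ≤ -a := by
      apply not_cross_upward hu.neg (show -u t₀ < -a by linarith)
      · intro τ hτ
        have h' : -u τ = -a := hτ
        have huτ : u τ = a := neg_inj.mp h'
        have hd : deriv (-u) τ = -deriv u τ := deriv.neg
        rw [hd, hder0 τ a ha0 huτ, neg_zero]
      · intro τ hτ
        have h' : -u τ = -a := hτ
        have huτ : u τ = a := neg_inj.mp h'
        refine ⟨f a, hfa, ?_⟩
        rw [deriv.neg']
        have h1 : HasDerivAt (fun t => -(deriv u t)) (-(deriv (deriv u) τ)) τ :=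
          ((hu' τ).hasDerivAt).neg
        rwa [hode τ, huτ, neg_neg] at h1
    intro s
    have h1 := hnegb s
    have h2 : -u s ≤ -a := h1
    linarith
  exact fun t => ⟨hlower t, hupper t⟩

lemma no_pos_ray {f u h : ℝ → ℝ} (hfcont : Continuous f)
    (hu : Differentiable ℝ u) (hu' : Differentiable ℝ (deriv u))
    (hode : ∀ t, deriv (deriv u) t = -f (u t))
    (hh : ∀ s, HasDerivAt h (f s) s)
    (hen : ∀ t, h (u t) = -(deriv u t)^2/2)
    {a b : ℝ} (ha0 : h a = 0) (hb0 : h b = 0)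
    (hneg : ∀ s, a < s → s < b → h s < 0) (hfb : 0 < f b)
    (hrange : ∀ t, a ≤ u t ∧ u t ≤ b)
    {T : ℝ} (hpos : ∀ t, T ≤ t → 0 < deriv u t) : False := by
  have hhd : Differentiable ℝ h := fun s => (hh s).differentiableAt
  have hmono : StrictMonoOn u (Ici T) :=
    strictMonoOn_of_deriv_pos (convex_Ici T) hu.continuous.continuousOn
      (fun x hx => hpos x (le_of_lt (by rwa [interior_Ici] at hx)))
  set w := fun t => u (max t T) with hw
  have hwmono : Monotone w := fun s t hst =>
    hmono.monotoneOn (mem_Ici.mpr (le_max_right s T)) (mem_Ici.mpr (le_max_right t T))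
      (max_le_max hst le_rfl)
  have hbdd : BddAbove (range w) := ⟨b, by rintro y ⟨t, rfl⟩; exact (hrange _).2⟩
  have htendw : Tendsto w atTop (𝓝 (⨆ i, w i)) := tendsto_atTop_ciSup hwmono hbdd
  set L := ⨆ i, w i with hL
  have htendu : Tendsto u atTop (𝓝 L) := by
    apply htendw.congr'
    filter_upwards [eventually_ge_atTop T] with t ht
    rw [hw]; simp only [max_eq_left ht]
  have hLb : L ≤ b := ciSup_le fun i => (hrange _).2
  have hTa : a < u T := by
    have h1 : h (u T) < 0 := by
      rw [hen T]; have := hpos T le_rfl; nlinarith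
    rcases lt_or_eq_of_le (hrange T).1 with h2 | h2
    · exact h2
    · rw [← h2, ha0] at h1; linarith
  have hTL : u T ≤ L := by
    have h1 : w T ≤ L := le_ciSup hbdd T
    have h2 : w T = u T := by rw [hw]; simp
    linarith
  have haL : a < L := lt_of_lt_of_le hTa hTL
  have hab : a < b := lt_of_lt_of_le haL hLb
  have htendh : Tendsto (fun t => h (u t)) atTop (𝓝 (h L)) :=
    (hhd.continuous.tendsto L).comp htendu
  have hhL : h L ≤ 0 := le_of_tendsto htendh (by
    filter_upwards with t
    rw [hen t]; nlinarith [sq_nonneg (deriv u t)])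
  have htendd : Tendsto (deriv u) atTop (𝓝 (Real.sqrt (-2 * h L))) := by
    have hcomp : Continuous fun x => Real.sqrt (-2 * h x) :=
      Real.continuous_sqrt.comp (continuous_const.mul hhd.continuous)
    apply Tendsto.congr' _ ((hcomp.tendsto L).comp htendu)
    filter_upwards [eventually_ge_atTop T] with t ht
    have h1 : -2 * h (u t) = (deriv u t)^2 := by have := hen t; linarith
    show Real.sqrt (-2 * h (u t)) = deriv u t
    rw [h1, Real.sqrt_sq (le_of_lt (hpos t ht))]
  rcases lt_or_eq_of_le hhL with hL0 | hL0
  · set c := Real.sqrt (-2 * h L) with hc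
    have hcpos : 0 < c := Real.sqrt_pos.mpr (by linarith)
    have hev : ∀ᶠ t in atTop, c/2 < deriv u t :=
      htendd.eventually (eventually_gt_nhds (by linarith))
    rcases eventually_atTop.mp (hev.and (eventually_ge_atTop T)) with ⟨T₂, hT₂⟩
    set y := T₂ + (2/c) * (b - a + 1) with hy
    have h2c : 0 < 2/c := by positivity
    have hyT : T₂ ≤ y := by rw [hy]; nlinarith
    have key := (convex_Ici T₂).mul_sub_le_image_sub_of_le_deriv
      hu.continuous.continuousOn hu.differentiableOn
      (C := c/2) (fun x hx => le_of_lt (hT₂ x (le_of_lt (by rwa [interior_Ici] at hx))).1)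
      T₂ (mem_Ici.mpr le_rfl) y (mem_Ici.mpr hyT) hyT
    have hval : c/2 * (y - T₂) = b - a + 1 := by
      rw [hy]; field_simp; ring
    have h5 : u y ≤ b := (hrange y).2
    have h6 : a ≤ u T₂ := (hrange T₂).1
    linarith
  · have hLb' : L = b := by
      by_contra hne
      have hLlt : L < b := lt_of_le_of_ne hLb hne
      have := hneg L haL hLlt
      rw [← hL0] at this; linarith
    have htendf : Tendsto (fun t => -f (u t)) atTop (𝓝 (-f b)) := by
      have := (hfcont.tendsto b).comp (by rw [← hLb']; exact htendu : Tendsto u atTop (𝓝 b))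
      exact this.neg
    have hev2 : ∀ᶠ t in atTop, deriv (deriv u) t ≤ -(f b)/2 := by
      filter_upwards [htendf.eventually (eventually_lt_nhds (by linarith : -f b < -(f b)/2))]
        with t ht
      rw [hode t]; exact le_of_lt ht
    rcases eventually_atTop.mp (hev2.and (eventually_ge_atTop T)) with ⟨T₃, hT₃⟩
    have hT₃T : T ≤ T₃ := (hT₃ T₃ le_rfl).2
    have hd3 : 0 < deriv u T₃ := hpos T₃ hT₃T
    set y := T₃ + (2/(f b)) * (deriv u T₃ + 1) with hy
    have h2f : 0 < 2/(f b) := by positivity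
    have hyT : T₃ ≤ y := by rw [hy]; nlinarith
    have key := (convex_Ici T₃).image_sub_le_mul_sub_of_deriv_le
      hu'.continuous.continuousOn hu'.differentiableOn
      (C := -(f b)/2) (fun x hx => (hT₃ x (le_of_lt (by rwa [interior_Ici] at hx))).1)
      T₃ (mem_Ici.mpr le_rfl) y (mem_Ici.mpr hyT) hyT
    have hval : -(f b)/2 * (y - T₃) = -(deriv u T₃ + 1) := by
      rw [hy]; field_simp; ring
    have h7 : deriv u y ≤ -1 := by linarith
    have h8 := hpos y (le_trans hT₃T hyT)
    linarith

lemma no_neg_ray {f u h : ℝ → ℝ} (hfcont : Continuous f)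
    (hu : Differentiable ℝ u) (hu' : Differentiable ℝ (deriv u))
    (hode : ∀ t, deriv (deriv u) t = -f (u t))
    (hh : ∀ s, HasDerivAt h (f s) s)
    (hen : ∀ t, h (u t) = -(deriv u t)^2/2)
    {a b : ℝ} (ha0 : h a = 0) (hb0 : h b = 0)
    (hneg : ∀ s, a < s → s < b → h s < 0) (hfa : f a < 0)
    (hrange : ∀ t, a ≤ u t ∧ u t ≤ b)
    {T : ℝ} (hdn : ∀ t, T ≤ t → deriv u t < 0) : False := by
  have hdneg : deriv (fun t => -u t) = fun t => -deriv u t := deriv.neg'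
  refine no_pos_ray (f := fun x => -f (-x)) (u := fun t => -u t) (h := fun x => h (-x))
    ((hfcont.comp continuous_neg).neg) hu.neg ?_ ?_ ?_ ?_ (a := -b) (b := -a)
    (by simpa using hb0) (by simpa using ha0) ?_ (by simpa using hfa) ?_ (T := T) ?_
  · rw [hdneg]; exact hu'.neg
  · intro t
    rw [hdneg]
    have h1 : deriv (fun t => -deriv u t) t = -(deriv (deriv u) t) := deriv.neg
    rw [h1, hode t]
    simp
  · intro s
    have := (hh (-s)).comp s (hasDerivAt_neg s)
    simpa [Function.comp_def] using this
  · intro t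
    rw [hdneg]
    show h (-(-u t)) = -(-deriv u t)^2/2
    rw [neg_neg, neg_sq]
    exact hen t
  · intro s hs1 hs2
    exact hneg (-s) (by linarith) (by linarith)
  · intro t
    exact ⟨neg_le_neg (hrange t).2, neg_le_neg (hrange t).1⟩
  · intro t ht
    rw [hdneg]
    have := hdn t ht
    show 0 < -deriv u t
    linarith

lemma crit_ray {f u h : ℝ → ℝ} (hfcont : Continuous f)
    (hu : Differentiable ℝ u) (hu' : Differentiable ℝ (deriv u))
    (hode : ∀ t, deriv (deriv u) t = -f (u t))
    (hh : ∀ s, HasDerivAt h (f s) s)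
    (hen : ∀ t, h (u t) = -(deriv u t)^2/2)
    {a b : ℝ} (ha0 : h a = 0) (hb0 : h b = 0)
    (hneg : ∀ s, a < s → s < b → h s < 0) (hfa : f a < 0) (hfb : 0 < f b)
    (hrange : ∀ t, a ≤ u t ∧ u t ≤ b)
    (T : ℝ) : ∃ t, T ≤ t ∧ deriv u t = 0 := by
  by_contra hne
  push_neg at hne
  have hsign : (∀ t, T ≤ t → 0 < deriv u t) ∨ (∀ t, T ≤ t → deriv u t < 0) := by
    rcases lt_trichotomy (deriv u T) 0 with h1 | h1 | h1
    · right
      intro t ht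
      rcases lt_trichotomy (deriv u t) 0 with h2 | h2 | h2
      · exact h2
      · exact absurd h2 (hne t ht)
      · exfalso
        have hcont : ContinuousOn (deriv u) (uIcc T t) := hu'.continuous.continuousOn
        have h0mem : (0:ℝ) ∈ uIcc (deriv u T) (deriv u t) :=
          mem_uIcc.mpr (Or.inl ⟨le_of_lt h1, le_of_lt h2⟩)
        rcases intermediate_value_uIcc hcont h0mem with ⟨x, hx, hx0⟩
        have hxT : T ≤ x := by
          rcases mem_uIcc.mp hx with ⟨hl, _⟩ | ⟨hl, _⟩
          · exact hl
          · exact le_trans ht hl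
        exact hne x hxT hx0
    · exact absurd h1 (hne T le_rfl)
    · left
      intro t ht
      rcases lt_trichotomy (deriv u t) 0 with h2 | h2 | h2
      · exfalso
        have hcont : ContinuousOn (deriv u) (uIcc T t) := hu'.continuous.continuousOn
        have h0mem : (0:ℝ) ∈ uIcc (deriv u T) (deriv u t) :=
          mem_uIcc.mpr (Or.inr ⟨le_of_lt h2, le_of_lt h1⟩)
        rcases intermediate_value_uIcc hcont h0mem with ⟨x, hx, hx0⟩
        have hxT : T ≤ x := by
          rcases mem_uIcc.mp hx with ⟨hl, _⟩ | ⟨hl, _⟩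
          · exact hl
          · exact le_trans ht hl
        exact hne x hxT hx0
      · exact absurd h2 (hne t ht)
      · exact h2
  rcases hsign with hsign | hsign
  · exact no_pos_ray hfcont hu hu' hode hh hen ha0 hb0 hneg hfb hrange hsign
  · exact no_neg_ray hfcont hu hu' hode hh hen ha0 hb0 hneg hfa hrange hsign

lemma reflect {f u : ℝ → ℝ} {a b : ℝ} {Lf : NNReal} (hL : LipschitzOnWith Lf f (Icc a b))
    (hu : Differentiable ℝ u) (hu' : Differentiable ℝ (deriv u))
    (hode : ∀ t, deriv (deriv u) t = -f (u t))
    (hrange : ∀ t, a ≤ u t ∧ u t ≤ b)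
    {t₁ : ℝ} (hcrit : deriv u t₁ = 0) : ∀ t, u (2*t₁ - t) = u t := by
  set V : ℝ × ℝ → ℝ × ℝ := fun p => (p.2, -f p.1) with hV
  set S : Set (ℝ × ℝ) := Icc a b ×ˢ (univ : Set ℝ) with hS
  obtain ⟨K, hVlip⟩ : ∃ K, LipschitzOnWith K V S := by
    have h1 : LipschitzOnWith (Lf * 1) (f ∘ Prod.fst) S :=
      hL.comp (LipschitzWith.prod_fst.lipschitzOnWith) (fun p hp => hp.1)
    have h2 : LipschitzOnWith (1 * (Lf * 1)) (Neg.neg ∘ (f ∘ Prod.fst)) S :=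
      LipschitzWith.id.neg.comp_lipschitzOnWith h1
    exact ⟨max 1 (1 * (Lf * 1)),
      LipschitzOnWith.prodMk (LipschitzWith.prod_snd.lipschitzOnWith) h2⟩
  set y : ℝ → ℝ × ℝ := fun τ => (u τ, deriv u τ) with hy
  set z : ℝ → ℝ × ℝ := fun τ => (u (2*t₁ - τ), -deriv u (2*t₁ - τ)) with hz
  have hyd : ∀ τ, HasDerivAt y (V (y τ)) τ := by
    intro τ
    have h1 := ((hu τ).hasDerivAt).prodMk ((hu' τ).hasDerivAt)
    have h2 : V (y τ) = (deriv u τ, deriv (deriv u) τ) := by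
      show (deriv u τ, -f (u τ)) = _
      rw [hode τ]
    rw [h2]; exact h1
  have hzd : ∀ τ, HasDerivAt z (V (z τ)) τ := by
    intro τ
    have hinner : HasDerivAt (fun τ : ℝ => 2*t₁ - τ) (-1) τ := by
      simpa using (hasDerivAt_id τ).const_sub (2*t₁)
    have h1 : HasDerivAt (fun τ : ℝ => u (2*t₁ - τ)) (deriv u (2*t₁ - τ) * (-1)) τ :=
      HasDerivAt.comp τ ((hu _).hasDerivAt) hinner
    have h2 : HasDerivAt (fun τ : ℝ => -deriv u (2*t₁ - τ))
        (-(deriv (deriv u) (2*t₁ - τ) * (-1))) τ :=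
      (HasDerivAt.comp τ ((hu' _).hasDerivAt) hinner).neg
    have h3 := h1.prodMk h2
    have h4 : V (z τ) = (deriv u (2*t₁ - τ) * (-1), -(deriv (deriv u) (2*t₁ - τ) * (-1))) := by
      show (-deriv u (2*t₁ - τ), -f (u (2*t₁ - τ))) = _
      rw [hode (2*t₁ - τ)]
      simp only [Prod.mk.injEq]
      constructor <;> ring
    rw [h4]; exact h3
  have hmemS : ∀ τ, y τ ∈ S ∧ z τ ∈ S := fun τ =>
    ⟨⟨⟨(hrange τ).1, (hrange τ).2⟩, trivial⟩, ⟨⟨(hrange _).1, (hrange _).2⟩, trivial⟩⟩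
  have heq : y t₁ = z t₁ := by
    show (u t₁, deriv u t₁) = (u (2*t₁ - t₁), -deriv u (2*t₁ - t₁))
    have h1 : 2*t₁ - t₁ = t₁ := by ring
    rw [h1, hcrit]
    norm_num
  intro t
  set r := |t - t₁| + 1 with hr
  have habs : |t - t₁| < r := by rw [hr]; linarith [abs_nonneg (t - t₁)]
  have hmt : t ∈ Ioo (t₁ - r) (t₁ + r) := by
    rcases abs_lt.mp habs with ⟨h1, h2⟩
    exact ⟨by linarith, by linarith⟩
  have hmt₁ : t₁ ∈ Ioo (t₁ - r) (t₁ + r) := by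
    have h0 : (0:ℝ) ≤ |t - t₁| := abs_nonneg _
    exact ⟨by rw [hr]; linarith, by rw [hr]; linarith⟩
  have key := ODE_solution_unique_of_mem_Ioo (v := fun _ => V) (s := fun _ => S) (K := K)
    (fun _ _ => hVlip) hmt₁ (fun τ _ => ⟨hyd τ, (hmemS τ).1⟩) (fun τ _ => ⟨hzd τ, (hmemS τ).2⟩) heq
  have hyz := key hmt
  have h1 : u t = u (2*t₁ - t) := congrArg Prod.fst hyz
  exact h1.symm

end ObataAux

open Set Filter Topology ObataAux

/-- A nonconstant twice differentiable global solution of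
`u'' + f(u) = 0` with `f` smooth and nondegenerately coercive is periodic. -/
theorem obata_ode_nondegenerately_coercive_periodic
    (f u : ℝ → ℝ) (hf : ContDiff ℝ (⊤ : ℕ∞) f) (hfc : NondegeneratelyCoercive f)
    (hu : Differentiable ℝ u) (hu' : Differentiable ℝ (deriv u))
    (hode : ∀ t : ℝ, deriv (deriv u) t + f (u t) = 0)
    (hnc : ∃ s t : ℝ, u s ≠ u t) :
    ∃ p : ℝ, 0 < p ∧ ∀ t : ℝ, u (t + p) = u t := by
  obtain ⟨t₀, ht₀⟩ : ∃ t₀, deriv u t₀ ≠ 0 := by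
    by_contra hno
    push_neg at hno
    obtain ⟨s, t, hst⟩ := hnc
    exact hst (is_const_of_deriv_eq_zero hu hno s t)
  have hfcont : Continuous f := hf.continuous
  have hode' : ∀ t, deriv (deriv u) t = -f (u t) := fun t => by have := hode t; linarith
  set F : ℝ → ℝ := fun s => ∫ x in (0:ℝ)..s, f x with hF
  have hFd : ∀ s, HasDerivAt F (f s) s := fun s =>
    intervalIntegral.integral_hasDerivAt_right (hfcont.intervalIntegrable 0 s)
      (hfcont.stronglyMeasurableAtFilter _ _) hfcont.continuousAt
  set E : ℝ → ℝ := fun t => (deriv u t)^2/2 + F (u t) with hE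
  have hEd : ∀ t, HasDerivAt E 0 t := by
    intro t
    have h1 := (((hu' t).hasDerivAt).pow 2).div_const 2
    have h2 := (hFd (u t)).comp t ((hu t).hasDerivAt)
    have h3 := h1.add h2
    have key : (2:ℕ) * deriv u t ^ (2-1) * deriv (deriv u) t / 2 + f (u t) * deriv u t = 0 := by
      rw [hode' t]; push_cast; ring
    rw [← key]
    exact h3
  have hEc : ∀ t, E t = E t₀ :=
    fun t => is_const_of_deriv_eq_zero (fun x => (hEd x).differentiableAt)
      (fun x => (hEd x).deriv) t t₀
  set h : ℝ → ℝ := fun s => F s - E t₀ with hh'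
  have hhd : ∀ s, HasDerivAt h (f s) s := fun s => (hFd s).sub_const _
  have hen : ∀ t, h (u t) = -(deriv u t)^2/2 := by
    intro t
    have h1 : (deriv u t)^2/2 + F (u t) = E t₀ := hEc t
    show F (u t) - E t₀ = -(deriv u t)^2/2
    linarith
  have hc0 : h (u t₀) < 0 := by
    rw [hen t₀]
    have h2 : (0:ℝ) < (deriv u t₀)^2 :=
      lt_of_le_of_ne (sq_nonneg _) (Ne.symm (pow_ne_zero 2 ht₀))
    linarith
  obtain ⟨a, b, hac, hcb, ha0, hb0, hIoo, hfa0, hfb0⟩ := hfc h hhd (u t₀) hc0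
  have hneg : ∀ s, a < s → s < b → h s < 0 := fun s h1 h2 => hIoo s ⟨h1, h2⟩
  have hab : a < b := lt_trans hac hcb
  have hfb : 0 < f b := by
    rcases lt_trichotomy (f b) 0 with h1 | h1 | h1
    · exfalso
      rcases ev_left_gt (hhd b) h1 with ⟨d, hd, hgt⟩
      have h2 : max d a < b := max_lt hd hab
      set t := (max d a + b)/2 with htdef
      have ht1 : max d a < t := by rw [htdef]; linarith
      have ht2 : t < b := by rw [htdef]; linarith
      have h3 := hgt t (lt_of_le_of_lt (le_max_left d a) ht1) ht2
      have h4 := hneg t (lt_of_le_of_lt (le_max_right d a) ht1) ht2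
      rw [hb0] at h3
      linarith
    · exact absurd h1 hfb0
    · exact h1
  have hfa : f a < 0 := by
    rcases lt_trichotomy (f a) 0 with h1 | h1 | h1
    · exact h1
    · exact absurd h1 hfa0
    · exfalso
      rcases ev_right_gt (hhd a) h1 with ⟨d, hd, hgt⟩
      have h2 : a < min d b := lt_min hd hab
      set t := (a + min d b)/2 with htdef
      have ht1 : a < t := by rw [htdef]; linarith
      have ht2 : t < min d b := by rw [htdef]; linarith
      have h3 := hgt t ht1 (lt_of_lt_of_le ht2 (min_le_left _ _))
      have h4 := hneg t ht1 (lt_of_lt_of_le ht2 (min_le_right _ _))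
      rw [ha0] at h3
      linarith
  have hrange : ∀ t, a ≤ u t ∧ u t ≤ b := confine hu hu' hode' hen ha0 hb0 hac hcb hfa hfb
  obtain ⟨t₁, _, hcrit₁⟩ := crit_ray hfcont hu hu' hode' hhd hen ha0 hb0 hneg hfa hfb hrange 0
  obtain ⟨t₂, ht₂, hcrit₂⟩ :=
    crit_ray hfcont hu hu' hode' hhd hen ha0 hb0 hneg hfa hfb hrange (t₁ + 1)
  obtain ⟨Lf, hLf⟩ : ∃ L : NNReal, LipschitzOnWith L f (Icc a b) := by
    obtain ⟨C, hC⟩ :=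
      (isCompact_Icc (a := a) (b := b)).exists_bound_of_continuousOn
        (hf.continuous_deriv (by simp)).continuousOn
    refine ⟨⟨max C 0, le_max_right _ _⟩, ?_⟩
    apply (convex_Icc a b).lipschitzOnWith_of_nnnorm_deriv_le
      (fun x _ => (hf.differentiable (by simp)) x)
    intro x hx
    have h1 : ‖deriv f x‖ ≤ max C 0 := le_trans (hC x hx) (le_max_left _ _)
    exact h1
  have hsym₁ := reflect hLf hu hu' hode' hrange hcrit₁
  have hsym₂ := reflect hLf hu hu' hode' hrange hcrit₂
  refine ⟨2*(t₂ - t₁), by linarith, fun t => ?_⟩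
  have e1 := hsym₂ (2*t₁ - t)
  have e2 := hsym₁ t
  have harg : t + 2*(t₂ - t₁) = 2*t₂ - (2*t₁ - t) := by ring
  rw [harg, e1, e2]
end

section
/- Let f : ℝ → ℝ be smooth and degenerately coercive. Then the ODE u'' + f(u) = 0 admits no nonconstant periodic solution on ℝ: if u : ℝ → ℝ is twice differentiable with u''(t) + f(u(t)) = 0 for all t and u(t + p) = u(t) for all t for some p > 0, then u is constant. -/
open Set Real

set_option maxHeartbeats 1000000 in
lemma obata_sq_deriv_bound {f u h : ℝ → ℝ} (hf : ContDiff ℝ (⊤ : ℕ∞) f)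
    (hu : Differentiable ℝ u)
    (hh : ∀ s : ℝ, HasDerivAt h (f s) s)
    {μ : ℝ} (hfμ : f μ = 0) (hhμ : h μ = 0)
    (hen : ∀ t : ℝ, (deriv u t)^2 = -2 * h (u t))
    {t₀ : ℝ} (ht₀ : u t₀ = μ) : ∀ t, u t = μ := by
  -- bound on deriv f near μ
  have hdf : Continuous (deriv f) := hf.continuous_deriv (by simp)
  obtain ⟨C, hC⟩ := (isCompact_Icc (a := μ - 1) (b := μ + 1)).exists_bound_of_continuousOn
    hdf.continuousOn
  set L : ℝ := max C 1 with hLdef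
  have hL1 : (1:ℝ) ≤ L := le_max_right _ _
  have hL0 : (0:ℝ) < L := lt_of_lt_of_le one_pos hL1
  -- |f s| ≤ L |s - μ| on the interval
  have hfs : ∀ s ∈ Icc (μ - 1) (μ + 1), |f s| ≤ L * |s - μ| := by
    intro s hs
    have hμmem : μ ∈ Icc (μ - 1) (μ + 1) := by constructor <;> linarith
    have := Convex.norm_image_sub_le_of_norm_deriv_le (f := f) (C := L)
      (fun x _ => (hf.differentiable (by simp)).differentiableAt)
      (fun x hx => le_trans (hC x hx) (le_max_left C 1)) (convex_Icc _ _) hμmem hs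
    simpa [hfμ, Real.norm_eq_abs] using this
  -- |h s| ≤ L (s-μ)^2 on the interval
  have hcf : Continuous f := hf.continuous
  have hhs : ∀ s ∈ Icc (μ - 1) (μ + 1), |h s| ≤ L * (s - μ)^2 := by
    intro s hs
    have hint : ∫ x in μ..s, f x = h s - h μ :=
      intervalIntegral.integral_eq_sub_of_hasDerivAt (fun x _ => hh x)
        (hcf.intervalIntegrable _ _)
    have hb : ∀ x ∈ Set.uIoc μ s, ‖f x‖ ≤ L * |s - μ| := by
      intro x hx
      rcases le_total μ s with hms | hms
      · rw [Set.uIoc_of_le hms] at hx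
        have hx1 : x ∈ Icc (μ - 1) (μ + 1) := ⟨by linarith [hx.1], le_trans hx.2 hs.2⟩
        have := hfs x hx1
        have h2 : |x - μ| ≤ |s - μ| := by
          rw [abs_of_nonneg (by linarith [hx.1] : (0:ℝ) ≤ x - μ),
            abs_of_nonneg (by linarith : (0:ℝ) ≤ s - μ)]
          linarith [hx.2]
        calc ‖f x‖ = |f x| := rfl
          _ ≤ L * |x - μ| := this
          _ ≤ L * |s - μ| := by nlinarith
      · rw [Set.uIoc_of_ge hms] at hx
        have hx1 : x ∈ Icc (μ - 1) (μ + 1) := ⟨le_trans hs.1 hx.1.le, by linarith [hx.2]⟩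
        have := hfs x hx1
        have h2 : |x - μ| ≤ |s - μ| := by
          rw [abs_of_nonpos (by linarith [hx.2] : x - μ ≤ (0:ℝ)),
            abs_of_nonpos (by linarith : s - μ ≤ (0:ℝ))]
          linarith [hx.1]
        calc ‖f x‖ = |f x| := rfl
          _ ≤ L * |x - μ| := this
          _ ≤ L * |s - μ| := by nlinarith
    have hnorm := intervalIntegral.norm_integral_le_of_norm_le_const hb
    rw [hint, hhμ, sub_zero] at hnorm
    calc |h s| = ‖h s‖ := rfl
      _ ≤ L * |s - μ| * |s - μ| := hnorm
      _ = L * (s - μ)^2 := by rw [mul_assoc, ← abs_mul, ← sq, abs_sq]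
  -- consequence: where |u t - μ| ≤ 1, |deriv u t| ≤ √(2L) |u t - μ|
  set K : ℝ := Real.sqrt (2 * L) with hKdef
  have hK0 : 0 ≤ K := Real.sqrt_nonneg _
  have hderiv_bd : ∀ t : ℝ, |u t - μ| ≤ 1 → |deriv u t| ≤ K * |u t - μ| := by
    intro t hts
    have hmem : u t ∈ Icc (μ - 1) (μ + 1) := by
      constructor <;> [linarith [abs_le.mp hts |>.1]; linarith [abs_le.mp hts |>.2]]
    have h1 : (deriv u t)^2 ≤ 2 * L * (u t - μ)^2 := by
      have := hhs (u t) hmem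
      have h2 := hen t
      have h3 : -2 * h (u t) ≤ 2 * |h (u t)| := by
        rcases abs_cases (h (u t)) with ⟨he, _⟩ | ⟨he, _⟩ <;> nlinarith [abs_nonneg (h (u t))]
      nlinarith
    have h4 : |deriv u t| = Real.sqrt ((deriv u t)^2) := (Real.sqrt_sq_eq_abs _).symm
    rw [h4]
    have h5 : Real.sqrt ((deriv u t)^2) ≤ Real.sqrt (2 * L * (u t - μ)^2) :=
      Real.sqrt_le_sqrt h1
    calc Real.sqrt ((deriv u t)^2) ≤ Real.sqrt (2 * L * (u t - μ)^2) := h5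
      _ = K * |u t - μ| := by
        rw [Real.sqrt_mul (by positivity), Real.sqrt_sq_eq_abs]
  -- local constancy
  have key : ∀ t₁ : ℝ, u t₁ = μ → ∃ ε > (0:ℝ), ∀ t ∈ Icc (t₁ - ε) (t₁ + ε), u t = μ := by
    intro t₁ ht₁
    obtain ⟨ε, hε, hball⟩ := Metric.continuousAt_iff.mp hu.continuous.continuousAt 1 one_pos
    refine ⟨ε / 2, by positivity, ?_⟩
    have hsmall : ∀ t ∈ Icc (t₁ - ε/2) (t₁ + ε/2), |u t - μ| ≤ 1 := by
      intro t ht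
      have : dist t t₁ < ε := by
        rw [Real.dist_eq]
        rcases abs_cases (t - t₁) with ⟨he, _⟩ | ⟨he, _⟩ <;> [linarith [ht.2]; linarith [ht.1]]
      have := hball this
      rw [Real.dist_eq, ht₁] at this
      exact this.le
    set v : ℝ → ℝ := fun t => (u t - μ)^2 with hvdef
    have hvcont : Continuous v := (hu.continuous.sub continuous_const).pow 2
    have hvd : ∀ t : ℝ, HasDerivAt v (2 * (u t - μ) * deriv u t) t := by
      intro t
      have h1 : HasDerivAt u (deriv u t) t := (hu t).hasDerivAt
      have := (h1.sub_const μ).fun_pow 2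
      simpa [mul_comm, mul_assoc, mul_left_comm] using this
    have hvbound : ∀ t ∈ Icc (t₁ - ε/2) (t₁ + ε/2),
        ‖2 * (u t - μ) * deriv u t‖ ≤ (2*K) * ‖v t‖ + 0 := by
      intro t ht
      have h1 := hderiv_bd t (hsmall t ht)
      have hv0 : ‖v t‖ = (u t - μ)^2 := by
        rw [Real.norm_eq_abs, abs_of_nonneg (by positivity)]
      rw [hv0, add_zero, Real.norm_eq_abs, abs_mul, abs_mul, abs_two]
      calc 2 * |u t - μ| * |deriv u t| ≤ 2 * |u t - μ| * (K * |u t - μ|) := by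
            nlinarith [abs_nonneg (u t - μ)]
        _ = 2 * K * (u t - μ)^2 := by rw [← sq_abs (u t - μ)]; ring
    -- forward
    have hfor : ∀ t ∈ Icc t₁ (t₁ + ε/2), v t = 0 := by
      intro t ht
      have := norm_le_gronwallBound_of_norm_deriv_right_le
        (f := v) (f' := fun t => 2 * (u t - μ) * deriv u t) (δ := 0) (K := 2*K) (ε := 0)
        (a := t₁) (b := t₁ + ε/2)
        hvcont.continuousOn
        (fun x _ => (hvd x).hasDerivWithinAt)
        (by simp [hvdef, ht₁])
        (fun x hx => hvbound x ⟨by linarith [hx.1], hx.2.le⟩)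
        t ht
      rw [gronwallBound_ε0_δ0] at this
      have : ‖v t‖ ≤ 0 := this
      simpa [norm_eq_zero] using le_antisymm this (norm_nonneg _)
    -- backward
    have hback : ∀ t ∈ Icc (t₁ - ε/2) t₁, v t = 0 := by
      intro t ht
      set w : ℝ → ℝ := fun s => v (2 * t₁ - s) with hwdef
      have hwd : ∀ s : ℝ, HasDerivAt w
          ((2 * (u (2*t₁ - s) - μ) * deriv u (2*t₁ - s)) * (-1)) s := by
        intro s
        have hinner : HasDerivAt (fun s : ℝ => 2 * t₁ - s) (-1) s := by
          simpa using (hasDerivAt_id s).const_sub (2 * t₁)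
        exact (hvd (2 * t₁ - s)).comp s hinner
      have hres := norm_le_gronwallBound_of_norm_deriv_right_le
        (f := w) (f' := fun s => (2 * (u (2*t₁ - s) - μ) * deriv u (2*t₁ - s)) * (-1))
        (δ := 0) (K := 2*K) (ε := 0) (a := t₁) (b := t₁ + ε/2)
        (hvcont.comp (continuous_const.sub continuous_id)).continuousOn
        (fun x _ => (hwd x).hasDerivWithinAt)
        (by
          have h2 : (2:ℝ) * t₁ - t₁ = t₁ := by ring
          simp [hwdef, hvdef, h2, ht₁])
        (fun x hx => by
          have hx2 : (2*t₁ - x) ∈ Icc (t₁ - ε/2) (t₁ + ε/2) := by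
            constructor <;> [linarith [hx.2]; linarith [hx.1]]
          have := hvbound (2*t₁ - x) hx2
          simpa [norm_mul, hwdef] using this)
        (2*t₁ - t) ⟨by linarith [ht.2], by linarith [ht.1]⟩
      rw [gronwallBound_ε0_δ0] at hres
      have hres' : w (2*t₁ - t) = 0 := by
        simpa [norm_eq_zero] using le_antisymm hres (norm_nonneg _)
      have : (2:ℝ) * t₁ - (2*t₁ - t) = t := by ring
      rw [hwdef] at hres'
      simpa [this] using hres'
    intro t ht
    have hvt : v t = 0 := by
      rcases le_total t t₁ with hc | hc
      · exact hback t ⟨ht.1, hc⟩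
      · exact hfor t ⟨hc, ht.2⟩
    have : (u t - μ)^2 = 0 := hvt
    have := pow_eq_zero_iff (n := 2) (by norm_num) |>.mp this
    linarith [sub_eq_zero.mp this]
  -- global: clopen argument
  have hclopen : IsClopen {t : ℝ | u t = μ} := by
    constructor
    · exact isClosed_eq hu.continuous continuous_const
    · rw [isOpen_iff_mem_nhds]
      intro t ht
      obtain ⟨ε, hε, hloc⟩ := key t ht
      have : Icc (t - ε) (t + ε) ∈ nhds t := Icc_mem_nhds (by linarith) (by linarith)
      exact Filter.mem_of_superset this hloc
  have := hclopen.eq_univ ⟨t₀, ht₀⟩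
  intro t
  have : t ∈ {t : ℝ | u t = μ} := this ▸ Set.mem_univ t
  exact this

set_option maxHeartbeats 1000000 in
/-- For `f` smooth and degenerately coercive, the ODE `u'' + f(u) = 0`
admits no nonconstant periodic solution on ℝ: every periodic solution is constant. -/
theorem obata_ode_degenerately_coercive_no_periodic_solution
    (f u : ℝ → ℝ) (hf : ContDiff ℝ (⊤ : ℕ∞) f) (hfc : DegeneratelyCoercive f)
    (hu : Differentiable ℝ u) (hu' : Differentiable ℝ (deriv u))
    (hode : ∀ t : ℝ, deriv (deriv u) t + f (u t) = 0)
    (p : ℝ) (hp : 0 < p) (hper : ∀ t : ℝ, u (t + p) = u t) :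
    ∀ s t : ℝ, u s = u t := by
  obtain ⟨_, hdeg⟩ := hfc
  have hcf : Continuous f := hf.continuous
  -- antiderivative F of f
  set F : ℝ → ℝ := fun s => ∫ x in (0:ℝ)..s, f x with hFdef
  have hF' : ∀ s : ℝ, HasDerivAt F (f s) s := fun s =>
    intervalIntegral.integral_hasDerivAt_right (hcf.intervalIntegrable _ _)
      (hcf.stronglyMeasurableAtFilter _ _) hcf.continuousAt
  -- energy is constant
  set E : ℝ → ℝ := fun t => (deriv u t)^2/2 + F (u t) with hEdef
  have hE' : ∀ t : ℝ, HasDerivAt E 0 t := by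
    intro t
    have h1 : HasDerivAt (deriv u) (deriv (deriv u) t) t := (hu' t).hasDerivAt
    have h2 : HasDerivAt (fun t => (deriv u t)^2/2)
        (deriv u t * deriv (deriv u) t) t := by
      have := (h1.fun_pow 2).div_const 2
      refine this.congr_deriv ?_
      ring
    have h3 : HasDerivAt (fun t => F (u t)) (f (u t) * deriv u t) t :=
      (hF' (u t)).comp t (hu t).hasDerivAt
    have h4 := h2.add h3
    refine h4.congr_deriv ?_
    have h5 : deriv (deriv u) t = -f (u t) := by linarith [hode t]
    rw [h5]; ring
  have hEconst : ∀ s t : ℝ, E s = E t :=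
    is_const_of_deriv_eq_zero (fun x => (hE' x).differentiableAt) (fun x => (hE' x).deriv)
  -- periodicity: every value is attained on [0, p]
  have hper' : Function.Periodic u p := hper
  have hrange : ∀ t : ℝ, ∃ q ∈ Icc (0:ℝ) p, u q = u t := by
    intro t
    refine ⟨t - ⌊t/p⌋ * p, ⟨?_, ?_⟩, hper'.sub_int_mul_eq _⟩
    · have h1 : (⌊t/p⌋ : ℝ) ≤ t/p := Int.floor_le _
      have h2 : (⌊t/p⌋ : ℝ) * p ≤ t := by
        have := mul_le_mul_of_nonneg_right h1 hp.le
        rwa [div_mul_cancel₀ t hp.ne'] at this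
      linarith
    · have h1 : t/p < (⌊t/p⌋ : ℝ) + 1 := Int.lt_floor_add_one _
      have h2 : t < ((⌊t/p⌋ : ℝ) + 1) * p := by
        have := mul_lt_mul_of_pos_right h1 hp
        rwa [div_mul_cancel₀ t hp.ne'] at this
      linarith [h2]
  -- global min and max
  obtain ⟨t₁, ht₁mem, ht₁min⟩ := isCompact_Icc.exists_isMinOn (nonempty_Icc.mpr hp.le)
    hu.continuous.continuousOn
  obtain ⟨t₀, ht₀mem, ht₀max⟩ := isCompact_Icc.exists_isMaxOn (nonempty_Icc.mpr hp.le)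
    hu.continuous.continuousOn
  set m : ℝ := u t₁ with hmdef
  set M : ℝ := u t₀ with hMdef
  have hmin : ∀ t, m ≤ u t := by
    intro t; obtain ⟨q, hq, hq'⟩ := hrange t; rw [← hq']; exact ht₁min hq
  have hmax : ∀ t, u t ≤ M := by
    intro t; obtain ⟨q, hq, hq'⟩ := hrange t; rw [← hq']; exact ht₀max hq
  have hd₁ : deriv u t₁ = 0 := by
    have : IsLocalMin u t₁ := Filter.Eventually.of_forall hmin
    exact this.deriv_eq_zero
  have hd₀ : deriv u t₀ = 0 := by
    have : IsLocalMax u t₀ := Filter.Eventually.of_forall hmax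
    exact this.deriv_eq_zero
  -- shifted antiderivative h
  set h : ℝ → ℝ := fun s => F s - F m with hhdef
  have hh' : ∀ s : ℝ, HasDerivAt h (f s) s := fun s => (hF' s).sub_const _
  have hhu : ∀ t : ℝ, h (u t) = -(deriv u t)^2/2 := by
    intro t
    have hE := hEconst t t₁
    simp only [hEdef, hd₁] at hE
    simp only [hhdef]
    have h0 : (0:ℝ)^2/2 = 0 := by norm_num
    rw [h0, zero_add] at hE
    linarith
  have hen : ∀ t : ℝ, (deriv u t)^2 = -2 * h (u t) := by
    intro t; rw [hhu t]; ring
  have hhm : h m = 0 := by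
    have := hhu t₁; rw [hd₁] at this; simpa [hmdef] using this
  have hhM : h M = 0 := by
    have := hhu t₀; rw [hd₀] at this; simpa [hMdef] using this
  -- case split: u constant or not
  by_cases hall : ∀ t, deriv u t = 0
  · exact is_const_of_deriv_eq_zero hu hall
  push_neg at hall
  obtain ⟨t₂, ht₂⟩ := hall
  exfalso
  set s₀ : ℝ := u t₂ with hs₀def
  have hhs₀ : h s₀ < 0 := by
    rw [hhu t₂]
    have : (deriv u t₂)^2 > 0 := by positivity
    linarith
  have hms₀ : m < s₀ := lt_of_le_of_ne (hmin t₂)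
    (fun he => absurd (he ▸ hhm) (ne_of_lt hhs₀))
  have hs₀M : s₀ < M := lt_of_le_of_ne (hmax t₂)
    (fun he => absurd (he ▸ hhM) (ne_of_gt (by rw [← he] at hhM; exact absurd hhM (ne_of_lt hhs₀))))
  -- every value in [m, M] is attained
  have hattain : ∀ s ∈ Icc m M, ∃ t, u t = s := by
    intro s hs
    have h1 : Set.uIcc (u t₁) (u t₀) ⊆ u '' Set.uIcc t₁ t₀ :=
      intermediate_value_uIcc hu.continuous.continuousOn
    have h2 : s ∈ Set.uIcc (u t₁) (u t₀) := by
      rw [Set.uIcc_of_le (hmin t₀)]; exact hs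
    obtain ⟨t, _, ht⟩ := h1 h2
    exact ⟨t, ht⟩
  have hle : ∀ s ∈ Icc m M, h s ≤ 0 := by
    intro s hs
    obtain ⟨t, ht⟩ := hattain s hs
    rw [← ht, hhu t]
    nlinarith [sq_nonneg (deriv u t)]
  -- continuity of h
  have hhcont : Continuous h := continuous_iff_continuousAt.mpr fun x => (hh' x).continuousAt
  -- μ : largest zero of h in [m, s₀]
  set Zl : Set ℝ := Icc m s₀ ∩ h ⁻¹' {0} with hZldef
  have hZlcomp : IsCompact Zl := isCompact_Icc.inter_right (isClosed_singleton.preimage hhcont)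
  have hmZl : m ∈ Zl := ⟨⟨le_refl m, hms₀.le⟩, hhm⟩
  set μ' := sSup Zl with hμdef
  have hμZ : μ' ∈ Zl := hZlcomp.sSup_mem ⟨m, hmZl⟩
  have hμIcc : μ' ∈ Icc m s₀ := hμZ.1
  have hμ0 : h μ' = 0 := hμZ.2
  have hμlt : μ' < s₀ := lt_of_le_of_ne hμIcc.2
    (fun he => absurd (he ▸ hμ0) (ne_of_lt hhs₀))
  -- ν : smallest zero of h in [s₀, M]
  set Zr : Set ℝ := Icc s₀ M ∩ h ⁻¹' {0} with hZrdef
  have hZrcomp : IsCompact Zr := isCompact_Icc.inter_right (isClosed_singleton.preimage hhcont)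
  have hMZr : M ∈ Zr := ⟨⟨hs₀M.le, le_refl M⟩, hhM⟩
  set ν' := sInf Zr with hνdef
  have hνZ : ν' ∈ Zr := hZrcomp.sInf_mem ⟨M, hMZr⟩
  have hνIcc : ν' ∈ Icc s₀ M := hνZ.1
  have hν0 : h ν' = 0 := hνZ.2
  have hνgt : s₀ < ν' := lt_of_le_of_ne hνIcc.1
    (fun he => absurd (he ▸ hν0) (ne_of_lt hhs₀))
  have hμν : μ' < ν' := hμlt.trans hνgt
  have hneg : ∀ s ∈ Set.Ioo μ' ν', h s < 0 := by
    intro s hs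
    have hsIcc : s ∈ Icc m M := ⟨le_trans hμIcc.1 hs.1.le, le_trans hs.2.le hνIcc.2⟩
    rcases lt_or_eq_of_le (hle s hsIcc) with hlt | heq
    · exact hlt
    exfalso
    rcases le_total s s₀ with hss | hss
    · have hsZ : s ∈ Zl := ⟨⟨hsIcc.1, hss⟩, heq⟩
      have := le_csSup hZlcomp.bddAbove hsZ
      linarith [hs.1]
    · have hsZ : s ∈ Zr := ⟨⟨hss, hsIcc.2⟩, heq⟩
      have := csInf_le hZrcomp.bddBelow hsZ
      linarith [hs.2]
  have hprod := hdeg h hh' μ' ν' hμν hμ0 hν0 hneg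
  rcases mul_eq_zero.mp hprod with hz | hz
  · obtain ⟨tμ, htμ⟩ := hattain μ' ⟨hμIcc.1, le_trans hμIcc.2 hs₀M.le⟩
    have hconst := obata_sq_deriv_bound hf hu hh' hz hμ0 hen htμ
    have hz2 : deriv u t₂ = 0 := by
      have hcu : u = fun _ => μ' := funext hconst
      rw [hcu]; simp
    exact ht₂ hz2
  · obtain ⟨tν, htν⟩ := hattain ν' ⟨le_trans hms₀.le hνIcc.1, hνIcc.2⟩
    have hconst := obata_sq_deriv_bound hf hu hh' hz hν0 hen htν
    have hz2 : deriv u t₂ = 0 := by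
      have hcu : u = fun _ => ν' := funext hconst
      rw [hcu]; simp
    exact ht₂ hz2
end
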